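/- arXiv:2012.00806 — 10 statements merged into one kernel-verified Lean document; each statement's English description precedes it below -/
import Mathlib

section
/- Let H be a finite hypergraph with no isolated vertices in which every edge has size at most k. Then for every complex number z with |z| > 2^k, the edge cover polynomial satisfies E(H, z) ≠ 0. -/
open Finset

/-
Write `Z(U, E)` for the sum of `z^|F|` over the `F ⊆ E` covering `U`. Adding an edge `e` gives
`Z(U, E + e) = Z(U, E) + z Z(U \ e, E)`, so `Z ≠ 0` follows by induction on the edges as soon as
`|Z(U, E)| ≤ 2^|U ∩ e| |Z(U \ e, E)|`, that is, as soon as adding one vertex to `U` at most doubles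
`|Z|`. Since `Z(U, E) = Z(U + u, E) + Z(U, E - star u)`, doubling reduces to
`|Z(U, E - star u)| ≤ |Z(U, E)|` for `u ∉ U`. Removing the `d` edges through `u` one at a time
costs a factor of at least `|z| - 2^(k-1)` each, while by doubling for the smaller hypergraph
`E - star u`, putting back the at most `d(k-1)` vertices of `U` they cover costs at most
`2^(d(k-1))`; and `2^(k-1) ≤ |z| - 2^(k-1)` because `|z| ≥ 2^k`. Doubling itself is proved by strong
induction on the edge set.
-/

/-- The edge cover polynomial of a hypergraph with vertex set `V` and edge collection `E`,
evaluated at `z`: the sum of `z^{|F|}` over all subsets `F ⊆ E` covering every vertex. -/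
noncomputable def hypEdgeCoverPoly {V : Type*} [Fintype V] [DecidableEq V]
    (E : Finset (Finset V)) (z : ℂ) : ℂ :=
  ∑ F ∈ E.powerset.filter (fun F => ∀ v : V, ∃ e ∈ F, v ∈ e), z ^ F.card

section

variable {V : Type*} [DecidableEq V]

noncomputable def edgeCoverPolyOn (U : Finset V) (E : Finset (Finset V)) (z : ℂ) : ℂ :=
  ∑ F ∈ E.powerset with ∀ v ∈ U, ∃ e ∈ F, v ∈ e, z ^ #F

lemma edgeCoverPolyOn_univ [Fintype V] (E : Finset (Finset V)) (z : ℂ) :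
    edgeCoverPolyOn univ E z = hypEdgeCoverPoly E z := by
  simp only [edgeCoverPolyOn, hypEdgeCoverPoly, mem_univ, true_imp_iff]

lemma edgeCoverPolyOn_insert_edge (U : Finset V) {e : Finset V} {E : Finset (Finset V)}
    (he : e ∉ E) (z : ℂ) :
    edgeCoverPolyOn U (insert e E) z =
      edgeCoverPolyOn U E z + z * edgeCoverPolyOn (U \ e) E z := by
  simp only [edgeCoverPolyOn, sum_filter, sum_powerset_insert he, mul_sum]
  congr 1
  refine sum_congr rfl fun F hF => ?_
  have heF : e ∉ F := fun h => he (mem_powerset.1 hF h)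
  have hcover : (∀ v ∈ U, ∃ f ∈ insert e F, v ∈ f) ↔ ∀ v ∈ U \ e, ∃ f ∈ F, v ∈ f := by
    simp only [mem_sdiff, exists_mem_insert, and_imp]
    exact forall₂_congr fun v _ => by tauto
  rw [if_congr hcover rfl rfl, card_insert_of_notMem heF, pow_succ', mul_ite, mul_zero]

lemma edgeCoverPolyOn_eq_insert_add_filter (U : Finset V) (E : Finset (Finset V)) (u : V)
    (z : ℂ) :
    edgeCoverPolyOn U E z =
      edgeCoverPolyOn (insert u U) E z + edgeCoverPolyOn U (E.filter (u ∉ ·)) z := by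
  unfold edgeCoverPolyOn
  rw [← sum_filter_add_sum_filter_not _ (fun F => ∃ e ∈ F, u ∈ e), filter_filter, filter_filter]
  congr 2
  · ext F
    simp only [mem_filter, forall_mem_insert]
    tauto
  · ext F
    simp only [mem_filter, mem_powerset, subset_iff, not_exists, not_and]
    grind

def CoverDoubling (E : Finset (Finset V)) (z : ℂ) : Prop :=
  ∀ (U : Finset V) (u : V), ‖edgeCoverPolyOn (insert u U) E z‖ ≤ 2 * ‖edgeCoverPolyOn U E z‖

variable {E : Finset (Finset V)} {U : Finset V} {z : ℂ} {k : ℕ}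

lemma CoverDoubling.norm_union_le (h : CoverDoubling E z) (U W : Finset V) :
    ‖edgeCoverPolyOn (U ∪ W) E z‖ ≤ 2 ^ #W * ‖edgeCoverPolyOn U E z‖ := by
  induction W using Finset.induction_on with
  | empty => simp
  | insert w W hw ih =>
    rw [union_insert, card_insert_of_notMem hw, pow_succ']
    calc ‖edgeCoverPolyOn (insert w (U ∪ W)) E z‖ ≤ 2 * ‖edgeCoverPolyOn (U ∪ W) E z‖ := h _ w
      _ ≤ 2 * 2 ^ #W * ‖edgeCoverPolyOn U E z‖ := by rw [mul_assoc]; gcongr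

lemma CoverDoubling.sub_mul_le_norm_insert_edge (h : CoverDoubling E z) {e : Finset V}
    (he : e ∉ E) (U : Finset V) :
    (‖z‖ - 2 ^ #(U ∩ e)) * ‖edgeCoverPolyOn (U \ e) E z‖ ≤
      ‖edgeCoverPolyOn U (insert e E) z‖ := by
  have hdel : ‖edgeCoverPolyOn U E z‖ ≤ 2 ^ #(U ∩ e) * ‖edgeCoverPolyOn (U \ e) E z‖ := by
    simpa only [sdiff_union_inter] using h.norm_union_le (U \ e) (U ∩ e)
  have htri := norm_sub_norm_le (z * edgeCoverPolyOn (U \ e) E z) (-edgeCoverPolyOn U E z)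
  rw [sub_neg_eq_add, add_comm, ← edgeCoverPolyOn_insert_edge U he, norm_neg, norm_mul] at htri
  linarith

lemma two_mul_two_pow_card_inter_le {e : Finset V} {u : V} (hue : u ∈ e) (hu : u ∉ U)
    (he : #e ≤ k) : 2 * (2 : ℝ) ^ #(U ∩ e) ≤ 2 ^ k := by
  have hlt : #(U ∩ e) < #e :=
    card_lt_card ⟨inter_subset_right, fun h => hu (mem_of_mem_inter_left (h hue))⟩
  rw [← pow_succ']
  exact pow_le_pow_right₀ one_le_two (by omega)

-- `2 ^ k / 2` plays the role of `2 ^ (k - 1)`, avoiding truncated subtraction at `k = 0`.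
lemma two_pow_card_inter_biUnion_le {D : Finset (Finset V)} {u : V}
    (hD : ∀ e ∈ D, u ∈ e ∧ #e ≤ k) (hu : u ∉ U) :
    (2 : ℝ) ^ #(U ∩ D.biUnion id) ≤ (2 ^ k / 2) ^ #D := by
  have hcard : #(U ∩ D.biUnion id) ≤ ∑ e ∈ D, #(U ∩ e) := by
    rw [inter_biUnion]; exact card_biUnion_le
  calc (2 : ℝ) ^ #(U ∩ D.biUnion id) ≤ 2 ^ ∑ e ∈ D, #(U ∩ e) :=
        pow_le_pow_right₀ one_le_two hcard
    _ = ∏ e ∈ D, (2 : ℝ) ^ #(U ∩ e) := (prod_pow_eq_pow_sum _ _ _).symm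
    _ ≤ ∏ _e ∈ D, (2 : ℝ) ^ k / 2 := by
        gcongr with e he
        have := two_mul_two_pow_card_inter_le (hD e he).1 hu (hD e he).2
        linarith
    _ = (2 ^ k / 2) ^ #D := prod_const _

lemma pow_mul_norm_sdiff_biUnion_le_norm_union {E₀ D : Finset (Finset V)} {u : V}
    (hz : 2 ^ k ≤ ‖z‖) (hD : ∀ e ∈ D, u ∈ e ∧ #e ≤ k) (hu : u ∉ U) (hdisj : Disjoint E₀ D)
    (hdbl : ∀ E' ⊂ E₀ ∪ D, CoverDoubling E' z) :
    (‖z‖ - 2 ^ k / 2) ^ #D * ‖edgeCoverPolyOn (U \ D.biUnion id) E₀ z‖ ≤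
      ‖edgeCoverPolyOn U (E₀ ∪ D) z‖ := by
  induction D using Finset.induction_on generalizing U with
  | empty => simp
  | insert e D he ih =>
    have heE : e ∉ E₀ ∪ D := by
      simp only [mem_union, not_or]
      exact ⟨disjoint_right.1 hdisj (mem_insert_self e D), he⟩
    have hsub : E₀ ∪ D ⊂ E₀ ∪ insert e D := by
      rw [union_insert]; exact ssubset_insert heE
    have hstep := (hdbl _ hsub).sub_mul_le_norm_insert_edge heE U
    have hrest := ih (U := U \ e) (fun f hf => hD f (mem_insert_of_mem hf))
      (fun h => hu (mem_sdiff.1 h).1) (disjoint_of_subset_right (subset_insert e D) hdisj)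
      (fun E' hE' => hdbl E' (hE'.trans hsub))
    have hue := two_mul_two_pow_card_inter_le (hD e (mem_insert_self e D)).1 hu
      (hD e (mem_insert_self e D)).2
    have hset : U \ (insert e D).biUnion id = (U \ e) \ D.biUnion id := by
      rw [biUnion_insert, id_eq, sdiff_union_distrib, Finset.sdiff_sdiff_left']
    rw [card_insert_of_notMem he, pow_succ', mul_assoc, union_insert, hset]
    have hβ : 0 ≤ ‖z‖ - 2 ^ k / 2 := by linarith [pow_pos (two_pos (α := ℝ)) k]
    calc (‖z‖ - 2 ^ k / 2) * ((‖z‖ - 2 ^ k / 2) ^ #D *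
          ‖edgeCoverPolyOn ((U \ e) \ D.biUnion id) E₀ z‖)
        ≤ (‖z‖ - 2 ^ k / 2) * ‖edgeCoverPolyOn (U \ e) (E₀ ∪ D) z‖ :=
          mul_le_mul_of_nonneg_left hrest hβ
      _ ≤ (‖z‖ - 2 ^ #(U ∩ e)) * ‖edgeCoverPolyOn (U \ e) (E₀ ∪ D) z‖ :=
          mul_le_mul_of_nonneg_right (by linarith) (norm_nonneg _)
      _ ≤ _ := hstep

lemma norm_edgeCoverPolyOn_filter_notMem_le (hz : 2 ^ k ≤ ‖z‖) (hE : ∀ e ∈ E, #e ≤ k)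
    (hdbl : ∀ E' ⊂ E, CoverDoubling E' z) {u : V} (hu : u ∉ U) :
    ‖edgeCoverPolyOn U (E.filter (u ∉ ·)) z‖ ≤ ‖edgeCoverPolyOn U E z‖ := by
  set E₀ := E.filter (u ∉ ·)
  set D := E.filter (u ∈ ·)
  have hsplit : E₀ ∪ D = E := by rw [union_comm]; exact filter_union_filter_not_eq _ _
  obtain hD | ⟨e, he⟩ := D.eq_empty_or_nonempty
  · rw [← hsplit, hD, union_empty]
  have hE₀ : E₀ ⊂ E := by
    refine ssubset_of_subset_of_ne (filter_subset _ _) fun h => ?_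
    have : e ∈ E₀ := h ▸ (mem_filter.1 he).1
    exact (mem_filter.1 this).2 (mem_filter.1 he).2
  have hD : ∀ e ∈ D, u ∈ e ∧ #e ≤ k := fun e he =>
    ⟨(mem_filter.1 he).2, hE e (mem_filter.1 he).1⟩
  have hβ : (2 : ℝ) ^ k / 2 ≤ ‖z‖ - 2 ^ k / 2 := by linarith
  calc ‖edgeCoverPolyOn U E₀ z‖
      ≤ 2 ^ #(U ∩ D.biUnion id) * ‖edgeCoverPolyOn (U \ D.biUnion id) E₀ z‖ := by
        simpa only [sdiff_union_inter] using
          (hdbl E₀ hE₀).norm_union_le (U \ D.biUnion id) (U ∩ D.biUnion id)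
    _ ≤ (‖z‖ - 2 ^ k / 2) ^ #D * ‖edgeCoverPolyOn (U \ D.biUnion id) E₀ z‖ := by
        gcongr
        exact (two_pow_card_inter_biUnion_le hD hu).trans (pow_le_pow_left₀ (by positivity) hβ _)
    _ ≤ ‖edgeCoverPolyOn U E z‖ := by
        conv_rhs => rw [← hsplit]
        exact pow_mul_norm_sdiff_biUnion_le_norm_union hz hD hu
          (disjoint_filter_filter_not _ _ _).symm (hsplit ▸ hdbl)

lemma coverDoubling_of_norm_filter_notMem_le
    (h : ∀ (U : Finset V) (u : V), u ∉ U →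
      ‖edgeCoverPolyOn U (E.filter (u ∉ ·)) z‖ ≤ ‖edgeCoverPolyOn U E z‖) :
    CoverDoubling E z := by
  intro U u
  by_cases hu : u ∈ U
  · rw [insert_eq_of_mem hu]
    linarith [norm_nonneg (edgeCoverPolyOn U E z)]
  · rw [eq_sub_of_add_eq (edgeCoverPolyOn_eq_insert_add_filter U E u z).symm]
    linarith [norm_sub_le (edgeCoverPolyOn U E z) (edgeCoverPolyOn U (E.filter (u ∉ ·)) z),
      h U u hu]

theorem coverDoubling (hz : 2 ^ k ≤ ‖z‖) (hE : ∀ e ∈ E, #e ≤ k) : CoverDoubling E z := by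
  induction E using Finset.strongInduction with
  | H E ih =>
    exact coverDoubling_of_norm_filter_notMem_le fun U u hu =>
      norm_edgeCoverPolyOn_filter_notMem_le hz hE
        (fun E' hE' => ih E' hE' fun e he => hE e (hE'.subset he)) hu

theorem edgeCoverPolyOn_ne_zero (hz : 2 ^ k < ‖z‖) (hE : ∀ e ∈ E, #e ≤ k)
    (hU : ∀ v ∈ U, ∃ e ∈ E, v ∈ e) : edgeCoverPolyOn U E z ≠ 0 := by
  induction E using Finset.induction_on generalizing U with
  | empty =>
    obtain rfl : U = ∅ := eq_empty_of_forall_notMem fun v hv => by simpa using hU v hv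
    simp [edgeCoverPolyOn]
  | insert e E he ih =>
    have hEk : ∀ f ∈ E, #f ≤ k := fun f hf => hE f (mem_insert_of_mem hf)
    have hcover : ∀ v ∈ U \ e, ∃ f ∈ E, v ∈ f := by
      intro v hv
      obtain ⟨f, hf, hvf⟩ := hU v (mem_sdiff.1 hv).1
      rcases mem_insert.1 hf with rfl | hf
      · exact absurd hvf (mem_sdiff.1 hv).2
      · exact ⟨f, hf, hvf⟩
    have hlow := (coverDoubling hz.le hEk).sub_mul_le_norm_insert_edge he U
    have hgap : (2 : ℝ) ^ #(U ∩ e) < ‖z‖ :=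
      lt_of_le_of_lt (pow_le_pow_right₀ one_le_two
        ((card_le_card inter_subset_right).trans (hE e (mem_insert_self e E)))) hz
    rw [← norm_pos_iff]
    exact (mul_pos (sub_pos.2 hgap) (norm_pos_iff.2 (ih hEk hcover))).trans_le hlow

end

/-- If every edge of the hypergraph has size at most `k` and there are no isolated vertices,
then the edge cover polynomial is nonzero whenever `|z| > 2^k`. -/
theorem hypEdgeCoverPoly_ne_zero_of_abs_gt
    {V : Type} [Fintype V] [DecidableEq V] (E : Finset (Finset V)) (k : ℕ)
    (hsize : ∀ e ∈ E, e.card ≤ k)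
    (hiso : ∀ v : V, ∃ e ∈ E, v ∈ e)
    (z : ℂ) (hz : (2 : ℝ) ^ k < ‖z‖) :
    hypEdgeCoverPoly E z ≠ 0 := by
  rw [← edgeCoverPolyOn_univ]
  exact edgeCoverPolyOn_ne_zero hz hsize fun v _ => hiso v
end

section
/- Let G be a finite simple graph with no isolated vertices. Then for every complex number z with |z| ≥ 4, the edge cover polynomial satisfies E(G, z) ≠ 0. -/
open Finset

/-- The edge cover polynomial of a finite simple graph `G`, evaluated at `z`:
the sum of `z^{|F|}` over all subsets `F` of the edge set covering every vertex. -/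
noncomputable def edgeCoverPoly {V : Type*} [Fintype V] [DecidableEq V]
    (G : SimpleGraph V) [DecidableRel G.Adj] (z : ℂ) : ℂ :=
  ∑ F ∈ G.edgeFinset.powerset.filter (fun F => ∀ v : V, ∃ e ∈ F, v ∈ e), z ^ F.card

/-!
Write `W(E, A)` for the sum of `z ^ #F` over the sets `F ⊆ E` of edges covering the vertex set `A`.
Deleting an edge `s(v, u)` gives `W(E, A) = W(E', A) + z W(E', A ∖ {v, u})`. By induction on `E`,
for `A` covered by `E` and `v ∈ A` we get `‖W(E, A) - W(E, A ∖ v)‖ < ‖W(E, A ∖ v)‖`, which forces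
`W(E, A) ≠ 0`. In the induction step at an edge `s(v, u)` the left side becomes
`‖W(E', A) - W(E', A ∖ v)‖ ≤ ‖W(E', A ∖ v)‖ < 2 ‖W(E', A ∖ {v, u})‖`, while the right side is at
least `4 ‖W(E', A ∖ {v, u})‖ - ‖W(E', A ∖ v)‖` because `‖z‖ ≥ 4`.
-/

section

variable {V K : Type*} [DecidableEq V] [NormedField K]

def partialEdgeCoverPoly (E : Finset (Sym2 V)) (A : Finset V) (z : K) : K :=
  ∑ F ∈ E.powerset with ∀ v ∈ A, ∃ e ∈ F, v ∈ e, z ^ #F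

lemma partialEdgeCoverPoly_empty (E : Finset (Sym2 V)) (z : K) :
    partialEdgeCoverPoly E ∅ z = (1 + z) ^ #E := by
  simp [partialEdgeCoverPoly, ← sum_pow_mul_eq_add_pow, add_comm]

lemma partialEdgeCoverPoly_eq_zero {E : Finset (Sym2 V)} {A : Finset V} {v : V} (hv : v ∈ A)
    (hE : ∀ e ∈ E, v ∉ e) (z : K) : partialEdgeCoverPoly E A z = 0 := by
  refine sum_eq_zero fun F hF => ?_
  obtain ⟨hFE, hcov⟩ := mem_filter.mp hF
  obtain ⟨e, he, hve⟩ := hcov v hv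
  exact absurd hve (hE e (mem_powerset.mp hFE he))

lemma partialEdgeCoverPoly_insert {E : Finset (Sym2 V)} {a b : V} (hab : s(a, b) ∉ E)
    (A : Finset V) (z : K) :
    partialEdgeCoverPoly (insert s(a, b) E) A z =
      partialEdgeCoverPoly E A z + z * partialEdgeCoverPoly E ((A.erase a).erase b) z := by
  simp only [partialEdgeCoverPoly, sum_filter, sum_powerset_insert hab, mul_sum]
  congr 1
  refine sum_congr rfl fun F hF => ?_
  have hF : s(a, b) ∉ F := fun h => hab (mem_powerset.mp hF h)
  have hcov : (∀ v ∈ A, ∃ e ∈ insert s(a, b) F, v ∈ e) ↔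
      ∀ v ∈ (A.erase a).erase b, ∃ e ∈ F, v ∈ e := by
    simp only [mem_erase, exists_mem_insert, Sym2.mem_iff]
    grind
  rw [card_insert_of_notMem hF, pow_succ', ← mul_ite_zero, if_congr hcov rfl rfl]

lemma one_add_ne_zero_of_one_lt_norm {z : K} (hz : 1 < ‖z‖) : 1 + z ≠ 0 := fun h => by
  rw [eq_neg_of_add_eq_zero_right h, norm_neg, norm_one] at hz
  exact hz.false

lemma norm_sub_lt_norm_add_mul {z c₀ c₁ c₂ : K} (hz : 4 ≤ ‖z‖) (h₁ : ‖c₁‖ < 2 * ‖c₀‖)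
    (h₂ : ‖c₂ - c₁‖ ≤ ‖c₁‖) : ‖c₂ - c₁‖ < ‖c₁ + z * c₀‖ := by
  calc ‖c₂ - c₁‖ ≤ ‖c₁‖ := h₂
    _ < 4 * ‖c₀‖ - ‖c₁‖ := by linarith
    _ ≤ ‖z * c₀‖ - ‖c₁‖ := by rw [norm_mul]; gcongr
    _ ≤ ‖c₁ + z * c₀‖ := by simpa [add_comm] using norm_sub_norm_le (z * c₀) (-c₁)

def VertexDeletionBound (E : Finset (Sym2 V)) (z : K) : Prop :=
  ∀ A : Finset V, (∀ w ∈ A, ∃ e ∈ E, w ∈ e) → ∀ v ∈ A,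
    ‖partialEdgeCoverPoly E A z - partialEdgeCoverPoly E (A.erase v) z‖ <
      ‖partialEdgeCoverPoly E (A.erase v) z‖

namespace VertexDeletionBound

variable {E : Finset (Sym2 V)} {z : K}

lemma ne_zero (h : VertexDeletionBound E z) (hz : 1 + z ≠ 0) {A : Finset V}
    (hA : ∀ w ∈ A, ∃ e ∈ E, w ∈ e) : partialEdgeCoverPoly E A z ≠ 0 := by
  obtain rfl | ⟨v, hv⟩ := A.eq_empty_or_nonempty
  · rw [partialEdgeCoverPoly_empty]
    exact pow_ne_zero _ hz
  · intro h0
    have hlt := h A hA v hv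
    rw [h0, zero_sub, norm_neg] at hlt
    exact hlt.false

lemma norm_sub_le (h : VertexDeletionBound E z) (A : Finset V) (v : V) :
    ‖partialEdgeCoverPoly E A z - partialEdgeCoverPoly E (A.erase v) z‖ ≤
      ‖partialEdgeCoverPoly E (A.erase v) z‖ := by
  by_cases hA : ∀ w ∈ A, ∃ e ∈ E, w ∈ e
  · by_cases hv : v ∈ A
    · exact (h A hA v hv).le
    · simp [erase_eq_of_notMem hv]
  · push Not at hA
    obtain ⟨w, hw, hwE⟩ := hA
    rw [partialEdgeCoverPoly_eq_zero hw hwE, zero_sub, norm_neg]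

lemma norm_lt_two_mul (h : VertexDeletionBound E z) (hz : 1 + z ≠ 0) {B : Finset V} {u : V}
    (hB : ∀ w ∈ B.erase u, ∃ e ∈ E, w ∈ e) :
    ‖partialEdgeCoverPoly E B z‖ < 2 * ‖partialEdgeCoverPoly E (B.erase u) z‖ := by
  have hpos := norm_pos_iff.mpr (h.ne_zero hz hB)
  by_cases hB' : ∀ w ∈ B, ∃ e ∈ E, w ∈ e
  · by_cases hu : u ∈ B
    · linarith [h B hB' u hu, norm_le_norm_sub_add (partialEdgeCoverPoly E B z)
        (partialEdgeCoverPoly E (B.erase u) z)]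
    · rw [erase_eq_of_notMem hu] at hpos ⊢
      linarith
  · push Not at hB'
    obtain ⟨w, hw, hwE⟩ := hB'
    rw [partialEdgeCoverPoly_eq_zero hw hwE, norm_zero]
    positivity

end VertexDeletionBound

lemma vertexDeletionBound {z : K} (hz : 4 ≤ ‖z‖) (E : Finset (Sym2 V)) :
    VertexDeletionBound E z := by
  have hz₁ : 1 + z ≠ 0 := one_add_ne_zero_of_one_lt_norm (by linarith)
  induction E using Finset.strongInduction with
  | H E ih =>
  intro A hA v hv
  obtain ⟨e, he, hve⟩ := hA v hv
  obtain ⟨u, rfl⟩ := Sym2.mem_iff_exists.mp hve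
  have ih := ih _ (erase_ssubset he)
  rw [← insert_erase he, partialEdgeCoverPoly_insert (notMem_erase _ _),
    partialEdgeCoverPoly_insert (notMem_erase _ _), erase_idem, add_sub_add_right_eq_sub]
  refine norm_sub_lt_norm_add_mul hz (ih.norm_lt_two_mul hz₁ fun w hw => ?_) (ih.norm_sub_le A v)
  simp only [mem_erase] at hw
  obtain ⟨f, hf, hwf⟩ := hA w hw.2.2
  refine ⟨f, mem_erase.mpr ⟨?_, hf⟩, hwf⟩
  rintro rfl
  simp only [Sym2.mem_iff] at hwf
  tauto

lemma partialEdgeCoverPoly_ne_zero {z : K} (hz : 4 ≤ ‖z‖) {E : Finset (Sym2 V)} {A : Finset V}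
    (hA : ∀ w ∈ A, ∃ e ∈ E, w ∈ e) : partialEdgeCoverPoly E A z ≠ 0 :=
  (vertexDeletionBound hz E).ne_zero (one_add_ne_zero_of_one_lt_norm (by linarith)) hA

end

/-- If `G` has no isolated vertices, then its edge cover polynomial is nonzero
whenever `|z| ≥ 4`. -/
theorem edgeCoverPoly_ne_zero_of_four_le_abs
    {V : Type} [Fintype V] [DecidableEq V] (G : SimpleGraph V) [DecidableRel G.Adj]
    (hiso : ∀ v : V, ∃ u : V, G.Adj v u)
    (z : ℂ) (hz : 4 ≤ ‖z‖) :
    edgeCoverPoly G z ≠ 0 := by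
  have hpartial : edgeCoverPoly G z = partialEdgeCoverPoly G.edgeFinset univ z := by
    simp [edgeCoverPoly, partialEdgeCoverPoly]
  rw [hpartial]
  refine partialEdgeCoverPoly_ne_zero hz fun v _ => ?_
  obtain ⟨u, huv⟩ := hiso v
  exact ⟨s(v, u), G.mem_edgeFinset.mpr huv, Sym2.mem_mk_left v u⟩
end

section
/- Let G be a finite simple graph with no isolated vertices. Then every complex root of the edge cover polynomial E(G, z) is contained in the set {−(1−α)² : α ∈ ℂ, |α| ≤ 1}. -/
open Finset

/-!
Write `P(E, S)` for the sum of `z ^ |F|` over the sets `F ⊆ E` of edges covering the vertex set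
`S`, so that `E(G, z) = P(E(G), V)`. Outside the cardioid, i.e. when `|z|² + 2 Re z > 2|z|`, every
point of the closed unit disc is strictly closer to `1` than to `1 + z`. By strong induction on `S`,
removing the edges at a vertex `u ∉ S` strictly decreases `|P(E, S)|`: put them back one at a
time; adding `uv` changes `P(E, S) = A - B` into `(1 + z) A - B`, where `A = P(E, S - v)`,
`B = P(E - v, S - v)` and `|B| < |A|` by induction. The same splitting `P(E, S) = A - B` shows that
`P(E, S) ≠ 0` whenever `E` covers `S`.
-/

section Cardioid

variable {z : ℂ}

theorem norm_one_sub_lt_norm_one_add_sub (hz : 2 * ‖z‖ < ‖z‖ ^ 2 + 2 * z.re) {R : ℂ}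
    (hR : ‖R‖ ≤ 1) : ‖1 - R‖ < ‖1 + z - R‖ := by
  have hRz : (R * (starRingEnd ℂ) z).re ≤ ‖z‖ := calc
    _ ≤ ‖R * (starRingEnd ℂ) z‖ := Complex.re_le_norm _
    _ ≤ ‖z‖ := by
      rw [norm_mul, Complex.norm_conj]; exact mul_le_of_le_one_left (norm_nonneg z) hR
  have hsq : ‖1 + z - R‖ ^ 2
      = ‖1 - R‖ ^ 2 + ‖z‖ ^ 2 + 2 * (z.re - (R * (starRingEnd ℂ) z).re) := by
    rw [show 1 + z - R = (1 - R) + z by ring, Complex.sq_norm, Complex.sq_norm, Complex.sq_norm,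
      Complex.normSq_add]
    simp only [sub_mul, one_mul, Complex.sub_re, Complex.conj_re]
  exact lt_of_pow_lt_pow_left₀ 2 (norm_nonneg _) (by rw [hsq]; linarith)

theorem norm_sub_lt_norm_one_add_mul_sub (hz : 2 * ‖z‖ < ‖z‖ ^ 2 + 2 * z.re) {A B : ℂ}
    (hA : A ≠ 0) (hB : ‖B‖ < ‖A‖) : ‖A - B‖ < ‖(1 + z) * A - B‖ := by
  have hBA : ‖B / A‖ ≤ 1 := by
    rw [norm_div]; exact div_le_one_of_le₀ hB.le (norm_nonneg A)
  have key := mul_lt_mul_of_pos_right (norm_one_sub_lt_norm_one_add_sub hz hBA)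
    (norm_pos_iff.mpr hA)
  rwa [← norm_mul, ← norm_mul, sub_mul, sub_mul, div_mul_cancel₀ B hA, one_mul] at key

theorem exists_eq_neg_one_sub_sq (hz : ‖z‖ ^ 2 + 2 * z.re ≤ 2 * ‖z‖) :
    ∃ α : ℂ, ‖α‖ ≤ 1 ∧ z = -(1 - α) ^ 2 := by
  obtain ⟨b, hb, hbre⟩ : ∃ b : ℂ, b ^ 2 = -z ∧ 0 ≤ b.re := by
    obtain ⟨b, hb⟩ := IsAlgClosed.exists_pow_nat_eq (-z) two_pos
    rcases le_total 0 b.re with h | h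
    · exact ⟨b, hb, h⟩
    · exact ⟨-b, by rw [neg_sq, hb], by simpa using h⟩
  refine ⟨1 - b, ?_, by rw [sub_sub_cancel, hb, neg_neg]⟩
  -- `|1 - b| ≤ 1` means `|b|² ≤ 2 Re b`, and `|b|² = |z|`, `(2 Re b)² = 2|z| - 2 Re z`.
  have hnorm : b.re ^ 2 + b.im ^ 2 = ‖z‖ := by
    rw [← norm_neg z, ← hb, norm_pow, Complex.sq_norm, Complex.normSq_apply]; ring
  have hre : b.re ^ 2 - b.im ^ 2 = -z.re := by
    rw [← Complex.neg_re, ← hb]; simp [sq]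
  have hz_le : ‖z‖ ≤ 2 * b.re := by nlinarith [norm_nonneg z]
  rw [← sq_le_one_iff₀ (norm_nonneg _), Complex.sq_norm, Complex.normSq_apply]
  simp only [Complex.sub_re, Complex.sub_im, Complex.one_re, Complex.one_im]
  nlinarith

end Cardioid

namespace EdgeCover

variable {V : Type*}

def Covers (F : Finset (Sym2 V)) (S : Finset V) : Prop := ∀ v ∈ S, ∃ e ∈ F, v ∈ e

open Classical in
noncomputable def coverPoly (E : Finset (Sym2 V)) (S : Finset V) (z : ℂ) : ℂ :=
  ∑ F ∈ E.powerset.filter (Covers · S), z ^ F.card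

variable {E F : Finset (Sym2 V)} {S : Finset V} {z : ℂ}

theorem Covers.mono (h : Covers E S) (hEF : E ⊆ F) : Covers F S := fun v hv =>
  let ⟨e, he, hve⟩ := h v hv; ⟨e, hEF he, hve⟩

theorem coverPoly_empty_right (E : Finset (Sym2 V)) (z : ℂ) :
    coverPoly E ∅ z = (z + 1) ^ E.card := by
  classical
  rw [← sum_pow_mul_eq_add_pow, coverPoly,
    filter_true_of_mem (fun _ _ v hv => absurd hv (notMem_empty v))]
  simp

theorem coverPoly_eq_zero_of_uncovered {x : V} (hx : x ∈ S) (hE : ∀ e ∈ E, x ∉ e) :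
    coverPoly E S z = 0 := by
  refine sum_eq_zero fun F hF => absurd hF ?_
  simp only [mem_filter, mem_powerset, not_and]
  intro hFE hF
  obtain ⟨e, he, hxe⟩ := hF x hx
  exact hE e (hFE he) hxe

theorem edgeCoverPoly_eq_coverPoly [Fintype V] [DecidableEq V] (G : SimpleGraph V)
    [DecidableRel G.Adj] (z : ℂ) : edgeCoverPoly G z = coverPoly G.edgeFinset univ z := by
  simp only [edgeCoverPoly, coverPoly, Covers, mem_univ, true_implies]

variable [DecidableEq V]

theorem covers_insert {u : V} :
    Covers F (insert u S) ↔ (∃ e ∈ F, u ∈ e) ∧ Covers F S :=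
  forall_mem_insert _ _ _

theorem coverPoly_insert_vertex (u : V) (E : Finset (Sym2 V)) (z : ℂ) :
    coverPoly E (insert u S) z = coverPoly E S z - coverPoly (E.filter (u ∉ ·)) S z := by
  classical
  rw [eq_sub_iff_add_eq, coverPoly, coverPoly, coverPoly, ← sum_filter_add_sum_filter_not
    (E.powerset.filter (Covers · S)) (fun F => ∃ e ∈ F, u ∈ e)]
  congr 2
  · ext F; simp only [mem_filter, mem_powerset, covers_insert]; tauto
  · ext F
    simp only [mem_filter, mem_powerset, not_exists, not_and, subset_iff]
    exact ⟨fun ⟨hFE, hF⟩ => ⟨⟨fun e he => (hFE he).1, hF⟩, fun e he => (hFE he).2⟩,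
      fun ⟨⟨hFE, hF⟩, hu⟩ => ⟨fun e he => ⟨hFE he, hu e he⟩, hF⟩⟩

theorem covers_insert_edge_iff {u v : V} (hu : u ∉ S) :
    Covers (insert s(u, v) F) S ↔ Covers F (S.erase v) := by
  refine ⟨fun h x hx => ?_, fun h x hx => ?_⟩
  · obtain ⟨e, he, hxe⟩ := h x (mem_of_mem_erase hx)
    obtain rfl | he := mem_insert.mp he
    · obtain rfl | rfl := Sym2.mem_iff.mp hxe
      · exact absurd (mem_of_mem_erase hx) hu
      · exact absurd rfl (ne_of_mem_erase hx)
    · exact ⟨e, he, hxe⟩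
  · obtain rfl | hxv := eq_or_ne x v
    · exact ⟨_, mem_insert_self _ _, Sym2.mem_mk_right u x⟩
    · obtain ⟨e, he, hxe⟩ := h x (mem_erase.mpr ⟨hxv, hx⟩)
      exact ⟨e, mem_insert_of_mem he, hxe⟩

theorem coverPoly_insert_edge {u v : V} (hu : u ∉ S) (he : s(u, v) ∉ E) (z : ℂ) :
    coverPoly (insert s(u, v) E) S z = coverPoly E S z + z * coverPoly E (S.erase v) z := by
  classical
  rw [coverPoly, coverPoly, coverPoly, sum_filter, sum_filter, sum_filter,
    sum_powerset_insert he, mul_sum]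
  congr 1
  refine sum_congr rfl fun F hF => ?_
  have heF : s(u, v) ∉ F := fun h => he (mem_powerset.mp hF h)
  simp only [covers_insert_edge_iff hu, card_insert_of_notMem heF, pow_succ]
  split_ifs <;> ring

def DeletionDecreases (S : Finset V) (z : ℂ) : Prop :=
  ∀ E : Finset (Sym2 V), Covers E S → ∀ u ∉ S, (∃ e ∈ E, u ∈ e) →
    ‖coverPoly (E.filter (u ∉ ·)) S z‖ < ‖coverPoly E S z‖

section Exterior

variable (hz : 2 * ‖z‖ < ‖z‖ ^ 2 + 2 * z.re)
include hz

theorem coverPoly_ne_zero_of_ssubset (hS : ∀ T ⊂ S, DeletionDecreases T z) (hE : Covers E S) :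
    coverPoly E S z ≠ 0 := by
  obtain rfl | ⟨u, hu⟩ := S.eq_empty_or_nonempty
  · have h1z : 1 < ‖1 + z‖ := by
      simpa using norm_one_sub_lt_norm_one_add_sub hz (R := 0) (by simp)
    rw [coverPoly_empty_right, add_comm]
    exact pow_ne_zero _ (norm_pos_iff.mp (one_pos.trans h1z))
  · have hlt := hS _ (erase_ssubset hu) E (fun x hx => hE x (mem_of_mem_erase hx)) u
      (notMem_erase u S) (hE u hu)
    rw [← insert_erase hu, coverPoly_insert_vertex, sub_ne_zero]
    exact fun h => hlt.ne (by rw [h])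

theorem norm_coverPoly_lt_insert (hS : ∀ T ⊂ S, DeletionDecreases T z) (hE : Covers E S)
    {u : V} {e : Sym2 V} (huS : u ∉ S) (hue : u ∈ e) (he : e ∉ E) :
    ‖coverPoly E S z‖ < ‖coverPoly (insert e E) S z‖ := by
  set v := Sym2.Mem.other hue
  rw [← Sym2.other_spec hue] at he ⊢
  rw [coverPoly_insert_edge huS he]
  by_cases hv : v ∈ S
  · have hlt := hS _ (erase_ssubset hv) E (fun x hx => hE x (mem_of_mem_erase hx)) v
      (notMem_erase v S) (hE v hv)
    have hsplit := coverPoly_insert_vertex v E z (S := S.erase v)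
    rw [insert_erase hv] at hsplit
    rw [hsplit, show ∀ A B : ℂ, A - B + z * A = (1 + z) * A - B by intros; ring]
    exact norm_sub_lt_norm_one_add_mul_sub hz (norm_pos_iff.mp ((norm_nonneg _).trans_lt hlt)) hlt
  · have hA := coverPoly_ne_zero_of_ssubset hz hS hE
    rw [erase_eq_of_notMem hv]
    simpa [← one_add_mul] using norm_sub_lt_norm_one_add_mul_sub hz hA (B := 0) (by simpa using hA)

theorem norm_coverPoly_le_union (hS : ∀ T ⊂ S, DeletionDecreases T z) (hE : Covers E S)
    {u : V} (huS : u ∉ S) {D : Finset (Sym2 V)} (hD : ∀ e ∈ D, u ∈ e) :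
    ‖coverPoly E S z‖ ≤ ‖coverPoly (E ∪ D) S z‖ := by
  induction D using Finset.induction_on with
  | empty => simp
  | @insert e D _ ih =>
    rw [union_insert]
    refine (ih fun e' he' => hD e' (mem_insert_of_mem he')).trans ?_
    by_cases heD : e ∈ E ∪ D
    · rw [insert_eq_of_mem heD]
    · exact (norm_coverPoly_lt_insert hz hS (hE.mono subset_union_left) huS
        (hD e (mem_insert_self e D)) heD).le

theorem deletionDecreases (S : Finset V) : DeletionDecreases S z := by
  induction S using Finset.strongInduction with
  | H S hS =>
    intro E hE u huS ⟨e, heE, hue⟩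
    by_cases hE₀ : Covers (E.filter (u ∉ ·)) S
    · have he : e ∉ E.filter (u ∉ ·) := fun h => (mem_filter.mp h).2 hue
      have hEq : insert e (E.filter (u ∉ ·)) ∪ E.filter (u ∈ ·) = E := by
        rw [insert_union, union_comm, filter_union_filter_not_eq, insert_eq_of_mem heE]
      calc ‖coverPoly (E.filter (u ∉ ·)) S z‖
          < ‖coverPoly (insert e (E.filter (u ∉ ·))) S z‖ :=
            norm_coverPoly_lt_insert hz hS hE₀ huS hue he
        _ ≤ ‖coverPoly (insert e (E.filter (u ∉ ·)) ∪ E.filter (u ∈ ·)) S z‖ :=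
            norm_coverPoly_le_union hz hS (hE₀.mono (subset_insert _ _)) huS
              (fun f hf => (mem_filter.mp hf).2)
        _ = ‖coverPoly E S z‖ := by rw [hEq]
    · obtain ⟨x, hx, hxE⟩ : ∃ x ∈ S, ∀ f ∈ E.filter (u ∉ ·), x ∉ f := by
        simpa [Covers] using hE₀
      rw [coverPoly_eq_zero_of_uncovered hx hxE, norm_zero, norm_pos_iff]
      exact coverPoly_ne_zero_of_ssubset hz hS hE

theorem coverPoly_ne_zero (hE : Covers E S) : coverPoly E S z ≠ 0 :=
  coverPoly_ne_zero_of_ssubset hz (fun T _ => deletionDecreases hz T) hE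

end Exterior

end EdgeCover

/-- If `G` has no isolated vertices, then every complex root of its edge cover polynomial
lies in the cardioid-like set `{-(1-α)² : |α| ≤ 1}`. -/
theorem edgeCoverPoly_roots_mem_cardioid
    {V : Type} [Fintype V] [DecidableEq V] (G : SimpleGraph V) [DecidableRel G.Adj]
    (hiso : ∀ v : V, ∃ u : V, G.Adj v u)
    (z : ℂ) (hz : edgeCoverPoly G z = 0) :
    ∃ α : ℂ, ‖α‖ ≤ 1 ∧ z = -(1 - α) ^ 2 := by
  by_cases hc : ‖z‖ ^ 2 + 2 * z.re ≤ 2 * ‖z‖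
  · exact exists_eq_neg_one_sub_sq hc
  · refine absurd hz ?_
    rw [EdgeCover.edgeCoverPoly_eq_coverPoly]
    refine EdgeCover.coverPoly_ne_zero (not_le.mp hc) fun v _ => ?_
    obtain ⟨u, hvu⟩ := hiso v
    exact ⟨s(v, u), G.mem_edgeFinset.mpr hvu, Sym2.mem_mk_left v u⟩
end

section
/- Let H be a finite hypergraph in which every edge is nonempty and every vertex is contained in at most Δ edges. Then for every complex number z with |z| < 2^{−Δ}, the independence polynomial satisfies I(H, z) ≠ 0. -/
open Finset

/-- The independence polynomial of a hypergraph with vertex set `V` and edge collection `E`,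
evaluated at `z`: the sum of `z^{|A|}` over all sets `A ⊆ V` containing no edge of `E`. -/
noncomputable def hypIndepPoly {V : Type*} [Fintype V] [DecidableEq V]
    (E : Finset (Finset V)) (z : ℂ) : ℂ :=
  ∑ A ∈ (univ : Finset (Finset V)).filter (fun A => ∀ e ∈ E, ¬ e ⊆ A), z ^ A.card

/-!
Write `Z_E(T)` for the independence polynomial of the hypergraph with edges `E` restricted to the
vertex set `T`, and assume `2^Δ |z| ≤ 1`. By strong induction on `T`, inserting an edge `f` whose
vertices all have degree `< Δ` at most doubles `|Z(T)|`.

Deleting a vertex `v` changes `Z_E(T)` by `z Z'(T - v)`, where `Z'` comes from the edges avoiding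
`v` by inserting the `deg v` shrunken edges `e - v` one at a time, each satisfying the degree
condition; hence `|Z_E(T) - Z_E(T - v)| ≤ 2^{deg v} |z| |Z_E(T - v)|`, and when `2^Δ |z| < 1`
this keeps `Z_E(T)` away from `0` as vertices are added one by one.

For the edge bound, `Z_{G+f}(T) = Z_G(T) - z^{|f|} Z_{G/f}(T \ f)`. The vertex estimate along the
vertices of `f` gives `|Z_G(T \ f)| ≤ 2^{|f|} |Z_G(T)|`, and the edge bound on the smaller set
`T \ f`, applied to the at most `(Δ - 1)|f|` edges shrunk by `f`, gives
`|Z_{G/f}(T \ f)| ≤ 2^{(Δ - 1)|f|} |Z_G(T \ f)|`, so the correction term is at most `|Z_G(T)|`.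
-/

namespace Hypergraph

variable {V : Type*} [DecidableEq V]

noncomputable def indepPolyOn (E : Finset (Finset V)) (T : Finset V) (z : ℂ) : ℂ :=
  ∑ A ∈ T.powerset with ∀ e ∈ E, ¬ e ⊆ A, z ^ #A

theorem indepPolyOn_congr {E E' : Finset (Finset V)} {T : Finset V} (z : ℂ)
    (h : ∀ A ⊆ T, (∀ e ∈ E, ¬ e ⊆ A) ↔ (∀ e ∈ E', ¬ e ⊆ A)) :
    indepPolyOn E T z = indepPolyOn E' T z := by
  unfold indepPolyOn
  congr 1
  exact filter_congr fun A hA => h A (mem_powerset.1 hA)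

theorem indepPolyOn_of_empty_mem {E : Finset (Finset V)} (T : Finset V) (z : ℂ)
    (h : ∅ ∈ E) : indepPolyOn E T z = 0 := by
  rw [indepPolyOn, filter_false_of_mem fun A _ hA => hA ∅ h (empty_subset A), sum_empty]

theorem indepPolyOn_empty {E : Finset (Finset V)} (hE : ∀ e ∈ E, e.Nonempty) (z : ℂ) :
    indepPolyOn E ∅ z = 1 := by
  have hindep : ∀ e ∈ E, ¬ e ⊆ ∅ := fun e he h => (hE e he).ne_empty (subset_empty.1 h)
  rw [indepPolyOn, powerset_empty, filter_singleton, if_pos hindep, sum_singleton, card_empty,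
    pow_zero]

theorem indepPolyOn_sdiff_of_forall_not_subset {E D : Finset (Finset V)} {S : Finset V} (z : ℂ)
    (hD : ∀ e ∈ D, ¬ e ⊆ S) : indepPolyOn (E \ D) S z = indepPolyOn E S z := by
  refine indepPolyOn_congr z fun A hA =>
    ⟨fun h e he heA => ?_, fun h e he => h e (sdiff_subset he)⟩
  exact h e (mem_sdiff.2 ⟨he, fun heD => hD e heD (heA.trans hA)⟩) heA

theorem indepPolyOn_insert_of_not_subset (G : Finset (Finset V)) {f T : Finset V}
    (hf : ¬ f ⊆ T) (z : ℂ) : indepPolyOn (insert f G) T z = indepPolyOn G T z :=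
  indepPolyOn_congr z fun A hA => by
    rw [forall_mem_insert, and_iff_right fun hfA => hf (hfA.trans hA)]

theorem indepPolyOn_insert_vertex (E : Finset (Finset V)) {S : Finset V} {v : V} (hv : v ∉ S)
    (z : ℂ) : indepPolyOn E (insert v S) z
      = indepPolyOn E S z + z * indepPolyOn (E.image (·.erase v)) S z := by
  simp only [indepPolyOn, sum_filter, sum_powerset_insert hv, mul_sum]
  congr 1
  refine sum_congr rfl fun A hA => ?_
  have hvA : v ∉ A := fun h => hv (mem_powerset.1 hA h)
  simp only [subset_insert_iff, forall_mem_image, card_insert_of_notMem hvA, pow_succ']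
  split_ifs <;> simp

theorem indepPolyOn_insert_edge (G : Finset (Finset V)) {f T : Finset V} (hf : f ⊆ T) (z : ℂ) :
    indepPolyOn (insert f G) T z
      = indepPolyOn G T z - z ^ #f * indepPolyOn (G.image (· \ f)) (T \ f) z := by
  have hcontain : ∑ A ∈ T.powerset with (∀ e ∈ G, ¬ e ⊆ A) ∧ f ⊆ A, z ^ #A
      = z ^ #f * indepPolyOn (G.image (· \ f)) (T \ f) z := by
    have hinj : Set.InjOn (f ∪ ·) ((T \ f).powerset : Set (Finset V)) := by
      intro B₁ h₁ B₂ h₂ h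
      simp only [coe_powerset, Set.mem_preimage, Set.mem_powerset_iff, coe_subset,
        subset_sdiff] at h₁ h₂
      simpa [union_sdiff_cancel_left h₁.2.symm, union_sdiff_cancel_left h₂.2.symm] using
        congrArg (· \ f) h
    rw [← filter_filter, filter_comm, ← Icc_eq_filter_powerset, Icc_eq_image_powerset hf,
      filter_image, sum_image (hinj.mono (filter_subset _ _)), indepPolyOn, mul_sum]
    refine sum_congr (filter_congr fun B hB => ?_) fun B hB => ?_
    · simp [sdiff_le_iff]
    · rw [card_union_of_disjoint (subset_sdiff.1 (mem_powerset.1 (mem_filter.1 hB).1)).2.symm,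
        pow_add]
  rw [← hcontain, indepPolyOn, indepPolyOn, eq_sub_iff_add_eq, ← sum_filter_add_sum_filter_not
    {A ∈ T.powerset | ∀ e ∈ G, ¬ e ⊆ A} (f ⊆ ·), filter_filter, filter_filter, add_comm]
  congr 1
  exact sum_congr (filter_congr fun A _ => by rw [forall_mem_insert, and_comm]) fun _ _ => rfl

def degree (E : Finset (Finset V)) (v : V) : ℕ := #{e ∈ E | v ∈ e}

theorem degree_mono {E E' : Finset (Finset V)} (h : E ⊆ E') (v : V) :
    degree E v ≤ degree E' v :=
  card_le_card (filter_subset_filter _ h)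

theorem degree_image_le (E : Finset (Finset V)) {π : Finset V → Finset V}
    (hπ : ∀ e, π e ⊆ e) (v : V) : degree (E.image π) v ≤ degree E v := by
  refine (card_le_card fun e he => ?_).trans (card_image_le (s := {e ∈ E | v ∈ e}) (f := π))
  simp only [mem_filter, mem_image] at he ⊢
  obtain ⟨⟨e, he, rfl⟩, hv⟩ := he
  exact ⟨e, ⟨he, hπ e hv⟩, rfl⟩

theorem degree_erase_lt {E : Finset (Finset V)} {e : Finset V} (he : e ∈ E) {v : V}
    (hv : v ∈ e) : degree (E.erase e) v < degree E v := by
  rw [degree, filter_erase]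
  exact card_erase_lt_of_mem (mem_filter.2 ⟨he, hv⟩)

theorem card_filter_not_disjoint_add_card_le {G : Finset (Finset V)} {f : Finset V} {Δ : ℕ}
    (hf : ∀ u ∈ f, degree G u < Δ) : #{e ∈ G | ¬ Disjoint e f} + #f ≤ Δ * #f := by
  have hcover : {e ∈ G | ¬ Disjoint e f} ⊆ f.biUnion fun u => {e ∈ G | u ∈ e} := by
    intro e he
    obtain ⟨heG, hef⟩ := mem_filter.1 he
    obtain ⟨u, hue, huf⟩ := not_disjoint_iff.1 hef
    exact mem_biUnion.2 ⟨u, huf, mem_filter.2 ⟨heG, hue⟩⟩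
  calc #{e ∈ G | ¬ Disjoint e f} + #f ≤ ∑ u ∈ f, degree G u + ∑ _u ∈ f, 1 := by
        rw [card_eq_sum_ones f]
        gcongr
        exact (card_le_card hcover).trans card_biUnion_le
    _ = ∑ u ∈ f, (degree G u + 1) := sum_add_distrib.symm
    _ ≤ ∑ _u ∈ f, Δ := sum_le_sum hf
    _ = Δ * #f := by rw [sum_const, smul_eq_mul, mul_comm]

structure BoundedDegree (Δ : ℕ) (E : Finset (Finset V)) : Prop where
  nonempty : ∀ e ∈ E, e.Nonempty
  degree_le : ∀ v, degree E v ≤ Δ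

def EdgeInsertionBound (Δ : ℕ) (z : ℂ) (S : Finset V) : Prop :=
  ∀ (G : Finset (Finset V)) (f : Finset V), BoundedDegree Δ G → f.Nonempty →
    (∀ u ∈ f, degree G u < Δ) →
      ‖indepPolyOn (insert f G) S z‖ ≤ 2 * ‖indepPolyOn G S z‖

section

variable {Δ : ℕ} {z : ℂ} {S : Finset V} {E : Finset (Finset V)}

theorem EdgeInsertionBound.norm_image_le_two_pow_mul (hS : EdgeInsertionBound Δ z S)
    (hE : BoundedDegree Δ E) {π : Finset V → Finset V} (hπ : ∀ e, π e ⊆ e)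
    (hπE : ∀ e ∈ E, (π e).Nonempty) {D : Finset (Finset V)} (hD : D ⊆ E) :
    ‖indepPolyOn (E.image π) S z‖ ≤ 2 ^ #D * ‖indepPolyOn ((E \ D).image π) S z‖ := by
  induction D using Finset.induction_on with
  | empty => simp
  | @insert e D heD ih =>
    have he : e ∈ E := hD (mem_insert_self e D)
    set G := (E \ insert e D).image π
    have hsplit : (E \ D).image π = insert (π e) G := by
      rw [← image_insert, sdiff_insert, insert_erase (mem_sdiff.2 ⟨he, heD⟩)]
    have hGE : G ⊆ (E.erase e).image π :=
      image_subset_image fun x hx => mem_erase.2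
        ⟨fun h => (mem_sdiff.1 hx).2 (h ▸ mem_insert_self e D), (mem_sdiff.1 hx).1⟩
    have hG : BoundedDegree Δ G :=
      ⟨fun x hx => by
        obtain ⟨y, hy, rfl⟩ := mem_image.1 hx
        exact hπE y (mem_sdiff.1 hy).1,
      fun u => (degree_mono hGE u).trans <| (degree_image_le _ hπ u).trans <|
        (degree_mono (erase_subset e E) u).trans (hE.degree_le u)⟩
    have hπe : ∀ u ∈ π e, degree G u < Δ := fun u hu =>
      calc degree G u ≤ degree (E.erase e) u :=
            (degree_mono hGE u).trans (degree_image_le _ hπ u)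
        _ < degree E u := degree_erase_lt he (hπ e hu)
        _ ≤ Δ := hE.degree_le u
    calc ‖indepPolyOn (E.image π) S z‖
        ≤ 2 ^ #D * ‖indepPolyOn (insert (π e) G) S z‖ :=
          hsplit ▸ ih ((subset_insert e D).trans hD)
      _ ≤ 2 ^ #D * (2 * ‖indepPolyOn G S z‖) := by
          gcongr
          exact hS G (π e) hG (hπE e he) hπe
      _ = 2 ^ #(insert e D) * ‖indepPolyOn G S z‖ := by
          rw [card_insert_of_notMem heD, pow_succ]
          ring

theorem EdgeInsertionBound.norm_image_le (hS : EdgeInsertionBound Δ z S)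
    (hE : BoundedDegree Δ E) {π : Finset V → Finset V} (hπ : ∀ e, π e ⊆ e)
    {D : Finset (Finset V)} (hD : D ⊆ E) (hfix : ∀ e ∈ E, e ∉ D → π e = e)
    (hDS : ∀ e ∈ D, ¬ e ⊆ S) :
    ‖indepPolyOn (E.image π) S z‖ ≤ 2 ^ #D * ‖indepPolyOn E S z‖ := by
  by_cases hπE : ∀ e ∈ E, (π e).Nonempty
  · have hfixed : (E \ D).image π = E \ D := by
      rw [image_congr fun e he => hfix e (mem_sdiff.1 he).1 (mem_sdiff.1 he).2, image_id']
    rw [← indepPolyOn_sdiff_of_forall_not_subset (E := E) z hDS, ← hfixed]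
    exact hS.norm_image_le_two_pow_mul hE hπ hπE hD
  · obtain ⟨e, he, hempty⟩ := not_forall₂.1 hπE
    rw [indepPolyOn_of_empty_mem S z (mem_image.2 ⟨e, he, not_nonempty_iff_eq_empty.1 hempty⟩),
      norm_zero]
    positivity

theorem EdgeInsertionBound.norm_insert_sub_le (hS : EdgeInsertionBound Δ z S)
    (hE : BoundedDegree Δ E) {v : V} (hv : v ∉ S) :
    ‖indepPolyOn E (insert v S) z - indepPolyOn E S z‖
      ≤ 2 ^ degree E v * ‖z‖ * ‖indepPolyOn E S z‖ := by
  rw [indepPolyOn_insert_vertex E hv, add_sub_cancel_left, norm_mul, mul_comm (2 ^ _ : ℝ),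
    mul_assoc]
  gcongr
  exact hS.norm_image_le hE (fun e => erase_subset v e) (filter_subset _ E)
    (fun e he hv' => erase_eq_of_notMem fun hve => hv' (mem_filter.2 ⟨he, hve⟩))
    (fun e he heS => hv (heS (mem_filter.1 he).2))

theorem EdgeInsertionBound.norm_le_two_mul_insert (hz : 2 ^ Δ * ‖z‖ ≤ 1)
    (hS : EdgeInsertionBound Δ z S) (hE : BoundedDegree Δ E) {v : V} (hv : v ∉ S)
    (hdeg : degree E v < Δ) :
    ‖indepPolyOn E S z‖ ≤ 2 * ‖indepPolyOn E (insert v S) z‖ := by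
  have hpow : (2 : ℝ) ^ degree E v * 2 ≤ 2 ^ Δ :=
    pow_succ (2 : ℝ) _ ▸ pow_le_pow_right₀ one_le_two hdeg
  have hhalf : 2 ^ degree E v * ‖z‖ ≤ 1 / 2 := by nlinarith [norm_nonneg z]
  have hclose := (hS.norm_insert_sub_le hE hv).trans
    (mul_le_mul_of_nonneg_right hhalf (norm_nonneg (indepPolyOn E S z)))
  linarith [norm_sub_norm_le (indepPolyOn E S z) (indepPolyOn E (insert v S) z),
    norm_sub_rev (indepPolyOn E S z) (indepPolyOn E (insert v S) z)]

theorem norm_indepPolyOn_sdiff_le (hz : 2 ^ Δ * ‖z‖ ≤ 1) {T : Finset V}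
    (hT : ∀ S ⊂ T, EdgeInsertionBound Δ z S) (hE : BoundedDegree Δ E) {f : Finset V}
    (hfT : f ⊆ T) (hf : ∀ u ∈ f, degree E u < Δ) :
    ‖indepPolyOn E (T \ f) z‖ ≤ 2 ^ #f * ‖indepPolyOn E T z‖ := by
  induction f using Finset.induction_on with
  | empty => simp
  | @insert u f huf ih =>
    have hu : u ∈ insert u f := mem_insert_self u f
    have hins : insert u (T \ insert u f) = T \ f := by
      rw [sdiff_insert, insert_erase (mem_sdiff.2 ⟨hfT hu, huf⟩)]
    have hstep := (hT _ (sdiff_ssubset hfT ⟨u, hu⟩)).norm_le_two_mul_insert hz hE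
      (fun h => (mem_sdiff.1 h).2 hu) (hf u hu)
    calc ‖indepPolyOn E (T \ insert u f) z‖
        ≤ 2 * ‖indepPolyOn E (T \ f) z‖ := hins ▸ hstep
      _ ≤ 2 * (2 ^ #f * ‖indepPolyOn E T z‖) := by
          gcongr
          exact ih ((subset_insert u f).trans hfT) fun x hx => hf x (mem_insert_of_mem hx)
      _ = 2 ^ #(insert u f) * ‖indepPolyOn E T z‖ := by
          rw [card_insert_of_notMem huf, pow_succ]
          ring

theorem edgeInsertionBound_of_ssubset (hz : 2 ^ Δ * ‖z‖ ≤ 1) {T : Finset V}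
    (hT : ∀ S ⊂ T, EdgeInsertionBound Δ z S) : EdgeInsertionBound Δ z T := by
  intro G f hG hfne hf
  by_cases hfT : f ⊆ T
  swap
  · rw [indepPolyOn_insert_of_not_subset G hfT]
    linarith [norm_nonneg (indepPolyOn G T z)]
  set D := {e ∈ G | ¬ Disjoint e f}
  have hcontract : ‖indepPolyOn (G.image (· \ f)) (T \ f) z‖
      ≤ 2 ^ #D * ‖indepPolyOn G (T \ f) z‖ :=
    (hT _ (sdiff_ssubset hfT hfne)).norm_image_le hG (fun e => sdiff_subset) (filter_subset _ G)
      (fun e he heD => sdiff_eq_self_of_disjoint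
        (not_not.1 fun h => heD (mem_filter.2 ⟨he, h⟩)))
      (fun e he heS => (mem_filter.1 he).2 (disjoint_of_subset_left heS disjoint_sdiff_self_left))
  have htele := norm_indepPolyOn_sdiff_le hz hT hG hfT hf
  have hsmall : ‖z‖ ^ #f * 2 ^ (#D + #f) ≤ 1 :=
    calc ‖z‖ ^ #f * 2 ^ (#D + #f) ≤ ‖z‖ ^ #f * 2 ^ (Δ * #f) := by
          gcongr
          · exact one_le_two
          · exact card_filter_not_disjoint_add_card_le hf
      _ = (2 ^ Δ * ‖z‖) ^ #f := by rw [pow_mul, mul_pow, mul_comm]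
      _ ≤ 1 := pow_le_one₀ (by positivity) hz
  have hcorrection :
      ‖z ^ #f * indepPolyOn (G.image (· \ f)) (T \ f) z‖ ≤ ‖indepPolyOn G T z‖ :=
    calc ‖z ^ #f * indepPolyOn (G.image (· \ f)) (T \ f) z‖
        ≤ ‖z‖ ^ #f * (2 ^ #D * (2 ^ #f * ‖indepPolyOn G T z‖)) := by
          rw [norm_mul, norm_pow]
          gcongr
          exact hcontract.trans (by gcongr)
      _ = (‖z‖ ^ #f * 2 ^ (#D + #f)) * ‖indepPolyOn G T z‖ := by ring
      _ ≤ ‖indepPolyOn G T z‖ := mul_le_of_le_one_left (norm_nonneg _) hsmall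
  rw [indepPolyOn_insert_edge G hfT]
  linarith [norm_sub_le (indepPolyOn G T z) (z ^ #f * indepPolyOn (G.image (· \ f)) (T \ f) z)]

theorem edgeInsertionBound (hz : 2 ^ Δ * ‖z‖ ≤ 1) (T : Finset V) :
    EdgeInsertionBound Δ z T := by
  induction T using Finset.strongInduction with
  | H T ih => exact edgeInsertionBound_of_ssubset hz ih

theorem indepPolyOn_ne_zero (hz : 2 ^ Δ * ‖z‖ < 1) (hE : BoundedDegree Δ E) (T : Finset V) :
    indepPolyOn E T z ≠ 0 := by
  induction T using Finset.induction_on with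
  | empty => simp [indepPolyOn_empty hE.nonempty]
  | @insert v S hv ih =>
    have hclose := (edgeInsertionBound hz.le S).norm_insert_sub_le hE hv
    have hsmall : 2 ^ degree E v * ‖z‖ < 1 :=
      lt_of_le_of_lt (by gcongr; exacts [one_le_two, hE.degree_le v]) hz
    have hpos := norm_pos_iff.2 ih
    intro h0
    rw [h0, zero_sub, norm_neg] at hclose
    nlinarith

end

end Hypergraph

/-- If every edge of the hypergraph is nonempty and every vertex has degree at most `Δ`,
then the independence polynomial is nonzero whenever `|z| < 2^{-Δ}`. -/
theorem hypIndepPoly_ne_zero_of_abs_lt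
    {V : Type} [Fintype V] [DecidableEq V] (E : Finset (Finset V)) (Δ : ℕ)
    (hne : ∀ e ∈ E, e.Nonempty)
    (hdeg : ∀ v : V, (E.filter (fun e => v ∈ e)).card ≤ Δ)
    (z : ℂ) (hz : ‖z‖ < (2 : ℝ) ^ (-(Δ : ℤ))) :
    hypIndepPoly E z ≠ 0 := by
  have hz' : 2 ^ Δ * ‖z‖ < 1 := by
    rw [zpow_neg, zpow_natCast, ← mul_one (2 ^ Δ)⁻¹, lt_inv_mul_iff₀ (by positivity)] at hz
    exact hz
  have hpoly : hypIndepPoly E z = Hypergraph.indepPolyOn E univ z := by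
    rw [hypIndepPoly, Hypergraph.indepPolyOn, powerset_univ]
    -- the two filters carry different decidability instances
    congr
  rw [hpoly]
  exact Hypergraph.indepPolyOn_ne_zero hz' ⟨hne, hdeg⟩ univ
end

section
/- Let G be a finite simple graph without isolated vertices and with maximum degree Δ. Then every complex root z of the domination polynomial D(G, z) satisfies |z| < 2^{Δ+1}. -/
open Finset

/-- The domination polynomial of a finite simple graph `G`, evaluated at `z`:
the sum of `z^{|S|}` over all dominating sets `S` of `G`. -/
noncomputable def dominationPoly {V : Type*} [Fintype V] [DecidableEq V]
    (G : SimpleGraph V) [DecidableRel G.Adj] (z : ℂ) : ℂ :=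
  ∑ S ∈ (univ : Finset (Finset V)).filter
      (fun S => ∀ u : V, u ∈ S ∨ ∃ v ∈ S, G.Adj u v), z ^ S.card

/-!
For `z ≠ 0`, passing to complements gives `D(G, z) = z ^ n · Z(1 / z)`, where `Z(w)` sums `w ^ |C|`
over the sets `C` containing no closed neighbourhood `N[u]`: it is the independence polynomial of
the hypergraph of closed neighbourhoods. Restricting to a ground set `W` and to the constraints of
`u ∈ K` gives `Z(W, K)`, with the recursion `Z(W + v, K) = Z(W, K \ N[v]) + w · Z(W, K)`.

By strong induction on `W`, the second term is at most `r / (1 + r)` times the first. Indeed, the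
constraints of `K ∩ N[v]` can be put back one at a time, each at the cost of a factor
`1 + r ^ |N[u] ∩ W|` by the induction hypothesis. These traces miss `v`, so they have at most `Δ`
elements. Either they are all singletons, and then at most `Δ` of them are distinct, or one of
them contributes a factor at most `1 + r ^ 2`, the at most `Δ` others a factor at most `1 + r`
each. For `|w| ≤ 2 ^ -(Δ + 1)` the resulting condition on `r` holds with `r = 1` when `Δ ≤ 1` and
with `r = 2 / 5` otherwise; then the first term never vanishes, so neither does `Z`.
-/

section ProdBound

variable {α : Type*} {r : ℝ} {𝓔 : Finset (Finset α)}

theorem prod_one_add_pow_card_le_pow (hr0 : 0 ≤ r) (hr1 : r ≤ 1) (h𝓔 : ∀ E ∈ 𝓔, 1 ≤ #E) :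
    ∏ E ∈ 𝓔, (1 + r ^ #E) ≤ (1 + r) ^ #𝓔 := by
  rw [← prod_const]
  exact prod_le_prod (fun _ _ => by positivity)
    fun E hE => add_le_add le_rfl (pow_le_of_le_one hr0 hr1 (Nat.one_le_iff_ne_zero.1 (h𝓔 E hE)))

theorem prod_one_add_pow_card_le_mul_pow [DecidableEq α] (hr0 : 0 ≤ r) (hr1 : r ≤ 1)
    (h𝓔 : ∀ E ∈ 𝓔, 1 ≤ #E) {E₀ : Finset α} (hE₀ : E₀ ∈ 𝓔) (h2 : 2 ≤ #E₀) :
    ∏ E ∈ 𝓔, (1 + r ^ #E) ≤ (1 + r ^ 2) * (1 + r) ^ (#𝓔 - 1) := by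
  rw [← mul_prod_erase _ _ hE₀, ← card_erase_of_mem hE₀]
  exact mul_le_mul (add_le_add le_rfl (pow_le_pow_of_le_one hr0 hr1 h2))
    (prod_one_add_pow_card_le_pow hr0 hr1 fun E hE => h𝓔 E (mem_of_mem_erase hE))
    (prod_nonneg fun _ _ => by positivity) (by positivity)

end ProdBound

namespace SimpleGraph

variable {V : Type*} [Fintype V] [DecidableEq V] (G : SimpleGraph V) [DecidableRel G.Adj]

def closedNbhd (v : V) : Finset V := insert v (G.neighborFinset v)

variable {G}

theorem mem_closedNbhd {u v : V} : u ∈ G.closedNbhd v ↔ u = v ∨ G.Adj v u := by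
  simp [closedNbhd]

theorem self_mem_closedNbhd (v : V) : v ∈ G.closedNbhd v := mem_insert_self _ _

theorem mem_closedNbhd_comm {u v : V} : u ∈ G.closedNbhd v ↔ v ∈ G.closedNbhd u := by
  simp only [mem_closedNbhd, eq_comm, G.adj_comm]

theorem card_closedNbhd (v : V) : #(G.closedNbhd v) = G.degree v + 1 := by
  rw [closedNbhd, card_insert_of_notMem (by simp), card_neighborFinset_eq_degree]

theorem card_closedNbhd_inter_le {W : Finset V} {u v : V} (hv : v ∉ W)
    (hu : u ∈ G.closedNbhd v) : #(G.closedNbhd u ∩ W) ≤ G.degree u := by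
  calc #(G.closedNbhd u ∩ W) ≤ #((G.closedNbhd u).erase v) :=
        card_le_card fun x hx => mem_erase.2 ⟨ne_of_mem_of_not_mem (mem_inter.1 hx).2 hv,
          (mem_inter.1 hx).1⟩
    _ = G.degree u := by
      rw [card_erase_of_mem (mem_closedNbhd_comm.1 hu), card_closedNbhd, Nat.add_sub_cancel]

/-- When `N[v] ∩ W = {s}` with `s ∈ U`, the traces of `v` and `s` coincide, so one of the
`deg v + 1` vertices of `N[v]` can be dropped from `U`. -/
theorem card_image_closedNbhd_inter_le {W U : Finset V} {v : V} (hv : v ∉ W)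
    (hU : U ⊆ G.closedNbhd v) (h1 : ∀ u ∈ U, #(G.closedNbhd u ∩ W) = 1) :
    #(U.image (G.closedNbhd · ∩ W)) ≤ G.degree v := by
  suffices ∃ x ∈ G.closedNbhd v,
      U.image (G.closedNbhd · ∩ W) ⊆ (U.erase x).image (G.closedNbhd · ∩ W) by
    obtain ⟨x, hx, hsub⟩ := this
    calc #(U.image (G.closedNbhd · ∩ W)) ≤ #(U.erase x) := (card_le_card hsub).trans card_image_le
      _ ≤ #((G.closedNbhd v).erase x) := card_le_card (erase_subset_erase x hU)
      _ = G.degree v := by rw [card_erase_of_mem hx, card_closedNbhd, Nat.add_sub_cancel]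
  by_cases hvU : v ∈ U
  swap
  · exact ⟨v, self_mem_closedNbhd v, by rw [erase_eq_of_notMem hvU]⟩
  obtain ⟨s, hs⟩ := card_eq_one.1 (h1 v hvU)
  have hsv : s ∈ G.closedNbhd v ∩ W := hs ▸ mem_singleton_self s
  by_cases hsU : s ∈ U
  swap
  · exact ⟨s, (mem_inter.1 hsv).1, by rw [erase_eq_of_notMem hsU]⟩
  have hss : G.closedNbhd s ∩ W = {s} :=
    (eq_of_subset_of_card_le (singleton_subset_iff.2 (mem_inter.2
      ⟨self_mem_closedNbhd s, (mem_inter.1 hsv).2⟩)) (by rw [h1 s hsU, card_singleton])).symm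
  refine ⟨v, self_mem_closedNbhd v, fun E hE => ?_⟩
  obtain ⟨u, hu, rfl⟩ := mem_image.1 hE
  rcases eq_or_ne u v with rfl | huv
  · exact mem_image.2 ⟨s, mem_erase.2 ⟨ne_of_mem_of_not_mem (mem_inter.1 hsv).2 hv, hsU⟩,
      hss.trans hs.symm⟩
  · exact mem_image_of_mem _ (mem_erase.2 ⟨huv, hu⟩)

variable (G)

/-- The independence polynomial, on the ground set `W` and evaluated at `w`, of the hypergraph
whose edges are the traces `N[u] ∩ W` of the closed neighbourhoods of the vertices `u ∈ K`. -/
def avoidingSum (w : ℂ) (W K : Finset V) : ℂ :=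
  ∑ C ∈ W.powerset with ∀ u ∈ K, ¬ G.closedNbhd u ∩ W ⊆ C, w ^ #C

variable {G}

theorem avoidingSum_empty (w : ℂ) : G.avoidingSum w ∅ ∅ = 1 := by
  simp [avoidingSum]

theorem avoidingSum_eq_zero {w : ℂ} {W K : Finset V} {u : V} (hu : u ∈ K)
    (h : G.closedNbhd u ∩ W = ∅) : G.avoidingSum w W K = 0 := by
  refine sum_eq_zero fun C hC => ?_
  simp only [mem_filter] at hC
  exact absurd (h ▸ empty_subset C) (hC.2 u hu)

theorem avoidingSum_insert_of_inter_eq {w : ℂ} {W K : Finset V} {u u' : V} (hu' : u' ∈ K)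
    (h : G.closedNbhd u ∩ W = G.closedNbhd u' ∩ W) :
    G.avoidingSum w W (insert u K) = G.avoidingSum w W K := by
  simp only [avoidingSum, forall_mem_insert, h]
  exact sum_congr (filter_congr fun C _ => and_iff_right_of_imp (· u' hu')) fun _ _ => rfl

theorem sum_superset_eq_mul_avoidingSum (w : ℂ) {W E : Finset V} (hE : E ⊆ W) (K : Finset V) :
    ∑ C ∈ W.powerset with (∀ u ∈ K, ¬ G.closedNbhd u ∩ W ⊆ C) ∧ E ⊆ C, w ^ #C =
      w ^ #E * G.avoidingSum w (W \ E) K := by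
  have hcons (C : Finset V) (u : V) :
      G.closedNbhd u ∩ W ⊆ E ∪ C ↔ G.closedNbhd u ∩ (W \ E) ⊆ C := by
    rw [← inter_sdiff_assoc]; exact sdiff_le_iff.symm
  rw [avoidingSum, mul_sum]
  refine (sum_nbij' (E ∪ ·) (· \ E) ?_ ?_ ?_ ?_ ?_).symm
  · intro C hC
    simp only [mem_filter, mem_powerset, hcons] at hC ⊢
    exact ⟨union_subset hE (hC.1.trans sdiff_subset), hC.2, subset_union_left⟩
  · intro C hC
    simp only [mem_filter, mem_powerset] at hC ⊢
    refine ⟨sdiff_subset_sdiff hC.1 subset_rfl, fun u hu => ?_⟩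
    rw [← hcons, union_sdiff_of_subset hC.2.2]
    exact hC.2.1 u hu
  · intro C hC
    simp only [mem_filter, mem_powerset] at hC
    exact union_sdiff_cancel_left (disjoint_of_subset_left hC.1 sdiff_disjoint).symm
  · intro C hC
    simp only [mem_filter, mem_powerset] at hC
    exact union_sdiff_of_subset hC.2.2
  · intro C hC
    simp only [mem_filter, mem_powerset] at hC
    rw [card_union_of_disjoint (disjoint_of_subset_left hC.1 sdiff_disjoint).symm, pow_add]

theorem avoidingSum_insert (w : ℂ) {W : Finset V} {v : V} (hv : v ∉ W) (K : Finset V) :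
    G.avoidingSum w (insert v W) K = G.avoidingSum w W (K \ G.closedNbhd v) +
      w * G.avoidingSum w W K := by
  have hfree : ∑ C ∈ (insert v W).powerset with
      (∀ u ∈ K, ¬ G.closedNbhd u ∩ insert v W ⊆ C) ∧ ¬ {v} ⊆ C, w ^ #C =
      G.avoidingSum w W (K \ G.closedNbhd v) := by
    refine sum_congr (ext fun C => ?_) fun _ _ => rfl
    simp only [mem_filter, mem_powerset, singleton_subset_iff, mem_sdiff, and_imp]
    constructor
    · rintro ⟨hCW, hK, hvC⟩
      refine ⟨(subset_insert_iff_of_notMem hvC).1 hCW, fun u hu huv => ?_⟩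
      rw [← inter_insert_of_notMem (mt mem_closedNbhd_comm.1 huv)]
      exact hK u hu
    · rintro ⟨hCW, hK⟩
      have hvC : v ∉ C := fun h => hv (hCW h)
      refine ⟨hCW.trans (subset_insert _ _), fun u hu hsub => ?_, hvC⟩
      by_cases huv : u ∈ G.closedNbhd v
      · exact hvC (hsub (mem_inter.2 ⟨mem_closedNbhd_comm.1 huv, mem_insert_self v W⟩))
      · rw [inter_insert_of_notMem (mt mem_closedNbhd_comm.1 huv)] at hsub
        exact hK u hu huv hsub
  have hfixed :=
    G.sum_superset_eq_mul_avoidingSum w (singleton_subset_iff.2 (mem_insert_self v W)) K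
  rw [sdiff_singleton_eq_erase, erase_insert hv, card_singleton, pow_one] at hfixed
  rw [← hfree, ← hfixed, avoidingSum, ← sum_filter_not_add_sum_filter _ ({v} ⊆ ·),
    filter_filter, filter_filter]

theorem avoidingSum_eq_avoidingSum_insert_add (w : ℂ) (W K : Finset V) (u : V) :
    G.avoidingSum w W K = G.avoidingSum w W (insert u K) +
      w ^ #(G.closedNbhd u ∩ W) * G.avoidingSum w (W \ (G.closedNbhd u ∩ W)) K := by
  rw [← sum_superset_eq_mul_avoidingSum w inter_subset_right, avoidingSum, avoidingSum,
    ← sum_filter_not_add_sum_filter _ (G.closedNbhd u ∩ W ⊆ ·), filter_filter, filter_filter]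
  simp only [forall_mem_insert, and_comm]

theorem prod_image_closedNbhd_inter_le {r : ℝ} (hr0 : 0 ≤ r) (hr1 : r ≤ 1) {Δ : ℕ}
    (hΔ : ∀ x, G.degree x ≤ Δ) {W U : Finset V} {v : V} (hv : v ∉ W) (hU : U ⊆ G.closedNbhd v)
    (hne : ∀ u ∈ U, (G.closedNbhd u ∩ W).Nonempty) :
    ∏ E ∈ U.image (G.closedNbhd · ∩ W), (1 + r ^ #E) ≤ (1 + r) ^ Δ ∨
      2 ≤ Δ ∧ ∏ E ∈ U.image (G.closedNbhd · ∩ W), (1 + r ^ #E) ≤ (1 + r ^ 2) * (1 + r) ^ Δ := by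
  have hpos : ∀ E ∈ U.image (G.closedNbhd · ∩ W), 1 ≤ #E := by
    simp only [mem_image, forall_exists_index, and_imp, forall_apply_eq_imp_iff₂]
    exact fun u hu => card_pos.2 (hne u hu)
  by_cases hbig : ∃ E ∈ U.image (G.closedNbhd · ∩ W), 2 ≤ #E
  · obtain ⟨E₀, hE₀, h2⟩ := hbig
    obtain ⟨u₀, hu₀, rfl⟩ := mem_image.1 hE₀
    have hcard : #(U.image (G.closedNbhd · ∩ W)) ≤ Δ + 1 :=
      calc #(U.image (G.closedNbhd · ∩ W)) ≤ #(G.closedNbhd v) :=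
            card_image_le.trans (card_le_card hU)
        _ ≤ Δ + 1 := by rw [card_closedNbhd]; exact Nat.succ_le_succ (hΔ v)
    refine Or.inr ⟨h2.trans ((card_closedNbhd_inter_le hv (hU hu₀)).trans (hΔ u₀)), ?_⟩
    refine (prod_one_add_pow_card_le_mul_pow hr0 hr1 hpos hE₀ h2).trans ?_
    gcongr
    · linarith
    · omega
  · push Not at hbig
    have h1 (u : V) (hu : u ∈ U) : #(G.closedNbhd u ∩ W) = 1 :=
      le_antisymm (Nat.le_of_lt_succ (hbig _ (mem_image_of_mem _ hu)))
        (hpos _ (mem_image_of_mem _ hu))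
    refine Or.inl ((prod_one_add_pow_card_le_pow hr0 hr1 hpos).trans ?_)
    gcongr
    · linarith
    · exact (card_image_closedNbhd_inter_le hv hU h1).trans (hΔ v)

variable (G) in
/-- In the recursion `avoidingSum_insert` for adding `v` to `W`, the second term is at most
`r / (1 + r)` times the first. -/
def RatioBound (w : ℂ) (r : ℝ) (W : Finset V) : Prop :=
  ∀ v ∉ W, ∀ K : Finset V,
    (1 + r) * ‖w‖ * ‖G.avoidingSum w W K‖ ≤ r * ‖G.avoidingSum w W (K \ G.closedNbhd v)‖

section RatioBound

variable {w : ℂ} {r : ℝ}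

theorem RatioBound.norm_mul_le (hr : 0 ≤ r) {W : Finset V} (h : G.RatioBound w r W) {v : V}
    (hv : v ∉ W) (K : Finset V) :
    ‖w‖ * ‖G.avoidingSum w W K‖ ≤ r * ‖G.avoidingSum w (insert v W) K‖ := by
  rw [avoidingSum_insert w hv]
  have hsub := norm_sub_norm_le (G.avoidingSum w W (K \ G.closedNbhd v))
    (-(w * G.avoidingSum w W K))
  rw [sub_neg_eq_add, norm_neg, norm_mul] at hsub
  linarith [h v hv K, mul_le_mul_of_nonneg_left hsub hr]

theorem pow_norm_mul_norm_avoidingSum_sdiff_le (hr : 0 ≤ r) {W E : Finset V} (hE : E ⊆ W)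
    (hR : ∀ W' ⊂ W, G.RatioBound w r W') (K : Finset V) :
    ‖w‖ ^ #E * ‖G.avoidingSum w (W \ E) K‖ ≤ r ^ #E * ‖G.avoidingSum w W K‖ := by
  induction E using Finset.induction_on generalizing W with
  | empty => simp
  | insert a E ha ih =>
    have haW : a ∈ W := hE (mem_insert_self a E)
    have hEW : E ⊆ W.erase a := fun x hx =>
      mem_erase.2 ⟨ne_of_mem_of_not_mem hx ha, hE (mem_insert_of_mem hx)⟩
    have hrest := ih hEW fun W' hW' => hR W' (hW'.trans (erase_ssubset haW))
    have hstep := (hR _ (erase_ssubset haW)).norm_mul_le hr (notMem_erase a W) K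
    rw [insert_erase haW] at hstep
    rw [sdiff_insert, ← erase_sdiff_comm, card_insert_of_notMem ha, pow_succ, pow_succ]
    calc ‖w‖ ^ #E * ‖w‖ * ‖G.avoidingSum w (W.erase a \ E) K‖
        = ‖w‖ * (‖w‖ ^ #E * ‖G.avoidingSum w (W.erase a \ E) K‖) := by ring
      _ ≤ ‖w‖ * (r ^ #E * ‖G.avoidingSum w (W.erase a) K‖) := by gcongr
      _ = r ^ #E * (‖w‖ * ‖G.avoidingSum w (W.erase a) K‖) := by ring
      _ ≤ r ^ #E * (r * ‖G.avoidingSum w W K‖) := by gcongr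
      _ = r ^ #E * r * ‖G.avoidingSum w W K‖ := by ring

theorem norm_avoidingSum_insert_le (hr : 0 ≤ r) {W : Finset V}
    (hR : ∀ W' ⊂ W, G.RatioBound w r W') (u : V) (K : Finset V) :
    ‖G.avoidingSum w W (insert u K)‖ ≤ (1 + r ^ #(G.closedNbhd u ∩ W)) * ‖G.avoidingSum w W K‖ := by
  set E := G.closedNbhd u ∩ W
  have hsplit : G.avoidingSum w W (insert u K) =
      G.avoidingSum w W K - w ^ #E * G.avoidingSum w (W \ E) K := by
    rw [avoidingSum_eq_avoidingSum_insert_add w W K u]; ring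
  have hE := pow_norm_mul_norm_avoidingSum_sdiff_le hr inter_subset_right hR K (E := E)
  calc ‖G.avoidingSum w W (insert u K)‖
      ≤ ‖G.avoidingSum w W K‖ + ‖w‖ ^ #E * ‖G.avoidingSum w (W \ E) K‖ := by
        rw [hsplit, ← norm_pow, ← norm_mul]; exact norm_sub_le _ _
    _ ≤ (1 + r ^ #E) * ‖G.avoidingSum w W K‖ := by linarith

theorem norm_avoidingSum_union_le (hr : 0 ≤ r) {W : Finset V}
    (hR : ∀ W' ⊂ W, G.RatioBound w r W') (K U : Finset V) :
    ‖G.avoidingSum w W (K ∪ U)‖ ≤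
      (∏ E ∈ U.image (G.closedNbhd · ∩ W), (1 + r ^ #E)) * ‖G.avoidingSum w W K‖ := by
  induction U using Finset.induction_on with
  | empty => simp
  | insert u U hu ih =>
    rw [union_insert, image_insert]
    by_cases hdup : G.closedNbhd u ∩ W ∈ U.image (G.closedNbhd · ∩ W)
    · obtain ⟨u', hu', heq⟩ := mem_image.1 hdup
      rw [avoidingSum_insert_of_inter_eq (mem_union_right K hu') heq.symm, insert_eq_self.2 hdup]
      exact ih
    · rw [prod_insert hdup, mul_assoc]
      exact (norm_avoidingSum_insert_le hr hR u _).trans (by gcongr)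

theorem ratioBound_of_forall_ssubset (hr0 : 0 ≤ r) (hr1 : r ≤ 1) {Δ : ℕ}
    (hΔ : ∀ x, G.degree x ≤ Δ) (hw : ‖w‖ * (1 + r) ^ (Δ + 1) ≤ r)
    (hw₂ : 2 ≤ Δ → ‖w‖ * (1 + r ^ 2) * (1 + r) ^ (Δ + 1) ≤ r) {W : Finset V}
    (hR : ∀ W' ⊂ W, G.RatioBound w r W') : G.RatioBound w r W := by
  intro v hv K
  by_cases hempty : ∃ u ∈ K ∩ G.closedNbhd v, G.closedNbhd u ∩ W = ∅
  · obtain ⟨u, hu, hu'⟩ := hempty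
    rw [avoidingSum_eq_zero (mem_inter.1 hu).1 hu', norm_zero, mul_zero]
    positivity
  push Not at hempty
  set P := ∏ E ∈ (K ∩ G.closedNbhd v).image (G.closedNbhd · ∩ W), (1 + r ^ #E)
  have hP : (1 + r) * ‖w‖ * P ≤ r := by
    rcases prod_image_closedNbhd_inter_le hr0 hr1 hΔ hv inter_subset_right hempty with
      hP | ⟨h2, hP⟩
    · calc (1 + r) * ‖w‖ * P ≤ (1 + r) * ‖w‖ * (1 + r) ^ Δ := by gcongr
        _ = ‖w‖ * (1 + r) ^ (Δ + 1) := by ring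
        _ ≤ r := hw
    · calc (1 + r) * ‖w‖ * P ≤ (1 + r) * ‖w‖ * ((1 + r ^ 2) * (1 + r) ^ Δ) := by gcongr
        _ = ‖w‖ * (1 + r ^ 2) * (1 + r) ^ (Δ + 1) := by ring
        _ ≤ r := hw₂ h2
  have hK := norm_avoidingSum_union_le hr0 hR (K \ G.closedNbhd v) (K ∩ G.closedNbhd v)
  rw [sdiff_union_inter] at hK
  calc (1 + r) * ‖w‖ * ‖G.avoidingSum w W K‖
      ≤ (1 + r) * ‖w‖ * (P * ‖G.avoidingSum w W (K \ G.closedNbhd v)‖) := by gcongr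
    _ = (1 + r) * ‖w‖ * P * ‖G.avoidingSum w W (K \ G.closedNbhd v)‖ := by ring
    _ ≤ r * ‖G.avoidingSum w W (K \ G.closedNbhd v)‖ := by gcongr

theorem avoidingSum_ne_zero (hR : ∀ W, G.RatioBound w r W) (W K : Finset V)
    (hK : ∀ u ∈ K, (G.closedNbhd u ∩ W).Nonempty) : G.avoidingSum w W K ≠ 0 := by
  induction W using Finset.induction_on generalizing K with
  | empty =>
    obtain rfl : K = ∅ := eq_empty_of_forall_notMem fun u hu => by simpa using hK u hu
    rw [avoidingSum_empty]
    exact one_ne_zero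
  | insert v W hv ih =>
    have hA : G.avoidingSum w W (K \ G.closedNbhd v) ≠ 0 := by
      refine ih _ fun u hu => ?_
      rw [mem_sdiff, mem_closedNbhd_comm] at hu
      simpa only [inter_insert_of_notMem hu.2] using hK u hu.1
    rw [avoidingSum_insert w hv]
    intro h0
    have hnorm : ‖G.avoidingSum w W (K \ G.closedNbhd v)‖ = ‖w‖ * ‖G.avoidingSum w W K‖ := by
      rw [eq_neg_of_add_eq_zero_left h0, norm_neg, norm_mul]
    have hratio := hR W v hv K
    rw [hnorm] at hratio
    linarith [norm_pos_iff.2 hA]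

theorem avoidingSum_univ_ne_zero (hr0 : 0 ≤ r) (hr1 : r ≤ 1) {Δ : ℕ}
    (hΔ : ∀ x, G.degree x ≤ Δ) (hw : ‖w‖ * (1 + r) ^ (Δ + 1) ≤ r)
    (hw₂ : 2 ≤ Δ → ‖w‖ * (1 + r ^ 2) * (1 + r) ^ (Δ + 1) ≤ r) :
    G.avoidingSum w univ univ ≠ 0 :=
  avoidingSum_ne_zero
    (fun W => W.strongInduction fun _ => ratioBound_of_forall_ssubset hr0 hr1 hΔ hw hw₂) _ _
    fun u _ => ⟨u, mem_inter.2 ⟨self_mem_closedNbhd u, mem_univ u⟩⟩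

end RatioBound

end SimpleGraph

theorem dominationPoly_eq_pow_mul_avoidingSum {V : Type*} [Fintype V] [DecidableEq V]
    (G : SimpleGraph V) [DecidableRel G.Adj] {z : ℂ} (hz : z ≠ 0) :
    dominationPoly G z = z ^ Fintype.card V * G.avoidingSum z⁻¹ univ univ := by
  have hdom (S : Finset V) :
      (∀ u, u ∈ S ∨ ∃ v ∈ S, G.Adj u v) ↔ ∀ u, ¬ G.closedNbhd u ⊆ Sᶜ := by
    simp only [subset_iff, SimpleGraph.mem_closedNbhd, mem_compl, not_forall, not_not,
      exists_prop, or_and_right, exists_or, exists_eq_left]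
    exact forall_congr' fun u => or_congr_right (exists_congr fun x => and_comm)
  rw [dominationPoly, SimpleGraph.avoidingSum, powerset_univ, mul_sum]
  refine sum_nbij' compl compl ?_ ?_ (fun S _ => compl_compl S) (fun S _ => compl_compl S) ?_
  · simp [hdom]
  · simp [hdom]
  · intro S _
    rw [← card_add_card_compl S, pow_add, inv_pow, mul_inv_cancel_right₀ (pow_ne_zero _ hz)]

theorem exists_ratio_param {x : ℝ} {Δ : ℕ} (h : x * 2 ^ (Δ + 1) ≤ 1) :
    ∃ r : ℝ, 0 ≤ r ∧ r ≤ 1 ∧ x * (1 + r) ^ (Δ + 1) ≤ r ∧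
      (2 ≤ Δ → x * (1 + r ^ 2) * (1 + r) ^ (Δ + 1) ≤ r) := by
  rcases lt_or_ge Δ 2 with hΔ | hΔ
  · exact ⟨1, zero_le_one, le_rfl, by norm_num [h], fun h2 => absurd h2 (not_le.2 hΔ)⟩
  have hkey : x * (7 / 5) ^ (Δ + 1) ≤ 343 / 1000 :=
    calc x * (7 / 5) ^ (Δ + 1) = x * 2 ^ (Δ + 1) * (7 / 10) ^ (Δ + 1) := by
          rw [mul_assoc, ← mul_pow]; norm_num
      _ ≤ 1 * (7 / 10) ^ 3 :=
          mul_le_mul h (pow_le_pow_of_le_one (by norm_num) (by norm_num) (by omega))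
            (by positivity) zero_le_one
      _ = 343 / 1000 := by norm_num
  refine ⟨2 / 5, by norm_num, by norm_num, ?_, fun _ => ?_⟩
  · rw [show (1 : ℝ) + 2 / 5 = 7 / 5 by norm_num]
    linarith
  · rw [show (1 : ℝ) + 2 / 5 = 7 / 5 by norm_num, show (1 : ℝ) + (2 / 5) ^ 2 = 29 / 25 by norm_num]
    linarith

theorem dominationPoly_roots_abs_lt_general
    {V : Type} [Fintype V] [DecidableEq V] (G : SimpleGraph V) [DecidableRel G.Adj]
    (z : ℂ) (hz : dominationPoly G z = 0) :
    ‖z‖ < (2 : ℝ) ^ (G.maxDegree + 1) := by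
  by_contra! hbig
  have hz0 : z ≠ 0 := by
    rintro rfl
    exact absurd hbig (by rw [norm_zero, not_le]; positivity)
  have hw : ‖z⁻¹‖ * 2 ^ (G.maxDegree + 1) ≤ 1 := by
    rw [norm_inv]
    exact inv_mul_le_one_of_le₀ hbig (norm_nonneg z)
  obtain ⟨r, hr0, hr1, hr, hr₂⟩ := exists_ratio_param hw
  have hZ := G.avoidingSum_univ_ne_zero hr0 hr1 G.degree_le_maxDegree hr hr₂
  rw [dominationPoly_eq_pow_mul_avoidingSum G hz0] at hz
  exact hZ ((mul_eq_zero.1 hz).resolve_left (pow_ne_zero _ hz0))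

/-- If `G` has no isolated vertices and maximum degree `Δ`, then every complex root `z` of the
domination polynomial satisfies `|z| < 2^{Δ+1}`. -/
theorem dominationPoly_roots_abs_lt
    {V : Type} [Fintype V] [DecidableEq V] (G : SimpleGraph V) [DecidableRel G.Adj]
    (hiso : ∀ v : V, ∃ u : V, G.Adj v u)
    (z : ℂ) (hz : dominationPoly G z = 0) :
    ‖z‖ < (2 : ℝ) ^ (G.maxDegree + 1) :=
  dominationPoly_roots_abs_lt_general G z hz
end

section
/- Let G be a finite simple graph without isolated vertices and with maximum degree Δ. Then every complex root z of the total domination polynomial D_t(G, z) satisfies |z| < 2^Δ. -/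
open Finset

/-- The total domination polynomial of a finite simple graph `G`, evaluated at `z`:
the sum of `z^{|S|}` over all total dominating sets `S` of `G`. -/
noncomputable def totalDominationPoly {V : Type*} [Fintype V] [DecidableEq V]
    (G : SimpleGraph V) [DecidableRel G.Adj] (z : ℂ) : ℂ :=
  ∑ S ∈ (univ : Finset (Finset V)).filter
      (fun S => ∀ u : V, ∃ v ∈ S, G.Adj u v), z ^ S.card

/-!
Complementing `S` to `T = Sᶜ`, a set is total dominating iff `T` contains no neighbourhood
`N(u)`, so `D_t(G, z) = z ^ n Z(1 / z)`, where `Z(w) = ∑ w ^ #T` runs over the sets containing no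
edge of the hypergraph of neighbourhoods. Its edges have at most `Δ` vertices and every vertex lies
in at most `Δ` of them; it remains to show `Z(w) ≠ 0` for `|w| ≤ 2 ^ (-Δ)`.

Pinning a set `B` into every `T` gives polynomials `Z(A, B)` with
`Z(A, B) = Z(A - v, B) + w Z(A - v, B + v)`, and `Z(A, B) ≠ 0` follows by induction on `A` once
the pinned term is small compared with `Z(A - v, B)`.
* For `Δ ≥ 3` we show by induction that pinning a vertex lying in fewer than `Δ` edges inside
  `A ∪ B` at most doubles `|Z|`. Inclusion–exclusion over the edges through `v` writes
  `Z(A - v, B + v)` as an alternating sum of `w ^ #U Z(A - v - U, B + U)`, where every vertex of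
  `U` shares an edge with `v` and so lies in fewer than `Δ` edges inside `(A - v) ∪ B`; the
  doubling bound for these, summed with `x = 2 ^ (1 - Δ)`, closes the induction.
* For `Δ = 2` the edges have at most two vertices, pinning `v` just deletes its neighbours, and
  the classical ratio argument for independence polynomials of paths and cycles at `|w| ≤ 1/4`
  applies: `|Z(A - v)| / |Z(A)| ≤ 2 (N + 1) / (N + 2) < 2` when `#A ≤ N` and `v` lies in at
  most one edge inside `A`.
* For `Δ ≤ 1` the whole vertex set is the only total dominating set.
-/

theorem Finset.sum_filter_forall_not_subset {α R : Type*} [DecidableEq α] [CommRing R]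
    (s F : Finset (Finset α)) (g : Finset α → R) :
    ∑ T ∈ s with ∀ f ∈ F, ¬ f ⊆ T, g T =
      ∑ I ∈ F.powerset, (-1) ^ #I * ∑ T ∈ s with I.biUnion id ⊆ T, g T := by
  have hind (T : Finset α) : (if ∀ f ∈ F, ¬ f ⊆ T then (1 : R) else 0) =
      ∑ I ∈ F.powerset, (-1) ^ #I * if I.biUnion id ⊆ T then 1 else 0 := by
    calc (if ∀ f ∈ F, ¬ f ⊆ T then (1 : R) else 0)
        = ∏ f ∈ F, (1 - if f ⊆ T then 1 else 0) := by
          rw [← prod_boole]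
          exact prod_congr rfl fun f _ => by split_ifs <;> simp
      _ = ∑ I ∈ F.powerset, (-1) ^ #I * ∏ f ∈ I, if f ⊆ T then (1 : R) else 0 := by
          simp [prod_sub]
      _ = _ := by simp only [prod_boole, biUnion_subset, id]
  calc ∑ T ∈ s with ∀ f ∈ F, ¬ f ⊆ T, g T
      = ∑ T ∈ s, (if ∀ f ∈ F, ¬ f ⊆ T then 1 else 0) * g T := by
        simp_rw [sum_filter, boole_mul]
    _ = ∑ T ∈ s, ∑ I ∈ F.powerset,
          (-1) ^ #I * ((if I.biUnion id ⊆ T then 1 else 0) * g T) := by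
        simp_rw [hind, sum_mul, mul_assoc]
    _ = _ := by
        rw [sum_comm]
        simp_rw [← mul_sum, boole_mul, sum_filter]

theorem Finset.two_le_card_union {α : Type*} [DecidableEq α] {f g : Finset α}
    (hf : f.Nonempty) (hg : g.Nonempty) (hfg : f ≠ g) : 2 ≤ #(f ∪ g) := by
  by_contra! h
  have hsub := card_le_one.1 (Nat.le_of_lt_succ h)
  obtain ⟨a, ha⟩ := hf
  obtain ⟨b, hb⟩ := hg
  refine hfg (ext fun x => ⟨fun hx => ?_, fun hx => ?_⟩)
  · rwa [hsub x (mem_union_left _ hx) b (mem_union_right _ hb)]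
  · rwa [hsub x (mem_union_right _ hx) a (mem_union_left _ ha)]

/-- For `m` distinct nonempty sets `F` and `0 ≤ x ≤ 1`, this bounds `∑ I ⊆ F, x ^ #(⋃ I)`:
the union is nonempty when `I` is, and has at least two points when `I` has two members. -/
noncomputable def pinBound (m : ℕ) (x : ℝ) : ℝ := 1 + m * x + (2 ^ m - 1 - m) * x ^ 2

theorem pinBound_nonneg {x : ℝ} (hx : 0 ≤ x) (m : ℕ) : 0 ≤ pinBound m x := by
  have : (m : ℝ) + 1 ≤ 2 ^ m := by exact_mod_cast Nat.lt_two_pow_self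
  unfold pinBound
  have : 0 ≤ ((2 : ℝ) ^ m - 1 - m) * x ^ 2 := mul_nonneg (by linarith) (sq_nonneg x)
  positivity

theorem pinBound_mono {x : ℝ} (hx : 0 ≤ x) : Monotone (pinBound · x) := by
  refine monotone_nat_of_le_succ fun m => ?_
  have : (1 : ℝ) ≤ 2 ^ m := one_le_pow₀ one_le_two
  have : 0 ≤ ((2 : ℝ) ^ m - 1) * x ^ 2 := mul_nonneg (by linarith) (sq_nonneg x)
  simp only [pinBound, Nat.cast_succ, pow_succ]
  nlinarith

theorem sum_powerset_pow_card_biUnion_le {α : Type*} [DecidableEq α] {F : Finset (Finset α)}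
    (hF : ∀ f ∈ F, f.Nonempty) {x : ℝ} (hx0 : 0 ≤ x) (hx1 : x ≤ 1) :
    ∑ I ∈ F.powerset, x ^ #(I.biUnion id) ≤ pinBound #F x := by
  induction F using Finset.induction_on with
  | empty => simp [pinBound]
  | insert f F hf ih =>
    have hF' : ∀ g ∈ F, g.Nonempty := fun g hg => hF g (mem_insert_of_mem hg)
    have hterm : ∀ I ∈ F.powerset,
        x ^ #((insert f I).biUnion id) ≤ x ^ 2 + if I = ∅ then x - x ^ 2 else 0 := by
      intro I hI
      split_ifs with hI0
      · subst hI0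
        simpa using pow_le_of_le_one hx0 hx1 (hF f (mem_insert_self f F)).card_pos.ne'
      · obtain ⟨g, hg⟩ := nonempty_iff_ne_empty.2 hI0
        have hgF : g ∈ F := mem_powerset.1 hI hg
        have hfg : f ≠ g := fun h => hf (h ▸ hgF)
        have hcard : 2 ≤ #((insert f I).biUnion id) :=
          (two_le_card_union (hF f (mem_insert_self f F)) (hF' g hgF) hfg).trans <|
            card_le_card <| union_subset (subset_biUnion_of_mem id (mem_insert_self f I))
              (subset_biUnion_of_mem id (mem_insert_of_mem hg))
        simpa using pow_le_pow_of_le_one hx0 hx1 hcard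
    calc ∑ I ∈ (insert f F).powerset, x ^ #(I.biUnion id)
        = ∑ I ∈ F.powerset, x ^ #(I.biUnion id) +
            ∑ I ∈ F.powerset, x ^ #((insert f I).biUnion id) := sum_powerset_insert hf _
      _ ≤ pinBound #F x + ∑ I ∈ F.powerset, (x ^ 2 + if I = ∅ then x - x ^ 2 else 0) :=
          add_le_add (ih hF') (sum_le_sum hterm)
      _ = pinBound #(insert f F) x := by
          rw [sum_add_distrib, sum_const, card_powerset, sum_ite_eq' _ _ (fun _ => x - x ^ 2),
            if_pos (empty_mem_powerset F), card_insert_of_notMem hf]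
          simp only [pinBound, nsmul_eq_mul, Nat.cast_pow, Nat.cast_ofNat, Nat.cast_succ, pow_succ]
          ring

theorem Nat.add_two_le_two_pow {k : ℕ} (hk : 2 ≤ k) : k + 2 ≤ 2 ^ k := by
  induction k, hk using Nat.le_induction with
  | base => norm_num
  | succ k _ ih => rw [pow_succ]; omega

theorem two_mul_inv_two_pow_le_one {Δ : ℕ} (hΔ : 1 ≤ Δ) :
    2 * ((2 : ℝ) ^ Δ)⁻¹ ≤ 1 := by
  rw [← div_eq_mul_inv, div_le_one (by positivity)]
  exact le_self_pow₀ one_le_two (by omega)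

theorem pinBound_pred_mul_le_two {Δ : ℕ} (hΔ : 3 ≤ Δ) :
    pinBound (Δ - 1) (2 * (2 ^ Δ)⁻¹) * (1 + 2 * (2 ^ Δ)⁻¹) ≤ 2 := by
  obtain ⟨k, rfl⟩ : ∃ k, Δ = k + 1 := ⟨Δ - 1, by omega⟩
  have hy : (k : ℝ) + 2 ≤ 2 ^ k := by exact_mod_cast Nat.add_two_le_two_pow (by omega : 2 ≤ k)
  have hx : 2 * ((2 : ℝ) ^ (k + 1))⁻¹ = ((2 : ℝ) ^ k)⁻¹ := by rw [pow_succ]; field_simp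
  rw [Nat.add_sub_cancel, hx, pinBound]
  have hpos : (0 : ℝ) < 2 ^ k := by positivity
  field_simp
  generalize (2 : ℝ) ^ k = y at *
  nlinarith [mul_le_mul_of_nonneg_left hy (sq_nonneg y)]

theorem inv_two_pow_mul_pinBound_lt_one {Δ : ℕ} (hΔ : 3 ≤ Δ) :
    (2 ^ Δ)⁻¹ * pinBound Δ (2 * (2 ^ Δ)⁻¹) < 1 := by
  obtain ⟨k, rfl⟩ : ∃ k, Δ = k + 1 := ⟨Δ - 1, by omega⟩
  have hy : (k : ℝ) + 2 ≤ 2 ^ k := by exact_mod_cast Nat.add_two_le_two_pow (by omega : 2 ≤ k)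
  have hx : 2 * ((2 : ℝ) ^ (k + 1))⁻¹ = ((2 : ℝ) ^ k)⁻¹ := by rw [pow_succ]; field_simp
  rw [hx, pinBound]
  have hpos : (0 : ℝ) < 2 ^ k := by positivity
  push_cast
  rw [pow_succ]
  field_simp
  generalize (2 : ℝ) ^ k = y at *
  nlinarith [mul_le_mul_of_nonneg_left hy hpos.le]

section Hypergraph

variable {V : Type*} [DecidableEq V]

/-- The independence polynomial of the hypergraph `E` on `A` with the vertices of `B` pinned:
the sum of `w ^ #T` over the `T ⊆ A` such that `B ∪ T` contains no edge. -/
noncomputable def pinnedIndepPoly (E : Finset (Finset V)) (w : ℂ) (A B : Finset V) : ℂ :=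
  ∑ T ∈ A.powerset with ∀ e ∈ E, ¬ e ⊆ B ∪ T, w ^ #T

def edgeDegree (E : Finset (Finset V)) (v : V) : ℕ := #{e ∈ E | v ∈ e}

def edgeDegreeIn (E : Finset (Finset V)) (U : Finset V) (v : V) : ℕ :=
  #{e ∈ E | v ∈ e ∧ e ⊆ U}

/-- What remains of the edges through `v` lying in `A ∪ B` once `v` and `B` are pinned. -/
def pinnedLink (E : Finset (Finset V)) (A B : Finset V) (v : V) : Finset (Finset V) :=
  {e ∈ E | v ∈ e ∧ e ⊆ A ∪ B}.image (· \ insert v B)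

variable {E : Finset (Finset V)} {w : ℂ} {A B U : Finset V} {v : V}

theorem edgeDegreeIn_mono {U' : Finset V} (h : U ⊆ U') :
    edgeDegreeIn E U v ≤ edgeDegreeIn E U' v :=
  card_le_card <| monotone_filter_right _ fun _ _ he => ⟨he.1, he.2.trans h⟩

theorem edgeDegreeIn_le_edgeDegree : edgeDegreeIn E U v ≤ edgeDegree E v :=
  card_le_card <| monotone_filter_right _ fun _ _ he => he.1

theorem edgeDegreeIn_lt_edgeDegree {e : Finset V} (he : e ∈ E) (hv : v ∈ e) (hU : ¬ e ⊆ U) :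
    edgeDegreeIn E U v < edgeDegree E v := by
  refine card_lt_card <| (ssubset_iff_of_subset <| monotone_filter_right _ fun _ _ h => h.1).2
    ⟨e, mem_filter.2 ⟨he, hv⟩, fun h => hU (mem_filter.1 h).2.2⟩

theorem pinnedIndepPoly_eq_zero {e : Finset V} (he : e ∈ E) (hB : e ⊆ B) :
    pinnedIndepPoly E w A B = 0 :=
  sum_eq_zero fun _ hT => absurd (hB.trans subset_union_left) ((mem_filter.1 hT).2 e he)

theorem pinnedIndepPoly_empty (hB : ∀ e ∈ E, ¬ e ⊆ B) : pinnedIndepPoly E w ∅ B = 1 := by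
  simp only [pinnedIndepPoly, powerset_empty, filter_singleton, union_empty, if_pos hB,
    sum_singleton, card_empty, pow_zero]

theorem pinnedIndepPoly_eq_erase_add_pin (hv : v ∈ A) :
    pinnedIndepPoly E w A B =
      pinnedIndepPoly E w (A.erase v) B + w * pinnedIndepPoly E w (A.erase v) (insert v B) := by
  unfold pinnedIndepPoly
  rw [← insert_erase hv, sum_filter, sum_powerset_insert (notMem_erase v A),
    erase_insert_eq_erase, erase_idem, sum_filter, sum_filter, mul_sum]
  congr 1
  refine sum_congr rfl fun T hT => ?_
  have hvT : v ∉ T := fun h => notMem_erase v A (mem_powerset.1 hT h)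
  simp only [union_insert, insert_union, card_insert_of_notMem hvT, pow_succ']
  split_ifs <;> simp

theorem mul_norm_pinnedIndepPoly_erase_le (hv : v ∈ A) {P : ℝ}
    (hP : ‖pinnedIndepPoly E w (A.erase v) (insert v B)‖ ≤
      P * ‖pinnedIndepPoly E w (A.erase v) B‖) :
    (1 - ‖w‖ * P) * ‖pinnedIndepPoly E w (A.erase v) B‖ ≤
      ‖pinnedIndepPoly E w A B‖ := by
  rw [pinnedIndepPoly_eq_erase_add_pin hv]
  have h := norm_sub_norm_le (pinnedIndepPoly E w (A.erase v) B)
    (-(w * pinnedIndepPoly E w (A.erase v) (insert v B)))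
  rw [sub_neg_eq_add, norm_neg, norm_mul] at h
  nlinarith [mul_le_mul_of_nonneg_left hP (norm_nonneg w)]

theorem subset_erase_of_mem_pinnedLink {f : Finset V} (hf : f ∈ pinnedLink E A B v) :
    f ⊆ A.erase v := by
  simp only [pinnedLink, mem_image, mem_filter] at hf
  obtain ⟨e, ⟨-, -, heAB⟩, rfl⟩ := hf
  intro x hx
  simp only [mem_sdiff, mem_insert, not_or] at hx
  exact mem_erase.2 ⟨hx.2.1, (mem_union.1 (heAB hx.1)).resolve_right hx.2.2⟩

theorem edgeDegreeIn_lt_edgeDegree_of_mem_pinnedLink {f : Finset V} {y : V}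
    (hf : f ∈ pinnedLink E A B v) (hy : y ∈ f) (hvU : v ∉ U) :
    edgeDegreeIn E U y < edgeDegree E y := by
  simp only [pinnedLink, mem_image, mem_filter] at hf
  obtain ⟨e, ⟨he, hve, -⟩, rfl⟩ := hf
  exact edgeDegreeIn_lt_edgeDegree he (mem_sdiff.1 hy).1 fun h => hvU (h hve)

theorem card_le_one_of_mem_pinnedLink (hE : ∀ e ∈ E, #e ≤ 2) {f : Finset V}
    (hf : f ∈ pinnedLink E A B v) : #f ≤ 1 := by
  simp only [pinnedLink, mem_image, mem_filter] at hf
  obtain ⟨e, ⟨he, hve, -⟩, rfl⟩ := hf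
  have hsub : e \ insert v B ⊆ e.erase v := fun x hx => by
    simp only [mem_sdiff, mem_insert, not_or] at hx
    exact mem_erase.2 ⟨hx.2.1, hx.1⟩
  have := card_erase_of_mem hve
  have := hE e he
  have := card_le_card hsub
  omega

theorem nonempty_of_mem_pinnedLink (hB : ∀ e ∈ E, ¬ e ⊆ insert v B) {f : Finset V}
    (hf : f ∈ pinnedLink E A B v) : f.Nonempty := by
  simp only [pinnedLink, mem_image, mem_filter] at hf
  obtain ⟨e, ⟨he, -, -⟩, rfl⟩ := hf
  exact sdiff_nonempty.2 (hB e he)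

theorem card_pinnedLink_le : #(pinnedLink E A B v) ≤ edgeDegreeIn E (A ∪ B) v :=
  card_image_le

theorem sum_filter_superset_eq_pow_mul_pinnedIndepPoly {S : Finset V} (hS : S ⊆ A) :
    ∑ T ∈ A.powerset with (∀ e ∈ E, ¬ e ⊆ B ∪ T) ∧ S ⊆ T, w ^ #T =
      w ^ #S * pinnedIndepPoly E w (A \ S) (B ∪ S) := by
  rw [pinnedIndepPoly, mul_sum]
  refine sum_nbij' (· \ S) (· ∪ S) ?_ ?_ ?_ ?_ ?_
  · simp only [mem_filter, mem_powerset, and_imp]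
    intro T hTA hT hST
    refine ⟨sdiff_subset_sdiff hTA le_rfl, ?_⟩
    rwa [union_assoc, union_sdiff_of_subset hST]
  · simp only [mem_filter, mem_powerset, and_imp]
    intro T hTA hT
    refine ⟨union_subset (hTA.trans sdiff_subset) hS, ?_, subset_union_right⟩
    rwa [union_comm T, ← union_assoc]
  · intro T hT
    exact sdiff_union_of_subset (mem_filter.1 hT).2.2
  · intro T hT
    exact union_sdiff_cancel_right (disjoint_of_subset_left (mem_powerset.1 (mem_filter.1 hT).1)
      sdiff_disjoint)
  · intro T hT
    rw [← pow_add, add_comm, card_sdiff_add_card_eq_card (mem_filter.1 hT).2.2]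

theorem forall_not_subset_insert_union_iff {T : Finset V} (hv : v ∈ A) (hT : T ⊆ A) :
    (∀ e ∈ E, ¬ e ⊆ insert v B ∪ T) ↔
      (∀ e ∈ E, ¬ e ⊆ B ∪ T) ∧ ∀ f ∈ pinnedLink E A B v, ¬ f ⊆ T := by
  simp only [pinnedLink, mem_image, mem_filter, forall_exists_index, and_imp]
  refine ⟨fun h => ⟨fun e he heT => h e he (heT.trans ?_), ?_⟩, ?_⟩
  · exact union_subset_union_left (subset_insert v B)
  · rintro _ e he - - rfl heT
    exact h e he (sdiff_le_iff.1 heT)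
  · rintro ⟨hB, hL⟩ e he heT
    by_cases hve : v ∈ e
    · refine hL _ e he hve ?_ rfl (sdiff_le_iff.2 heT)
      exact heT.trans (union_subset (insert_subset (mem_union_left _ hv) subset_union_right)
        (hT.trans subset_union_left))
    · exact hB e he fun x hx => by simpa [hve, ne_of_mem_of_not_mem hx hve] using heT hx

theorem pinnedIndepPoly_pin_eq_sum (hv : v ∈ A) :
    pinnedIndepPoly E w (A.erase v) (insert v B) =
      ∑ I ∈ (pinnedLink E A B v).powerset, (-1) ^ #I * (w ^ #(I.biUnion id) *
        pinnedIndepPoly E w (A.erase v \ I.biUnion id) (B ∪ I.biUnion id)) := by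
  have hsplit : {T ∈ (A.erase v).powerset | ∀ e ∈ E, ¬ e ⊆ insert v B ∪ T} =
      {T ∈ {T ∈ (A.erase v).powerset | ∀ e ∈ E, ¬ e ⊆ B ∪ T} |
        ∀ f ∈ pinnedLink E A B v, ¬ f ⊆ T} := by
    rw [filter_filter]
    exact filter_congr fun T hT => forall_not_subset_insert_union_iff hv
      ((mem_powerset.1 hT).trans (erase_subset v A))
  rw [pinnedIndepPoly, hsplit, sum_filter_forall_not_subset]
  refine sum_congr rfl fun I hI => ?_
  rw [filter_filter, sum_filter_superset_eq_pow_mul_pinnedIndepPoly]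
  exact biUnion_subset.2 fun f hf => subset_erase_of_mem_pinnedLink (mem_powerset.1 hI hf)

theorem pinnedIndepPoly_pin_eq_sdiff (hv : v ∈ A) (hB : ∀ e ∈ E, ¬ e ⊆ insert v B)
    (hL : ∀ f ∈ pinnedLink E A B v, #f ≤ 1) :
    pinnedIndepPoly E w (A.erase v) (insert v B) =
      pinnedIndepPoly E w (A.erase v \ (pinnedLink E A B v).biUnion id) B := by
  have hsingle : ∀ f ∈ pinnedLink E A B v, ∀ T : Finset V, ¬ f ⊆ T ↔ Disjoint T f := by
    intro f hf T
    obtain ⟨y, rfl⟩ :=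
      card_eq_one.1 ((hL f hf).antisymm (nonempty_of_mem_pinnedLink hB hf).card_pos)
    simp
  unfold pinnedIndepPoly
  congr 1
  ext T
  simp only [mem_filter, mem_powerset, subset_sdiff, disjoint_biUnion_right, id]
  constructor
  · rintro ⟨hT, hTB⟩
    obtain ⟨hB', hL'⟩ :=
      (forall_not_subset_insert_union_iff hv (hT.trans (erase_subset v A))).1 hTB
    exact ⟨⟨hT, fun f hf => (hsingle f hf T).1 (hL' f hf)⟩, hB'⟩
  · rintro ⟨⟨hT, hTL⟩, hB'⟩
    exact ⟨hT, (forall_not_subset_insert_union_iff hv (hT.trans (erase_subset v A))).2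
      ⟨hB', fun f hf => (hsingle f hf T).2 (hTL f hf)⟩⟩

section PinBound

def PinBound (E : Finset (Finset V)) (w : ℂ) (d : ℕ) (C : ℝ) (N : ℕ) : Prop :=
  ∀ A B : Finset V, #A ≤ N → Disjoint A B → (∀ e ∈ E, ¬ e ⊆ B) →
    ∀ v ∈ A, edgeDegreeIn E (A ∪ B) v < d →
      ‖pinnedIndepPoly E w (A.erase v) (insert v B)‖ ≤ C * ‖pinnedIndepPoly E w A B‖

variable {d N : ℕ} {C : ℝ}

theorem PinBound.norm_sdiff_union_le (h : PinBound E w d C N) (hC : 0 ≤ C) {S : Finset V} :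
    ∀ {A B : Finset V}, #A ≤ N → Disjoint A B → S ⊆ A →
      (∀ x ∈ S, edgeDegreeIn E (A ∪ B) x < d) →
      ‖pinnedIndepPoly E w (A \ S) (B ∪ S)‖ ≤ C ^ #S * ‖pinnedIndepPoly E w A B‖ := by
  induction S using Finset.induction_on with
  | empty => simp
  | insert x S hxS ih =>
    intro A B hA hAB hSA hS
    by_cases hB : ∀ e ∈ E, ¬ e ⊆ B
    swap
    · simp only [not_forall, not_not] at hB
      obtain ⟨e, he, heB⟩ := hB
      rw [pinnedIndepPoly_eq_zero he (heB.trans subset_union_left), norm_zero]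
      positivity
    have hxA : x ∈ A := hSA (mem_insert_self x S)
    have hunion : A.erase x ∪ insert x B = A ∪ B := by
      rw [union_insert, ← insert_union, insert_erase hxA]
    have hstep := h A B hA hAB hB x hxA (hS x (mem_insert_self x S))
    have hrest := ih (A := A.erase x) (B := insert x B) ((card_erase_le).trans hA)
      (disjoint_insert_right.2
        ⟨notMem_erase x A, disjoint_of_subset_left (erase_subset x A) hAB⟩)
      (fun y hy => mem_erase.2 ⟨ne_of_mem_of_not_mem hy hxS, hSA (mem_insert_of_mem hy)⟩)
      (fun y hy => hunion ▸ hS y (mem_insert_of_mem hy))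
    rw [sdiff_insert, ← erase_sdiff_comm, union_insert, ← insert_union,
      card_insert_of_notMem hxS, pow_succ, mul_assoc]
    exact hrest.trans (mul_le_mul_of_nonneg_left hstep (by positivity))

variable {Δ : ℕ}

theorem PinBound.norm_sdiff_union_le_of_subset_pinnedLink (hdeg : ∀ y, edgeDegree E y ≤ Δ)
    (h : PinBound E w Δ C N) (hC : 0 ≤ C) (hA : #A ≤ N + 1) (hAB : Disjoint A B) (hv : v ∈ A)
    {U : Finset V} (hU : U ⊆ (pinnedLink E A B v).biUnion id) :
    ‖pinnedIndepPoly E w (A.erase v \ U) (B ∪ U)‖ ≤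
      C ^ #U * ‖pinnedIndepPoly E w (A.erase v) B‖ := by
  refine h.norm_sdiff_union_le hC (card_erase_of_mem hv ▸ by omega)
    (disjoint_of_subset_left (erase_subset v A) hAB) (hU.trans ?_) fun y hy => ?_
  · exact biUnion_subset.2 fun f hf => subset_erase_of_mem_pinnedLink hf
  · obtain ⟨f, hf, hyf⟩ := mem_biUnion.1 (hU hy)
    refine (edgeDegreeIn_lt_edgeDegree_of_mem_pinnedLink hf hyf ?_).trans_le (hdeg y)
    simp [disjoint_left.1 hAB hv]

theorem norm_pin_le_pinBound_mul (hdeg : ∀ y, edgeDegree E y ≤ Δ) (h : PinBound E w Δ C N)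
    (hC : 0 ≤ C) {x : ℝ} (hwx : ‖w‖ * C ≤ x) (hx1 : x ≤ 1) (hA : #A ≤ N + 1)
    (hAB : Disjoint A B) (hv : v ∈ A) {m : ℕ} (hm : edgeDegreeIn E (A ∪ B) v ≤ m) :
    ‖pinnedIndepPoly E w (A.erase v) (insert v B)‖ ≤
      pinBound m x * ‖pinnedIndepPoly E w (A.erase v) B‖ := by
  have hx0 : 0 ≤ x := (mul_nonneg (norm_nonneg w) hC).trans hwx
  by_cases hB : ∀ e ∈ E, ¬ e ⊆ insert v B
  swap
  · simp only [not_forall, not_not] at hB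
    obtain ⟨e, he, heB⟩ := hB
    rw [pinnedIndepPoly_eq_zero he heB, norm_zero]
    exact mul_nonneg (pinBound_nonneg hx0 m) (norm_nonneg _)
  set L := pinnedLink E A B v
  have hterm : ∀ I ∈ L.powerset, ‖(-1) ^ #I * (w ^ #(I.biUnion id) *
      pinnedIndepPoly E w (A.erase v \ I.biUnion id) (B ∪ I.biUnion id))‖ ≤
        x ^ #(I.biUnion id) * ‖pinnedIndepPoly E w (A.erase v) B‖ := by
    intro I hI
    have hchain := h.norm_sdiff_union_le_of_subset_pinnedLink hdeg hC hA hAB hv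
      (biUnion_subset_biUnion_of_subset_left id (mem_powerset.1 hI))
    rw [norm_mul, norm_pow, norm_neg, norm_one, one_pow, one_mul, norm_mul, norm_pow]
    calc ‖w‖ ^ #(I.biUnion id) *
          ‖pinnedIndepPoly E w (A.erase v \ I.biUnion id) (B ∪ I.biUnion id)‖
        ≤ ‖w‖ ^ #(I.biUnion id) *
          (C ^ #(I.biUnion id) * ‖pinnedIndepPoly E w (A.erase v) B‖) := by gcongr
      _ = (‖w‖ * C) ^ #(I.biUnion id) * ‖pinnedIndepPoly E w (A.erase v) B‖ := by ring
      _ ≤ x ^ #(I.biUnion id) * ‖pinnedIndepPoly E w (A.erase v) B‖ := by gcongr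
  rw [pinnedIndepPoly_pin_eq_sum hv]
  calc _ ≤ ∑ I ∈ L.powerset, x ^ #(I.biUnion id) * ‖pinnedIndepPoly E w (A.erase v) B‖ :=
        (norm_sum_le _ _).trans (sum_le_sum hterm)
    _ ≤ pinBound m x * ‖pinnedIndepPoly E w (A.erase v) B‖ := by
        rw [← sum_mul]
        gcongr
        exact (sum_powerset_pow_card_biUnion_le (fun f => nonempty_of_mem_pinnedLink hB)
          hx0 hx1).trans (pinBound_mono hx0 (card_pinnedLink_le.trans hm))

theorem pinBound_two_of_three_le (hΔ : 3 ≤ Δ) (hdeg : ∀ y, edgeDegree E y ≤ Δ)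
    (hw : ‖w‖ ≤ (2 ^ Δ)⁻¹) (N : ℕ) : PinBound E w Δ 2 N := by
  have hx1 := two_mul_inv_two_pow_le_one (by omega : 1 ≤ Δ)
  induction N with
  | zero =>
    intro A B hA _ _ v hv
    simp [card_eq_zero.1 (Nat.le_zero.1 hA)] at hv
  | succ N ih =>
    intro A B hA hAB _ v hv hvd
    set P := pinBound (Δ - 1) (2 * (2 ^ Δ)⁻¹)
    have hpin := norm_pin_le_pinBound_mul hdeg ih zero_le_two (by linarith) hx1 hA hAB hv
      (m := Δ - 1) (by omega)
    have hlow := mul_norm_pinnedIndepPoly_erase_le hv hpin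
    have hP : P ≤ 2 * (1 - ‖w‖ * P) := by
      have := pinBound_pred_mul_le_two hΔ
      have := pinBound_nonneg (by positivity : (0 : ℝ) ≤ 2 * (2 ^ Δ)⁻¹) (Δ - 1)
      nlinarith
    calc _ ≤ P * ‖pinnedIndepPoly E w (A.erase v) B‖ := hpin
      _ ≤ 2 * ((1 - ‖w‖ * P) * ‖pinnedIndepPoly E w (A.erase v) B‖) := by
          rw [← mul_assoc]; gcongr
      _ ≤ 2 * ‖pinnedIndepPoly E w A B‖ := by gcongr

theorem pinnedIndepPoly_ne_zero_of_three_le (hΔ : 3 ≤ Δ) (hdeg : ∀ y, edgeDegree E y ≤ Δ)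
    (hw : ‖w‖ ≤ (2 ^ Δ)⁻¹) (A : Finset V) :
    ∀ {B : Finset V}, Disjoint A B → (∀ e ∈ E, ¬ e ⊆ B) →
      pinnedIndepPoly E w A B ≠ 0 := by
  have hx1 := two_mul_inv_two_pow_le_one (by omega : 1 ≤ Δ)
  induction A using Finset.induction_on with
  | empty => intro B _ hB; simp [pinnedIndepPoly_empty hB]
  | insert v A hvA ih =>
    intro B hAB hB
    set P := pinBound Δ (2 * (2 ^ Δ)⁻¹)
    have hpin := norm_pin_le_pinBound_mul hdeg (pinBound_two_of_three_le hΔ hdeg hw #A)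
      zero_le_two (by linarith) hx1 (card_insert_le v A) hAB (mem_insert_self v A) (m := Δ)
      (edgeDegreeIn_le_edgeDegree.trans (hdeg v))
    have hlow := mul_norm_pinnedIndepPoly_erase_le (mem_insert_self v A) hpin
    rw [erase_insert hvA] at hlow
    have hwP : ‖w‖ * P < 1 := by
      have := inv_two_pow_mul_pinBound_lt_one hΔ
      have := pinBound_nonneg (by positivity : (0 : ℝ) ≤ 2 * (2 ^ Δ)⁻¹) Δ
      nlinarith
    have hA := norm_pos_iff.2 (ih (disjoint_of_subset_left (subset_insert v A) hAB) hB)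
    rw [← norm_pos_iff]
    nlinarith

end PinBound

section MaxDegreeTwo

def DeleteBound (E : Finset (Finset V)) (w : ℂ) (C : ℝ) (N : ℕ) : Prop :=
  ∀ A : Finset V, #A ≤ N → ∀ v ∈ A, edgeDegreeIn E A v ≤ 1 →
    ‖pinnedIndepPoly E w (A.erase v) ∅‖ ≤ C * ‖pinnedIndepPoly E w A ∅‖

variable {N : ℕ} {C : ℝ}

theorem DeleteBound.norm_sdiff_le (h : DeleteBound E w C N) (hC : 0 ≤ C) {S : Finset V} :
    ∀ {A : Finset V}, #A ≤ N → S ⊆ A → (∀ x ∈ S, edgeDegreeIn E A x ≤ 1) →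
      ‖pinnedIndepPoly E w (A \ S) ∅‖ ≤ C ^ #S * ‖pinnedIndepPoly E w A ∅‖ := by
  induction S using Finset.induction_on with
  | empty => simp
  | insert x S hxS ih =>
    intro A hA hSA hS
    have hxA : x ∈ A := hSA (mem_insert_self x S)
    have hstep := h A hA x hxA (hS x (mem_insert_self x S))
    have hrest := ih (A := A.erase x) ((card_erase_le).trans hA)
      (fun y hy => mem_erase.2 ⟨ne_of_mem_of_not_mem hy hxS, hSA (mem_insert_of_mem hy)⟩)
      (fun y hy => (edgeDegreeIn_mono (erase_subset x A)).trans (hS y (mem_insert_of_mem hy)))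
    rw [sdiff_insert, ← erase_sdiff_comm, card_insert_of_notMem hxS, pow_succ, mul_assoc]
    exact hrest.trans (mul_le_mul_of_nonneg_left hstep (by positivity))

theorem norm_pin_le_pow_mul (hsize : ∀ e ∈ E, #e ≤ 2) (hdeg : ∀ y, edgeDegree E y ≤ 2)
    (h : DeleteBound E w C N) (hC : 1 ≤ C) (hA : #A ≤ N + 1) (hv : v ∈ A) :
    ‖pinnedIndepPoly E w (A.erase v) (insert v ∅)‖ ≤
      C ^ edgeDegreeIn E A v * ‖pinnedIndepPoly E w (A.erase v) ∅‖ := by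
  by_cases hB : ∀ e ∈ E, ¬ e ⊆ insert v ∅
  swap
  · simp only [not_forall, not_not] at hB
    obtain ⟨e, he, heB⟩ := hB
    rw [pinnedIndepPoly_eq_zero he heB, norm_zero]
    positivity
  have hL : ∀ f ∈ pinnedLink E A ∅ v, #f ≤ 1 := fun f => card_le_one_of_mem_pinnedLink hsize
  set L := pinnedLink E A ∅ v
  have hLA : L.biUnion id ⊆ A.erase v :=
    biUnion_subset.2 fun f hf => subset_erase_of_mem_pinnedLink hf
  have hdegL : ∀ y ∈ L.biUnion id, edgeDegreeIn E (A.erase v) y ≤ 1 := by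
    intro y hy
    obtain ⟨f, hf, hyf⟩ := mem_biUnion.1 hy
    have := edgeDegreeIn_lt_edgeDegree_of_mem_pinnedLink hf hyf (notMem_erase v A)
    have := hdeg y
    omega
  have hcard : #(L.biUnion id) ≤ edgeDegreeIn E A v := by
    calc #(L.biUnion id) ≤ ∑ f ∈ L, #f := card_biUnion_le
      _ ≤ ∑ _f ∈ L, 1 := sum_le_sum hL
      _ ≤ edgeDegreeIn E A v := by simpa using (card_pinnedLink_le (B := ∅))
  rw [pinnedIndepPoly_pin_eq_sdiff hv hB hL]
  calc _ ≤ C ^ #(L.biUnion id) * ‖pinnedIndepPoly E w (A.erase v) ∅‖ :=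
        h.norm_sdiff_le (by linarith) (card_erase_of_mem hv ▸ by omega) hLA hdegL
    _ ≤ _ := by gcongr

/-- Iterating `c ↦ 1 / (1 - c / 4)` from `1`; it increases to the fixed point `2`. -/
noncomputable def deletionRatio (N : ℕ) : ℝ := 2 * (N + 1) / (N + 2)

theorem one_le_deletionRatio (N : ℕ) : 1 ≤ deletionRatio N := by
  rw [deletionRatio, le_div_iff₀ (by positivity)]
  linarith [N.cast_nonneg (α := ℝ)]

theorem deletionRatio_lt_two (N : ℕ) : deletionRatio N < 2 := by
  rw [deletionRatio, div_lt_iff₀ (by positivity)]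
  linarith

theorem one_sub_deletionRatio_div_four_mul (N : ℕ) :
    (1 - deletionRatio N / 4) * deletionRatio (N + 1) = 1 := by
  rw [deletionRatio, deletionRatio]
  field_simp
  push_cast
  ring

theorem deleteBound_deletionRatio (hsize : ∀ e ∈ E, #e ≤ 2)
    (hdeg : ∀ y, edgeDegree E y ≤ 2) (hw : ‖w‖ ≤ 1 / 4) (N : ℕ) :
    DeleteBound E w (deletionRatio N) N := by
  induction N with
  | zero =>
    intro A hA v hv
    simp [card_eq_zero.1 (Nat.le_zero.1 hA)] at hv
  | succ N ih =>
    intro A hA v hv hvd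
    have hc := one_le_deletionRatio N
    have hpin := (norm_pin_le_pow_mul hsize hdeg ih hc hA hv).trans <|
      mul_le_mul_of_nonneg_right ((pow_le_pow_right₀ hc hvd).trans_eq (pow_one _)) (norm_nonneg _)
    have hlow := mul_norm_pinnedIndepPoly_erase_le hv hpin
    have hwc : 1 - deletionRatio N / 4 ≤ 1 - ‖w‖ * deletionRatio N := by nlinarith
    calc ‖pinnedIndepPoly E w (A.erase v) ∅‖
        = deletionRatio (N + 1) *
            ((1 - deletionRatio N / 4) * ‖pinnedIndepPoly E w (A.erase v) ∅‖) := by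
          rw [← mul_assoc, mul_comm (deletionRatio _), one_sub_deletionRatio_div_four_mul,
            one_mul]
      _ ≤ deletionRatio (N + 1) *
            ((1 - ‖w‖ * deletionRatio N) * ‖pinnedIndepPoly E w (A.erase v) ∅‖) := by
          have := one_le_deletionRatio (N + 1)
          gcongr
      _ ≤ _ := by
          have := one_le_deletionRatio (N + 1)
          gcongr

theorem pinnedIndepPoly_ne_zero_of_two (hsize : ∀ e ∈ E, #e ≤ 2)
    (hdeg : ∀ y, edgeDegree E y ≤ 2) (hE : ∀ e ∈ E, ¬ e ⊆ ∅) (hw : ‖w‖ ≤ 1 / 4)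
    (A : Finset V) :
    pinnedIndepPoly E w A ∅ ≠ 0 := by
  induction A using Finset.induction_on with
  | empty => simp [pinnedIndepPoly_empty hE]
  | insert v A hvA ih =>
    set c := deletionRatio #A
    have hc := one_le_deletionRatio #A
    have hpin := (norm_pin_le_pow_mul hsize hdeg (deleteBound_deletionRatio hsize hdeg hw #A) hc
      (card_insert_le v A) (mem_insert_self v A)).trans <|
      mul_le_mul_of_nonneg_right (pow_le_pow_right₀ hc
        (edgeDegreeIn_le_edgeDegree.trans (hdeg v))) (norm_nonneg _)
    have hlow := mul_norm_pinnedIndepPoly_erase_le (mem_insert_self v A) hpin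
    rw [erase_insert hvA] at hlow
    have hwc : ‖w‖ * c ^ 2 < 1 := by
      have := deletionRatio_lt_two #A
      nlinarith [norm_nonneg w]
    have hA := norm_pos_iff.2 ih
    rw [← norm_pos_iff]
    nlinarith

end MaxDegreeTwo

end Hypergraph

section Graph

variable {V : Type*} [Fintype V] [DecidableEq V] (G : SimpleGraph V) [DecidableRel G.Adj]

def SimpleGraph.neighborhoods : Finset (Finset V) := univ.image fun u => G.neighborFinset u

theorem totalDominationPoly_eq_pow_mul_pinnedIndepPoly {z : ℂ} (hz : z ≠ 0) :
    totalDominationPoly G z =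
      z ^ Fintype.card V * pinnedIndepPoly G.neighborhoods z⁻¹ univ ∅ := by
  have hdom (S : Finset V) :
      (∀ u : V, ∃ v ∈ S, G.Adj u v) ↔ ∀ e ∈ G.neighborhoods, ¬ e ⊆ ∅ ∪ Sᶜ := by
    simp [SimpleGraph.neighborhoods, not_subset, and_comm]
  rw [totalDominationPoly, pinnedIndepPoly, powerset_univ, mul_sum]
  refine sum_nbij' (fun S => Sᶜ) (fun T => Tᶜ) (fun S hS => ?_) (fun T hT => ?_)
    (fun S _ => compl_compl S) (fun T _ => compl_compl T) ?_
  · simpa [hdom] using hS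
  · simpa [hdom] using hT
  · intro S _
    rw [inv_pow, card_compl, ← div_eq_mul_inv, eq_div_iff (pow_ne_zero _ hz), ← pow_add,
      Nat.add_sub_cancel' (card_le_univ S)]

theorem SimpleGraph.edgeDegree_neighborhoods_le (x : V) :
    edgeDegree G.neighborhoods x ≤ G.maxDegree := by
  have hsub : {e ∈ G.neighborhoods | x ∈ e} ⊆
      (G.neighborFinset x).image fun u => G.neighborFinset u := by
    intro e he
    simp only [neighborhoods, mem_filter, mem_image, mem_univ, true_and] at he
    obtain ⟨⟨u, rfl⟩, hx⟩ := he
    exact mem_image_of_mem _ ((mem_neighborFinset G x u).2 ((mem_neighborFinset G u x).1 hx).symm)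
  exact (card_le_card hsub).trans (card_image_le.trans (G.degree_le_maxDegree x))

theorem SimpleGraph.card_le_maxDegree_of_mem_neighborhoods {e : Finset V}
    (he : e ∈ G.neighborhoods) : #e ≤ G.maxDegree := by
  obtain ⟨u, -, rfl⟩ := mem_image.1 he
  exact G.degree_le_maxDegree u

theorem SimpleGraph.nonempty_of_mem_neighborhoods (hiso : ∀ v : V, ∃ u : V, G.Adj v u)
    {e : Finset V} (he : e ∈ G.neighborhoods) : e.Nonempty := by
  obtain ⟨u, -, rfl⟩ := mem_image.1 he
  obtain ⟨v, huv⟩ := hiso u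
  exact ⟨v, (mem_neighborFinset G u v).2 huv⟩

theorem totalDominationPoly_eq_pow_of_maxDegree_le_one (hiso : ∀ v : V, ∃ u : V, G.Adj v u)
    (hΔ : G.maxDegree ≤ 1) (z : ℂ) : totalDominationPoly G z = z ^ Fintype.card V := by
  have htd : (univ : Finset (Finset V)).filter (fun S => ∀ u : V, ∃ v ∈ S, G.Adj u v) =
      {univ} := by
    ext S
    simp only [mem_filter, mem_univ, true_and, mem_singleton]
    refine ⟨fun hS => eq_univ_of_forall fun v => ?_, fun hS u => ?_⟩
    · obtain ⟨u, hvu⟩ := hiso v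
      obtain ⟨y, hyS, huy⟩ := hS u
      have hy := card_le_one.1 ((G.degree_le_maxDegree u).trans hΔ) v
        ((G.mem_neighborFinset u v).2 hvu.symm) y ((G.mem_neighborFinset u y).2 huy)
      exact hy ▸ hyS
    · obtain ⟨v, huv⟩ := hiso u
      exact ⟨v, hS ▸ mem_univ v, huv⟩
  rw [totalDominationPoly, htd, sum_singleton, card_univ]

end Graph

/-- If `G` has no isolated vertices and maximum degree `Δ`, then every complex root `z` of the
total domination polynomial satisfies `|z| < 2^Δ`. -/
theorem totalDominationPoly_roots_abs_lt
    {V : Type} [Fintype V] [DecidableEq V] (G : SimpleGraph V) [DecidableRel G.Adj]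
    (hiso : ∀ v : V, ∃ u : V, G.Adj v u)
    (z : ℂ) (hz : totalDominationPoly G z = 0) :
    ‖z‖ < (2 : ℝ) ^ G.maxDegree := by
  by_contra! hz_large
  have hz0 : z ≠ 0 := by
    rintro rfl
    rw [norm_zero] at hz_large
    exact (pow_pos two_pos _).not_ge hz_large
  rcases le_or_gt G.maxDegree 1 with hΔ | hΔ
  · rw [totalDominationPoly_eq_pow_of_maxDegree_le_one G hiso hΔ] at hz
    exact pow_ne_zero _ hz0 hz
  have hw : ‖z⁻¹‖ ≤ (2 ^ G.maxDegree)⁻¹ := by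
    rw [norm_inv]
    exact inv_anti₀ (by positivity) hz_large
  have hE : ∀ e ∈ G.neighborhoods, ¬ e ⊆ ∅ := fun e he h =>
    (G.nonempty_of_mem_neighborhoods hiso he).ne_empty (subset_empty.1 h)
  rw [totalDominationPoly_eq_pow_mul_pinnedIndepPoly G hz0] at hz
  refine mul_ne_zero (pow_ne_zero _ hz0) ?_ hz
  rcases (by omega : G.maxDegree = 2 ∨ 3 ≤ G.maxDegree) with h2 | h3
  · rw [h2] at hw
    exact pinnedIndepPoly_ne_zero_of_two
      (fun e he => h2 ▸ G.card_le_maxDegree_of_mem_neighborhoods he)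
      (fun y => h2 ▸ G.edgeDegree_neighborhoods_le y) hE (hw.trans_eq (by norm_num [h2])) univ
  · exact pinnedIndepPoly_ne_zero_of_three_le h3 G.edgeDegree_neighborhoods_le hw univ
      (disjoint_empty_right _) hE
end

section
/- Let H = (V, E) be a finite hypergraph, let λ = (λ_e)_{e ∈ E} be complex numbers, and for each vertex v let u^{(v)} = (u^{(v)}_0, …, u^{(v)}_{d_H(v)}) be complex numbers. Let κ, ρ > 0. Suppose that the base polynomial Ω(H, λ; x) is nonzero whenever |x_v| < κ for all v ∈ V, and that for each vertex v the key polynomial K^{(v)} is either identically zero or nonzero on {z : |z| < ρ}. Then the subgraph counting polynomial Z_W(H, λ, u; x) is either identically zero or nonzero whenever |x_v| < κρ for all v ∈ V. -/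
/-!
Substituting the weights `u` one vertex at a time interpolates between `Ω` and `Z_W`, and each
substitution preserves nonvanishing. At a vertex of degree `d` whose key polynomial has no zero in
the `ρ`-disk, `K(z) = u₀ ∏_{τ ∈ T} (1 + τ z)` with `#T = d` and `|τ| ≤ ρ⁻¹`, so the substitution
turns `∑ Aᵢ xⁱ` into `u₀ ∑ (Aᵢ / C(d, i)) eᵢ(x T)`. This is nonzero for `|x| < κρ` by the
Grace–Walsh–Szegő theorem for the `κ`-disk, which follows by induction on `d` from Laguerre's
theorem on polar derivatives. If instead some key polynomial vanishes identically, all its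
coefficients vanish and so does `Z_W`.
-/

open Finset

/-- The degree of a vertex `v` in a collection `F` of edges of a hypergraph:
the number of edges of `F` containing `v`. -/
def hypDeg {V : Type*} [DecidableEq V] (F : Finset (Finset V)) (v : V) : ℕ :=
  (F.filter (fun e => v ∈ e)).card

/-- Wagner's weighted subgraph counting polynomial
`Z_W(H, λ, u; x) = Σ_{F ⊆ E} λ^F u_{deg F} x^{deg F}`. -/
noncomputable def subgraphCountPoly {V : Type*} [Fintype V] [DecidableEq V]
    (E : Finset (Finset V)) (lam : Finset V → ℂ) (u : V → ℕ → ℂ) (x : V → ℂ) : ℂ :=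
  ∑ F ∈ E.powerset, (∏ e ∈ F, lam e) * (∏ v : V, u v (hypDeg F v)) *
    ∏ v : V, x v ^ hypDeg F v

/-- The base polynomial `Ω(H, λ; x) = Π_{e ∈ E} (1 + λ_e Π_{v ∈ e} x_v)`. -/
noncomputable def basePoly {V : Type*} [DecidableEq V]
    (E : Finset (Finset V)) (lam : Finset V → ℂ) (x : V → ℂ) : ℂ :=
  ∏ e ∈ E, (1 + lam e * ∏ v ∈ e, x v)

/-- The key polynomial of the vertex `v`:
`K^{(v)}(z) = Σ_{i=0}^{d_H(v)} C(d_H(v), i) u^{(v)}_i z^i`. -/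
noncomputable def keyPoly {V : Type*} [DecidableEq V]
    (E : Finset (Finset V)) (u : V → ℕ → ℂ) (v : V) (z : ℂ) : ℂ :=
  ∑ i ∈ Finset.range (hypDeg E v + 1), ((hypDeg E v).choose i : ℂ) * u v i * z ^ i

open Polynomial

namespace Multiset

theorem esymm_cons_succ {R : Type*} [CommSemiring R] (t : R) (s : Multiset R) (i : ℕ) :
    (t ::ₘ s).esymm (i + 1) = s.esymm (i + 1) + t * s.esymm i := by
  simp only [esymm, powersetCard_cons, map_add, sum_add, map_map, Function.comp_def, prod_cons,
    sum_map_mul_left]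

theorem esymm_eq_zero_of_card_lt {R : Type*} [CommSemiring R] {s : Multiset R} {i : ℕ}
    (h : card s < i) : s.esymm i = 0 := by
  simp [esymm, powersetCard_eq_empty i h]

end Multiset

namespace Polynomial

theorem coeff_multiset_prod_one_add_C_mul_X {R : Type*} [CommSemiring R] (s : Multiset R) (i : ℕ) :
    (s.map fun t => 1 + C t * X).prod.coeff i = s.esymm i := by
  induction s using Multiset.induction generalizing i with
  | empty => cases i <;> simp [Multiset.esymm, coeff_one, Multiset.powersetCard_zero_right]
  | cons t s ih =>
    rw [Multiset.map_cons, Multiset.prod_cons, add_mul, one_mul, mul_assoc, coeff_add, coeff_C_mul]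
    cases i with
    | zero => simp [ih, Multiset.esymm]
    | succ i => rw [coeff_X_mul, ih, ih, Multiset.esymm_cons_succ]

theorem eq_C_eval_zero_mul_prod_one_add {K : Type*} [Field K] [IsAlgClosed K] (p : K[X])
    (h0 : p.eval 0 ≠ 0) : p = C (p.eval 0) * (p.roots.map fun ρ => 1 + C (-ρ⁻¹) * X).prod := by
  have hfactor : (p.roots.map (X - C ·)).prod
      = C (p.roots.map (-·)).prod * (p.roots.map fun ρ => 1 + C (-ρ⁻¹) * X).prod := by
    rw [← Multiset.prod_hom _ (C : K →+* K[X]), Multiset.map_map, ← Multiset.prod_map_mul]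
    refine congrArg _ (Multiset.map_congr rfl fun ρ hρ => ?_)
    have hρ0 : ρ ≠ 0 := by
      rintro rfl
      exact h0 (mem_roots'.mp hρ).2
    rw [Function.comp_apply, mul_add, mul_one, ← mul_assoc, ← C_mul, neg_mul_neg,
      mul_inv_cancel₀ hρ0, C_1, one_mul, map_neg, sub_eq_neg_add]
  have hsplit := (IsAlgClosed.splits p).eq_prod_roots
  rw [hfactor, ← mul_assoc, ← C_mul] at hsplit
  have hconst : p.eval 0 = p.leadingCoeff * (p.roots.map (-·)).prod := by
    conv_lhs => rw [hsplit]
    simp [eval_multiset_prod]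
  rwa [hconst]

end Polynomial

theorem Convex.inv_natCast_smul_multiset_sum_mem {E : Type*} [AddCommGroup E] [Module ℝ E]
    {s : Set E} (hs : Convex ℝ s) (h0 : 0 ∈ s) {m : Multiset E} (hm : ∀ x ∈ m, x ∈ s) {n : ℕ}
    (hn : Multiset.card m ≤ n) : (n : ℝ)⁻¹ • m.sum ∈ s := by
  induction m using Multiset.induction generalizing n with
  | empty => simpa using h0
  | cons a m ih =>
    rw [Multiset.card_cons] at hn
    obtain ⟨k, rfl⟩ : ∃ k, n = k + 1 := ⟨n - 1, by omega⟩
    have hmk : Multiset.card m ≤ k := by omega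
    have hms := ih (fun x hx => hm x (Multiset.mem_cons_of_mem hx)) hmk
    rcases Nat.eq_zero_or_pos k with rfl | hk
    · simpa [Multiset.card_eq_zero.mp (Nat.le_zero.mp hmk)] using hm a (Multiset.mem_cons_self a m)
    have hcomb := hs (hm a (Multiset.mem_cons_self a m)) hms
      (a := ((k : ℝ) + 1)⁻¹) (b := k / (k + 1)) (by positivity) (by positivity)
      (by field_simp; ring)
    convert hcomb using 1
    rw [Multiset.sum_cons, smul_smul, smul_add]
    push_cast
    congr 2
    field_simp

/- The sublevel set `{η | laguerreForm r w η ≤ 1}` is the image of the exterior `{ζ | r ≤ ‖ζ‖}`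
of the disk under `ζ ↦ (w - ζ)⁻¹`; for `‖w‖ ≤ r` it is convex. -/
noncomputable def laguerreForm (r : ℝ) (w η : ℂ) : ℝ :=
  (r ^ 2 - ‖w‖ ^ 2) * ‖η‖ ^ 2 + 2 * (w * η).re

theorem laguerreForm_inv_sub_le_one_iff {r : ℝ} {w ζ : ℂ} (hζ : ζ ≠ w) :
    laguerreForm r w (w - ζ)⁻¹ ≤ 1 ↔ r ^ 2 ≤ ‖ζ‖ ^ 2 := by
  have hD : 0 < Complex.normSq (w - ζ) := Complex.normSq_pos.mpr (sub_ne_zero.mpr hζ.symm)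
  have key : laguerreForm r w (w - ζ)⁻¹ = 1 + (r ^ 2 - ‖ζ‖ ^ 2) / Complex.normSq (w - ζ) := by
    simp only [laguerreForm, Complex.sq_norm, norm_inv, inv_pow, Complex.mul_re, Complex.inv_re,
      Complex.inv_im]
    field_simp
    simp only [Complex.normSq_apply, Complex.sub_re, Complex.sub_im]
    ring
  rw [key, add_le_iff_nonpos_right, div_le_iff₀ hD, zero_mul, sub_nonpos]

theorem convexOn_laguerreForm {r : ℝ} {w : ℂ} (hw : ‖w‖ ≤ r) :
    ConvexOn ℝ Set.univ (laguerreForm r w) := by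
  have hcoeff : 0 ≤ r ^ 2 - ‖w‖ ^ 2 := by nlinarith [norm_nonneg w]
  have hsq : ConvexOn ℝ Set.univ fun η : ℂ => ‖η‖ ^ 2 :=
    (convexOn_norm convex_univ).pow (fun _ _ => norm_nonneg _) 2
  have hlin : ConvexOn ℝ Set.univ fun η : ℂ => 2 * (w * η).re :=
    ((2 : ℝ) • (Complex.reLm.comp ((LinearMap.mulLeft ℂ w).restrictScalars ℝ))).convexOn
      convex_univ
  exact (hsq.smul hcoeff).add hlin

/- If the polar derivative vanished at `w`, then `(w - t)⁻¹` would be the mean of the `(w - ρ)⁻¹`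
over the roots `ρ` of `p`, padded by zeros to `n` terms, hence in the convex set
`{laguerreForm r w ≤ 1}`, forcing `r ≤ ‖t‖`. -/
theorem laguerre_polar_ne_zero {p : ℂ[X]} {n : ℕ} (hn : 0 < n) (hdeg : p.natDegree ≤ n) {r : ℝ}
    (hp : ∀ z : ℂ, ‖z‖ < r → p.eval z ≠ 0) {t w : ℂ} (ht : ‖t‖ < r) (hw : ‖w‖ < r) :
    n * p.eval w + (t - w) * p.derivative.eval w ≠ 0 := by
  intro hpolar
  have hroots : ∀ ρ ∈ p.roots, r ≤ ‖ρ‖ := fun ρ hρ =>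
    not_lt.mp fun hlt => hp ρ hlt (mem_roots'.mp hρ).2
  set σ := (p.roots.map fun ρ => 1 / (w - ρ)).sum
  have hσ : (n : ℂ) = (w - t) * σ := by
    rw [(IsAlgClosed.splits p).eval_derivative_eq_eval_mul_sum (hp w hw)] at hpolar
    have : p.eval w * (n - (w - t) * σ) = p.eval w * 0 := by linear_combination hpolar
    exact sub_eq_zero.mp (mul_left_cancel₀ (hp w hw) this)
  obtain ⟨hwt, hσ0⟩ : w - t ≠ 0 ∧ σ ≠ 0 :=
    mul_ne_zero_iff.mp (hσ ▸ Nat.cast_ne_zero.mpr hn.ne')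
  have hmean : (w - t)⁻¹ = (n : ℝ)⁻¹ • σ := by
    rw [Complex.real_smul, Complex.ofReal_inv, Complex.ofReal_natCast, hσ]
    field_simp
  have hconvex := (convexOn_laguerreForm hw.le).convex_le 1
  have hmem : (w - t)⁻¹ ∈ {η ∈ Set.univ | laguerreForm r w η ≤ 1} := by
    rw [hmean]
    refine hconvex.inv_natCast_smul_multiset_sum_mem ⟨trivial, by simp [laguerreForm]⟩ ?_ ?_
    · simp only [Multiset.mem_map]
      rintro _ ⟨ρ, hρ, rfl⟩
      have hρw : ρ ≠ w := fun h => (hroots ρ hρ).not_gt (h ▸ hw)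
      refine ⟨trivial, ?_⟩
      rw [one_div, laguerreForm_inv_sub_le_one_iff hρw]
      exact pow_le_pow_left₀ ((norm_nonneg w).trans hw.le) (hroots ρ hρ) 2
    · exact (Multiset.card_map _ _).trans_le ((card_roots' p).trans hdeg)
  have hrt := (laguerreForm_inv_sub_le_one_iff (sub_ne_zero.mp hwt).symm).mp hmem.2
  exact (pow_lt_pow_left₀ ht (norm_nonneg t) two_ne_zero).not_ge hrt

noncomputable def binomPoly (d : ℕ) (a : ℕ → ℂ) : ℂ[X] :=
  ∑ i ∈ range (d + 1), C ((d.choose i : ℂ) * a i) * X ^ i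

theorem coeff_binomPoly (d : ℕ) (a : ℕ → ℂ) (i : ℕ) :
    (binomPoly d a).coeff i = d.choose i * a i := by
  simp only [binomPoly, finsetSum_coeff, coeff_C_mul_X_pow, sum_ite_eq, mem_range]
  split_ifs with hi
  · rfl
  · rw [Nat.choose_eq_zero_of_lt (by omega), Nat.cast_zero, zero_mul]

theorem eval_binomPoly (d : ℕ) (a : ℕ → ℂ) (z : ℂ) :
    (binomPoly d a).eval z = ∑ i ∈ range (d + 1), d.choose i * a i * z ^ i := by
  simp [binomPoly, eval_finsetSum]

theorem eval_zero_binomPoly (d : ℕ) (a : ℕ → ℂ) : (binomPoly d a).eval 0 = a 0 := by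
  simp [← coeff_zero_eq_eval_zero, coeff_binomPoly]

theorem natDegree_binomPoly_le (d : ℕ) (a : ℕ → ℂ) : (binomPoly d a).natDegree ≤ d :=
  natDegree_le_iff_coeff_eq_zero.mpr fun i hi => by
    rw [coeff_binomPoly, Nat.choose_eq_zero_of_lt (by exact_mod_cast hi), Nat.cast_zero, zero_mul]

theorem binomPoly_succ (d : ℕ) (a : ℕ → ℂ) :
    binomPoly (d + 1) a = binomPoly d a + X * binomPoly d (fun i => a (i + 1)) := by
  ext (_ | i) <;> simp [coeff_binomPoly, coeff_X_mul, Nat.choose_succ_succ', add_mul, add_comm]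

theorem derivative_binomPoly_succ (d : ℕ) (a : ℕ → ℂ) :
    derivative (binomPoly (d + 1) a) = C ((d : ℂ) + 1) * binomPoly d (fun i => a (i + 1)) := by
  ext i
  have h : ((d + 1 : ℕ) : ℂ) * d.choose i = (d + 1).choose (i + 1) * (i + 1 : ℕ) := by
    exact_mod_cast Nat.add_one_mul_choose_eq d i
  simp only [coeff_derivative, coeff_binomPoly, coeff_C_mul]
  push_cast at h
  linear_combination (-a (i + 1)) * h

theorem binomPoly_add_mul (d : ℕ) (a b : ℕ → ℂ) (t : ℂ) :
    binomPoly d (fun i => a i + t * b i) = binomPoly d a + C t * binomPoly d b := by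
  ext i
  simp only [coeff_binomPoly, coeff_add, coeff_C_mul]
  ring

theorem eval_binomPoly_shift_ne_zero {d : ℕ} {a : ℕ → ℂ} {r : ℝ}
    (ha : ∀ z : ℂ, ‖z‖ < r → (binomPoly (d + 1) a).eval z ≠ 0) {t : ℂ} (ht : ‖t‖ < r)
    {z : ℂ} (hz : ‖z‖ < r) : (binomPoly d fun i => a i + t * a (i + 1)).eval z ≠ 0 := by
  have hpolar := laguerre_polar_ne_zero d.succ_pos (natDegree_binomPoly_le _ _) ha ht hz
  contrapose! hpolar
  rw [binomPoly_add_mul, eval_add, eval_mul, eval_C] at hpolar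
  rw [derivative_binomPoly_succ, binomPoly_succ]
  simp only [eval_add, eval_mul, eval_X, eval_C, Nat.cast_succ]
  linear_combination ((d : ℂ) + 1) * hpolar

theorem sum_mul_esymm_cons (d : ℕ) (a : ℕ → ℂ) (t : ℂ) {Y : Multiset ℂ}
    (hY : Multiset.card Y = d) :
    ∑ i ∈ range (d + 2), a i * (t ::ₘ Y).esymm i
      = ∑ i ∈ range (d + 1), (a i + t * a (i + 1)) * Y.esymm i := by
  have htop : Y.esymm (d + 1) = 0 := Multiset.esymm_eq_zero_of_card_lt (by omega)
  have hesymm0 : ∀ s : Multiset ℂ, s.esymm 0 = 1 := fun s => by simp [Multiset.esymm]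
  calc ∑ i ∈ range (d + 2), a i * (t ::ₘ Y).esymm i
      = ∑ i ∈ range (d + 2), a i * Y.esymm i + t * ∑ i ∈ range (d + 1), a (i + 1) * Y.esymm i := by
        rw [sum_range_succ', sum_range_succ' (fun i => a i * Y.esymm i), mul_sum]
        simp only [Multiset.esymm_cons_succ, hesymm0, mul_add, sum_add_distrib, mul_left_comm t]
        ring
    _ = ∑ i ∈ range (d + 1), (a i + t * a (i + 1)) * Y.esymm i := by
        rw [sum_range_succ, htop, mul_zero, add_zero, mul_sum, ← sum_add_distrib]
        exact sum_congr rfl fun i _ => by ring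

-- The Grace–Walsh–Szegő coincidence theorem for the open disk of radius `r`.
theorem sum_mul_esymm_ne_zero {r : ℝ} (hr : 0 < r) {d : ℕ} {a : ℕ → ℂ}
    (ha : ∀ z : ℂ, ‖z‖ < r → (binomPoly d a).eval z ≠ 0) {Y : Multiset ℂ}
    (hY : Multiset.card Y = d) (hYr : ∀ y ∈ Y, ‖y‖ < r) :
    ∑ i ∈ range (d + 1), a i * Y.esymm i ≠ 0 := by
  induction d generalizing a Y with
  | zero =>
    obtain rfl := Multiset.card_eq_zero.mp hY
    simpa [eval_binomPoly, Multiset.esymm] using ha 0 (by simpa using hr)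
  | succ d ih =>
    obtain ⟨t, Y, rfl⟩ : ∃ t Y', Y = t ::ₘ Y' :=
      Multiset.card_pos_iff_exists_mem.mp (hY ▸ d.succ_pos) |>.imp fun t ht =>
        ⟨Y.erase t, (Multiset.cons_erase ht).symm⟩
    have ht := hYr t (Multiset.mem_cons_self t Y)
    rw [sum_mul_esymm_cons d a t (by simpa using hY)]
    exact ih (fun z hz => eval_binomPoly_shift_ne_zero ha ht hz) (by simpa using hY)
      fun y hy => hYr y (Multiset.mem_cons_of_mem hy)

theorem exists_esymm_eq_of_binomPoly_ne_zero {ρ : ℝ} (hρ : 0 < ρ) {d : ℕ} {c : ℕ → ℂ}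
    (hc : ∀ z : ℂ, ‖z‖ < ρ → (binomPoly d c).eval z ≠ 0) :
    ∃ T : Multiset ℂ, Multiset.card T = d ∧ (∀ τ ∈ T, ‖τ‖ ≤ ρ⁻¹) ∧
      ∀ i, (d.choose i : ℂ) * c i = c 0 * T.esymm i := by
  set p := binomPoly d c
  have hp0 : p.eval 0 = c 0 := eval_zero_binomPoly d c
  have hroots : ∀ ρ' ∈ p.roots, ρ ≤ ‖ρ'‖ := fun ρ' hρ' =>
    not_lt.mp fun hlt => hc ρ' hlt (mem_roots'.mp hρ').2
  set T₀ := p.roots.map fun ρ' => -ρ'⁻¹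
  have hcard : Multiset.card T₀ ≤ d :=
    (Multiset.card_map _ _).trans_le ((card_roots' p).trans (natDegree_binomPoly_le d c))
  refine ⟨T₀ + Multiset.replicate (d - Multiset.card T₀) 0, ?_, ?_, fun i => ?_⟩
  · rw [Multiset.card_add, Multiset.card_replicate]
    omega
  · simp only [Multiset.mem_add, Multiset.mem_replicate, T₀, Multiset.mem_map]
    rintro τ (⟨ρ', hρ', rfl⟩ | ⟨-, rfl⟩)
    · rw [norm_neg, norm_inv]
      exact inv_anti₀ hρ (hroots ρ' hρ')
    · simpa using hρ.le
  · have hfactor := eq_C_eval_zero_mul_prod_one_add p (hp0 ▸ hc 0 (by simpa using hρ))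
    rw [← coeff_binomPoly, ← hp0, ← coeff_multiset_prod_one_add_C_mul_X, ← coeff_C_mul,
      Multiset.map_add, Multiset.prod_add, Multiset.map_replicate, Multiset.map_map]
    simpa [Function.comp_def] using congrArg (coeff · i) hfactor

theorem sum_mul_mul_pow_ne_zero {κ ρ : ℝ} (hρ : 0 < ρ) {d : ℕ} {A c : ℕ → ℂ}
    (hA : ∀ z : ℂ, ‖z‖ < κ → ∑ i ∈ range (d + 1), A i * z ^ i ≠ 0)
    (hc : ∀ z : ℂ, ‖z‖ < ρ → (binomPoly d c).eval z ≠ 0) {x : ℂ} (hx : ‖x‖ < κ * ρ) :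
    ∑ i ∈ range (d + 1), A i * (c i * x ^ i) ≠ 0 := by
  have hκ : 0 < κ := pos_of_mul_pos_left ((norm_nonneg x).trans_lt hx) hρ.le
  obtain ⟨T, hTcard, hTnorm, hTcoeff⟩ := exists_esymm_eq_of_binomPoly_ne_zero hρ hc
  have hc0 : c 0 ≠ 0 := eval_zero_binomPoly d c ▸ hc 0 (by simpa using hρ)
  have hchoose : ∀ i ∈ range (d + 1), (d.choose i : ℂ) ≠ 0 := fun i hi =>
    Nat.cast_ne_zero.mpr (Nat.choose_pos (Nat.lt_succ_iff.mp (mem_range.mp hi))).ne'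
  set a : ℕ → ℂ := fun i => A i / d.choose i
  set Y := T.map (x • ·)
  have ha : ∀ z : ℂ, ‖z‖ < κ → (binomPoly d a).eval z ≠ 0 := fun z hz => by
    rw [eval_binomPoly, sum_congr rfl fun i hi => by rw [mul_div_cancel₀ _ (hchoose i hi)]]
    exact hA z hz
  have hYcard : Multiset.card Y = d := by rw [Multiset.card_map, hTcard]
  have hYnorm : ∀ y ∈ Y, ‖y‖ < κ := by
    simp only [Y, Multiset.mem_map]
    rintro _ ⟨τ, hτ, rfl⟩
    calc ‖x • τ‖ ≤ ‖x‖ * ρ⁻¹ := by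
          rw [norm_smul]; exact mul_le_mul_of_nonneg_left (hTnorm τ hτ) (norm_nonneg x)
      _ < κ := by rwa [← div_eq_mul_inv, div_lt_iff₀ hρ]
  have hsum : ∑ i ∈ range (d + 1), A i * (c i * x ^ i)
      = c 0 * ∑ i ∈ range (d + 1), a i * Y.esymm i := by
    rw [mul_sum]
    refine sum_congr rfl fun i hi => ?_
    rw [← Multiset.pow_smul_esymm, smul_eq_mul]
    simp only [a]
    field_simp [hchoose i hi]
    linear_combination (A i * x ^ i) * hTcoeff i
  rw [hsum]
  exact mul_ne_zero hc0 (sum_mul_esymm_ne_zero hκ ha hYcard hYnorm)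

theorem sum_mul_weight_pow_ne_zero {ι : Type*} {κ ρ : ℝ} (hρ : 0 < ρ) {s : Finset ι}
    {deg : ι → ℕ} {d : ℕ} (hdeg : ∀ F ∈ s, deg F ≤ d) {g : ι → ℂ}
    (hg : ∀ z : ℂ, ‖z‖ < κ → ∑ F ∈ s, g F * z ^ deg F ≠ 0) {c : ℕ → ℂ}
    (hc : ∀ z : ℂ, ‖z‖ < ρ → (binomPoly d c).eval z ≠ 0) {x : ℂ} (hx : ‖x‖ < κ * ρ) :
    ∑ F ∈ s, g F * (c (deg F) * x ^ deg F) ≠ 0 := by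
  have hfiber : ∀ f : ℕ → ℂ, ∑ F ∈ s, g F * f (deg F)
      = ∑ i ∈ range (d + 1), (∑ F ∈ s with deg F = i, g F) * f i := by
    intro f
    rw [← sum_fiberwise_of_maps_to fun F hF => mem_range.mpr (Nat.lt_succ_of_le (hdeg F hF))]
    refine sum_congr rfl fun i _ => ?_
    rw [sum_mul]
    exact sum_congr rfl fun F hF => by rw [(mem_filter.mp hF).2]
  rw [hfiber fun i => c i * x ^ i]
  exact sum_mul_mul_pow_ne_zero hρ (fun z hz => hfiber (z ^ ·) ▸ hg z hz) hc hx

section Hypergraph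

variable {V : Type*} [DecidableEq V] (E : Finset (Finset V)) (lam : Finset V → ℂ)
  (u : V → ℕ → ℂ)

theorem hypDeg_le_of_subset {F G : Finset (Finset V)} (h : F ⊆ G) (v : V) :
    hypDeg F v ≤ hypDeg G v :=
  card_le_card (filter_subset_filter _ h)

theorem keyPoly_eq_eval_binomPoly (v : V) (z : ℂ) :
    keyPoly E u v z = (binomPoly (hypDeg E v) (u v)).eval z :=
  (eval_binomPoly _ _ z).symm

variable [Fintype V]

theorem prod_prod_eq_prod_pow_hypDeg (F : Finset (Finset V)) (x : V → ℂ) :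
    ∏ e ∈ F, ∏ v ∈ e, x v = ∏ v, x v ^ hypDeg F v := by
  rw [prod_comm' (s' := fun v => F.filter (v ∈ ·)) (t' := univ) (by simp [and_comm])]
  simp [hypDeg]

noncomputable def partialSubgraphPoly (S : Finset V) (x : V → ℂ) : ℂ :=
  ∑ F ∈ E.powerset, (∏ e ∈ F, lam e) *
    ∏ v, (if v ∈ S then u v (hypDeg F v) else 1) * x v ^ hypDeg F v

theorem partialSubgraphPoly_empty (x : V → ℂ) :
    partialSubgraphPoly E lam u ∅ x = basePoly E lam x := by
  simp_rw [partialSubgraphPoly, basePoly, add_comm (1 : ℂ), prod_add, prod_const_one, mul_one]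
  refine sum_congr rfl fun F _ => ?_
  simp [prod_mul_distrib, prod_prod_eq_prod_pow_hypDeg]

theorem partialSubgraphPoly_univ (x : V → ℂ) :
    partialSubgraphPoly E lam u univ x = subgraphCountPoly E lam u x := by
  simp [partialSubgraphPoly, subgraphCountPoly, prod_mul_distrib, mul_assoc]

noncomputable def partialSubgraphCoeff (S : Finset V) (x : V → ℂ) (w : V)
    (F : Finset (Finset V)) : ℂ :=
  (∏ e ∈ F, lam e) * ∏ v ∈ univ.erase w, (if v ∈ S then u v (hypDeg F v) else 1) * x v ^ hypDeg F v

theorem partialSubgraphPoly_eq_sum_coeff_mul (S : Finset V) (x : V → ℂ) (w : V) :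
    partialSubgraphPoly E lam u S x = ∑ F ∈ E.powerset, partialSubgraphCoeff lam u S x w F *
      ((if w ∈ S then u w (hypDeg F w) else 1) * x w ^ hypDeg F w) := by
  refine sum_congr rfl fun F _ => ?_
  rw [partialSubgraphCoeff, mul_assoc, prod_erase_mul _ _ (mem_univ w)]

theorem partialSubgraphCoeff_update (S : Finset V) (x : V → ℂ) (w : V) (z : ℂ) :
    partialSubgraphCoeff lam u S (Function.update x w z) w = partialSubgraphCoeff lam u S x w := by
  ext F
  refine congrArg _ (prod_congr rfl fun v hv => ?_)
  rw [Function.update_of_ne (ne_of_mem_erase hv)]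

theorem partialSubgraphCoeff_insert (S : Finset V) (x : V → ℂ) (w : V) :
    partialSubgraphCoeff lam u (insert w S) x w = partialSubgraphCoeff lam u S x w := by
  ext F
  refine congrArg _ (prod_congr rfl fun v hv => ?_)
  simp only [mem_insert, ne_of_mem_erase hv, false_or]

theorem partialSubgraphPoly_ne_zero {κ ρ : ℝ} (hρ : 0 < ρ)
    (hbase : ∀ x : V → ℂ, (∀ v : V, ‖x v‖ < κ) → basePoly E lam x ≠ 0)
    (hkey : ∀ v : V, ∀ z : ℂ, ‖z‖ < ρ → keyPoly E u v z ≠ 0) (S : Finset V) (x : V → ℂ)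
    (hS : ∀ v ∈ S, ‖x v‖ < κ * ρ) (hSc : ∀ v ∉ S, ‖x v‖ < κ) :
    partialSubgraphPoly E lam u S x ≠ 0 := by
  induction S using Finset.induction_on generalizing x with
  | empty => exact partialSubgraphPoly_empty E lam u x ▸ hbase x fun v => hSc v (notMem_empty v)
  | @insert w S hwS ih =>
    have hupdate : ∀ z, partialSubgraphPoly E lam u S (Function.update x w z)
        = ∑ F ∈ E.powerset, partialSubgraphCoeff lam u S x w F * z ^ hypDeg F w := fun z => by
      simp [partialSubgraphPoly_eq_sum_coeff_mul E lam u S _ w, partialSubgraphCoeff_update, hwS]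
    rw [partialSubgraphPoly_eq_sum_coeff_mul E lam u _ x w, partialSubgraphCoeff_insert]
    simp only [mem_insert_self, if_true]
    refine sum_mul_weight_pow_ne_zero hρ (fun F hF => hypDeg_le_of_subset (mem_powerset.mp hF) w)
      (fun z hz => ?_) (fun z hz => keyPoly_eq_eval_binomPoly E u w z ▸ hkey w z hz)
      (hS w (mem_insert_self w S))
    rw [← hupdate z]
    refine ih _ (fun v hv => ?_) (fun v hv => ?_)
    · rw [Function.update_of_ne (ne_of_mem_of_not_mem hv hwS)]
      exact hS v (mem_insert_of_mem hv)
    · by_cases hvw : v = w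
      · rwa [hvw, Function.update_self]
      · rw [Function.update_of_ne hvw]
        exact hSc v (by simp [hvw, hv])

theorem subgraphCountPoly_eq_zero_of_keyPoly_eq_zero {v : V} (h : ∀ z : ℂ, keyPoly E u v z = 0)
    (x : V → ℂ) : subgraphCountPoly E lam u x = 0 := by
  have hpoly : binomPoly (hypDeg E v) (u v) = 0 :=
    Polynomial.funext fun z => by rw [← keyPoly_eq_eval_binomPoly, h, eval_zero]
  have hu : ∀ i ≤ hypDeg E v, u v i = 0 := fun i hi => by
    have hcoeff := coeff_binomPoly (hypDeg E v) (u v) i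
    rw [hpoly, coeff_zero] at hcoeff
    exact (mul_eq_zero.mp hcoeff.symm).resolve_left (Nat.cast_ne_zero.mpr (Nat.choose_pos hi).ne')
  refine sum_eq_zero fun F hF => ?_
  rw [prod_eq_zero (mem_univ v) (hu _ (hypDeg_le_of_subset (mem_powerset.mp hF) v)), mul_zero,
    zero_mul]

end Hypergraph

theorem wagner_disk_general
    {V : Type} [Fintype V] [DecidableEq V] (E : Finset (Finset V))
    (lam : Finset V → ℂ) (u : V → ℕ → ℂ) (κ ρ : ℝ) (hρ : 0 < ρ)
    (hbase : ∀ x : V → ℂ, (∀ v : V, ‖x v‖ < κ) → basePoly E lam x ≠ 0)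
    (hkey : ∀ v : V, (∀ z : ℂ, keyPoly E u v z = 0) ∨
      (∀ z : ℂ, ‖z‖ < ρ → keyPoly E u v z ≠ 0)) :
    (∀ x : V → ℂ, subgraphCountPoly E lam u x = 0) ∨
      (∀ x : V → ℂ, (∀ v : V, ‖x v‖ < κ * ρ) →
        subgraphCountPoly E lam u x ≠ 0) := by
  by_cases hdisk : ∀ v : V, ∀ z : ℂ, ‖z‖ < ρ → keyPoly E u v z ≠ 0
  · refine Or.inr fun x hx => ?_
    rw [← partialSubgraphPoly_univ]
    exact partialSubgraphPoly_ne_zero E lam u hρ hbase hdisk univ x (fun v _ => hx v)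
      fun v hv => absurd (mem_univ v) hv
  · push Not at hdisk
    obtain ⟨v, z, hz, hvz⟩ := hdisk
    exact Or.inl (subgraphCountPoly_eq_zero_of_keyPoly_eq_zero E lam u
      ((hkey v).resolve_right fun h => h z hz hvz))

/-- Wagner's theorem, disk version: if the base polynomial is `κ𝒟`-nonvanishing and every
key polynomial is `ρ𝒟`-nonvanishing (i.e. identically zero or nonzero on the open disk of
radius `ρ`), then the subgraph counting polynomial is `κρ𝒟`-nonvanishing. -/
theorem wagner_disk
    {V : Type} [Fintype V] [DecidableEq V] (E : Finset (Finset V))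
    (lam : Finset V → ℂ) (u : V → ℕ → ℂ) (κ ρ : ℝ) (hκ : 0 < κ) (hρ : 0 < ρ)
    (hbase : ∀ x : V → ℂ, (∀ v : V, ‖x v‖ < κ) → basePoly E lam x ≠ 0)
    (hkey : ∀ v : V, (∀ z : ℂ, keyPoly E u v z = 0) ∨
      (∀ z : ℂ, ‖z‖ < ρ → keyPoly E u v z ≠ 0)) :
    (∀ x : V → ℂ, subgraphCountPoly E lam u x = 0) ∨
      (∀ x : V → ℂ, (∀ v : V, ‖x v‖ < κ * ρ) →
        subgraphCountPoly E lam u x ≠ 0) :=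
  wagner_disk_general E lam u κ ρ hρ hbase hkey
end

section
/- Let H = (V, E) be a finite hypergraph in which every edge is nonempty, and let S ⊆ V be a set containing all isolated vertices of H. For each integer k ≥ 1 let T_k = ℂ \ {(−1)^{k+1} α_1 α_2 ⋯ α_k : α_1, …, α_k ∈ ℂ with |α_i + 1| ≤ 1 for all i}. Then for every assignment of complex numbers (z_e)_{e ∈ E} with z_e ∈ T_{|e|} for every edge e, we have Σ_{F ⊆ E : F covers V∖S} Π_{e ∈ F} z_e ≠ 0, where F covers V∖S means that every vertex of V not in S belongs to some edge of F. -/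
/-!
Write `P(E, U) = ∑_{F ⊆ E covering U} ∏_{e ∈ F} z_e` (`coverSum`) and `D` for the closed disk of
radius `1` about `1`, so that `z_e ∈ T_k ↔ -z_e ∉ D^k`. `P` obeys the deletion rules
`P(E, U + v) = P(E, U) - P(E_v, U)`, where `E_v` are the edges avoiding `v`, and
`P(E, U) = P(E - e, U) + z_e P(E - e, U \ e)`. Call `z` admissible for `(E, U)` if
`-z_e ∉ D^{|e ∩ U|}` for all `e ∈ E`.

By strong induction on `U` one shows `|P(E_v, U)| < |P(E, U)|` whenever `v ∉ U`, `E` covers `U + v`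
and `z` is admissible for `(E, U + v)`. For smaller `U` this puts every ratio
`P(E, U + v) / P(E, U)` in the open disk about `1`, so `P(E, U) ≠ 0` and, telescoping,
`P(E, U) = d P(E, U \ W)` with `d ∈ D^{|W|}`. Hence deleting an edge `e ∋ v` divides `P(E, U)` by
`1 + z_e / d` with `d ∈ D^{|e ∩ U|}`, and admissibility at `U + v` forces `|1 + z_e / d| > 1`.
Deleting the edges through `v` one at a time gives the inequality.
-/

open Finset

/-- The set `T_k = ℂ \ {(-1)^{k+1} α_1 ⋯ α_k : |α_i + 1| ≤ 1 for all i}`. -/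
def Tset (k : ℕ) : Set ℂ :=
  {w : ℂ | ∃ α : Fin k → ℂ, (∀ i, ‖α i + 1‖ ≤ 1) ∧
    w = (-1 : ℂ) ^ (k + 1) * ∏ i, α i}ᶜ

open Metric Pointwise

lemma neg_mem_closedBall_one_pow_iff {k : ℕ} {w : ℂ} :
    -w ∈ closedBall (1 : ℂ) 1 ^ k ↔
      ∃ α : Fin k → ℂ, (∀ i, ‖α i + 1‖ ≤ 1) ∧ w = (-1 : ℂ) ^ (k + 1) * ∏ i, α i := by
  have sign : ∀ α : Fin k → ℂ, (-1 : ℂ) ^ (k + 1) * ∏ i, α i = -∏ i, -α i := fun α => by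
    rw [prod_neg, card_univ, Fintype.card_fin, pow_succ]; ring
  simp only [Set.mem_pow_iff_prod, mem_closedBall, dist_eq_norm]
  constructor
  · rintro ⟨β, hβ, hprod⟩
    exact ⟨fun i => -β i, fun i => by rw [neg_add_eq_sub, norm_sub_rev]; exact hβ i,
      by simp [sign, hprod]⟩
  · rintro ⟨α, hα, rfl⟩
    exact ⟨fun i => -α i, fun i => by rw [← neg_add', norm_neg]; exact hα i,
      by rw [sign, neg_neg]⟩

lemma mem_Tset_iff {k : ℕ} {w : ℂ} : w ∈ Tset k ↔ -w ∉ closedBall (1 : ℂ) 1 ^ k := by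
  rw [neg_mem_closedBall_one_pow_iff]; rfl

lemma exists_mem_ball_sub_eq_mul {p q : ℂ} (h : ‖q‖ < ‖p‖) :
    ∃ c ∈ ball (1 : ℂ) 1, p - q = c * p := by
  have hp : p ≠ 0 := norm_pos_iff.mp ((norm_nonneg q).trans_lt h)
  refine ⟨1 - q / p, ?_, by field_simp⟩
  rw [mem_ball, dist_eq_norm, sub_sub_cancel_left, norm_neg, norm_div]
  exact (div_lt_one (norm_pos_iff.mpr hp)).mpr h

lemma one_lt_norm_one_add_div {k : ℕ} {d w : ℂ} (hd : d ∈ closedBall (1 : ℂ) 1 ^ k)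
    (hd0 : d ≠ 0) (hw : -w ∉ closedBall (1 : ℂ) 1 ^ (k + 1)) : 1 < ‖1 + w / d‖ := by
  by_contra! hle
  refine hw ?_
  rw [pow_succ, show -w = d * (-w / d) by field_simp]
  refine Set.mul_mem_mul hd ?_
  rwa [mem_closedBall, dist_eq_norm, norm_sub_rev, neg_div, sub_neg_eq_add]

variable {V : Type*}

abbrev Covers (E : Finset (Finset V)) (U : Finset V) : Prop :=
  ∀ v ∈ U, ∃ e ∈ E, v ∈ e

lemma Covers.mono_left {E E' : Finset (Finset V)} {U : Finset V} (h : Covers E U)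
    (hE : E ⊆ E') : Covers E' U := fun v hv =>
  let ⟨e, he, hve⟩ := h v hv
  ⟨e, hE he, hve⟩

lemma Covers.mono_right {E : Finset (Finset V)} {U U' : Finset V} (h : Covers E U)
    (hU : U' ⊆ U) : Covers E U' := fun v hv => h v (hU hv)

variable [DecidableEq V]

noncomputable def coverSum (E : Finset (Finset V)) (U : Finset V) (z : Finset V → ℂ) : ℂ :=
  ∑ F ∈ E.powerset.filter (Covers · U), ∏ e ∈ F, z e

section coverSum

variable {E : Finset (Finset V)} {U : Finset V} {z : Finset V → ℂ}

lemma coverSum_eq_zero_of_not_covers (h : ¬ Covers E U) : coverSum E U z = 0 := by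
  refine sum_eq_zero fun F hF => ?_
  rw [mem_filter, mem_powerset] at hF
  exact absurd (hF.2.mono_left hF.1) h

lemma coverSum_empty : coverSum E ∅ z = ∏ e ∈ E, (z e + 1) := by
  rw [prod_add_one, coverSum, filter_true_of_mem fun F _ v hv => absurd hv (notMem_empty v)]

lemma coverSum_insert {v : V} :
    coverSum E (insert v U) z = coverSum E U z - coverSum (E.filter (v ∉ ·)) U z := by
  have hmeets : (E.powerset.filter (Covers · U)).filter (fun F => ∃ e ∈ F, v ∈ e) =
      E.powerset.filter (Covers · (insert v U)) := by
    ext F; simp only [mem_filter, Covers, forall_mem_insert]; tauto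
  have havoids : (E.powerset.filter (Covers · U)).filter (fun F => ¬∃ e ∈ F, v ∈ e) =
      (E.filter (v ∉ ·)).powerset.filter (Covers · U) := by
    ext F; simp only [mem_filter, mem_powerset, subset_iff, Covers]; grind
  rw [coverSum, coverSum, coverSum, eq_sub_iff_add_eq, ← hmeets, ← havoids,
    sum_filter_add_sum_filter_not]

lemma coverSum_eq_add_of_mem {e : Finset V} (he : e ∈ E) :
    coverSum E U z = coverSum (E.erase e) U z + z e * coverSum (E.erase e) (U \ e) z := by
  have hcovers_insert {F : Finset (Finset V)} : Covers (insert e F) U ↔ Covers F (U \ e) := by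
    simp only [Covers, mem_sdiff, exists_mem_insert]; grind
  rw [coverSum, coverSum, coverSum, sum_filter, sum_filter, sum_filter, mul_sum,
    ← insert_erase he, sum_powerset_insert (notMem_erase e E), erase_insert_eq_erase, erase_idem]
  refine congrArg _ (sum_congr rfl fun F hF => ?_)
  have heF : e ∉ F := fun h => notMem_erase e E (mem_powerset.mp hF h)
  rw [prod_insert heF]
  simp only [hcovers_insert, mul_ite, mul_zero]

end coverSum

lemma filter_notMem_eq_filter_erase {E : Finset (Finset V)} {v : V} {e : Finset V} (hve : v ∈ e) :
    E.filter (v ∉ ·) = (E.erase e).filter (v ∉ ·) := by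
  rw [filter_erase, erase_eq_of_notMem (by simp [hve])]

def Admissible (z : Finset V → ℂ) (E : Finset (Finset V)) (U : Finset V) : Prop :=
  ∀ e ∈ E, -z e ∉ closedBall (1 : ℂ) 1 ^ #(e ∩ U)

lemma Admissible.mono {z : Finset V → ℂ} {E E' : Finset (Finset V)} {U U' : Finset V}
    (h : Admissible z E U) (hE : E' ⊆ E) (hU : U' ⊆ U) : Admissible z E' U' :=
  fun e he hmem => h e (hE he) <| Set.pow_subset_pow_right (mem_closedBall_self zero_le_one)
    (card_le_card (inter_subset_inter_left hU)) hmem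

def DeletionBound (z : Finset V → ℂ) (U : Finset V) : Prop :=
  ∀ (E : Finset (Finset V)) (v : V), v ∉ U → Covers E (insert v U) →
    Admissible z E (insert v U) → ‖coverSum (E.filter (v ∉ ·)) U z‖ < ‖coverSum E U z‖

section induction

variable {z : Finset V → ℂ} {E : Finset (Finset V)} {U : Finset V}

lemma DeletionBound.exists_mem_ball {v : V} (hU : DeletionBound z U) (hv : v ∉ U)
    (hcov : Covers E (insert v U)) (hadm : Admissible z E (insert v U)) :
    coverSum E U z ≠ 0 ∧ ∃ c ∈ ball (1 : ℂ) 1, coverSum E (insert v U) z = c * coverSum E U z := by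
  have hlt := hU E v hv hcov hadm
  refine ⟨norm_pos_iff.mp ((norm_nonneg _).trans_lt hlt), ?_⟩
  rw [coverSum_insert]
  exact exists_mem_ball_sub_eq_mul hlt

variable (hind : ∀ U₀ ⊂ U, DeletionBound z U₀)
include hind

lemma coverSum_ne_zero_of_deletionBound (hcov : Covers E U) (hadm : Admissible z E U) :
    coverSum E U z ≠ 0 := by
  rcases U.eq_empty_or_nonempty with rfl | ⟨v, hv⟩
  · rw [coverSum_empty, prod_ne_zero_iff]
    intro e he hzero
    refine hadm e he ?_
    rw [inter_empty, card_empty, pow_zero, Set.mem_one]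
    exact add_eq_zero_iff_neg_eq.mp hzero
  · rw [← insert_erase hv] at hcov hadm ⊢
    obtain ⟨hne, c, hc, heq⟩ := (hind _ (erase_ssubset hv)).exists_mem_ball
      (notMem_erase v U) hcov hadm
    have hc0 : c ≠ 0 := by rintro rfl; simp at hc
    rw [heq]
    exact mul_ne_zero hc0 hne

lemma exists_mem_pow_coverSum_eq_mul_sdiff (hcov : Covers E U) (hadm : Admissible z E U)
    {W : Finset V} (hW : W ⊆ U) :
    ∃ d ∈ closedBall (1 : ℂ) 1 ^ #W, coverSum E U z = d * coverSum E (U \ W) z := by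
  induction W using Finset.induction_on with
  | empty => exact ⟨1, Set.one_mem_one, by rw [sdiff_empty, one_mul]⟩
  | insert w W hwW ih =>
    obtain ⟨d, hd, hdeq⟩ := ih ((subset_insert w W).trans hW)
    have hw : w ∈ U \ W := mem_sdiff.mpr ⟨hW (mem_insert_self w W), hwW⟩
    set U₀ := (U \ W).erase w
    have hU₀ : U₀ ⊂ U := (erase_ssubset hw).trans_subset sdiff_subset
    have hinsert : insert w U₀ = U \ W := insert_erase hw
    obtain ⟨-, c, hc, hceq⟩ := (hind U₀ hU₀).exists_mem_ball (notMem_erase w _)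
      (hcov.mono_right (hinsert ▸ sdiff_subset)) (hadm.mono subset_rfl (hinsert ▸ sdiff_subset))
    refine ⟨d * c, ?_, ?_⟩
    · rw [card_insert_of_notMem hwW, pow_succ]
      exact Set.mul_mem_mul hd (ball_subset_closedBall hc)
    · rw [hdeq, ← hinsert, hceq, sdiff_insert, mul_assoc]

lemma norm_coverSum_erase_lt {v : V} {e : Finset V} (hv : v ∉ U) (he : e ∈ E) (hve : v ∈ e)
    (hcov : Covers E U) (hadm : Admissible z E (insert v U)) :
    ‖coverSum (E.erase e) U z‖ < ‖coverSum E U z‖ := by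
  have hadmU : Admissible z E U := hadm.mono subset_rfl (subset_insert v U)
  by_cases hcov' : Covers (E.erase e) U
  swap
  · rw [coverSum_eq_zero_of_not_covers hcov', norm_zero, norm_pos_iff]
    exact coverSum_ne_zero_of_deletionBound hind hcov hadmU
  have hadm' : Admissible z (E.erase e) U := hadmU.mono (erase_subset e E) subset_rfl
  have hne := coverSum_ne_zero_of_deletionBound hind hcov' hadm'
  obtain ⟨d, hd, hdeq⟩ :=
    exists_mem_pow_coverSum_eq_mul_sdiff hind hcov' hadm' (inter_subset_right (s₁ := e))
  rw [sdiff_inter_self_right] at hdeq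
  have hd0 : d ≠ 0 := by rintro rfl; exact hne (by rw [hdeq, zero_mul])
  have hgrow : 1 < ‖1 + z e / d‖ := by
    refine one_lt_norm_one_add_div hd hd0 ?_
    have := hadm e he
    rwa [inter_insert_of_mem hve, card_insert_of_notMem (fun h => hv (mem_inter.mp h).2)] at this
  have hfactor : coverSum E U z = coverSum (E.erase e) U z * (1 + z e / d) := by
    rw [coverSum_eq_add_of_mem he, hdeq]; field_simp
  rw [hfactor, norm_mul]
  exact lt_mul_of_one_lt_right (norm_pos_iff.mpr hne) hgrow

lemma norm_coverSum_erase_le {v : V} {e : Finset V} (hv : v ∉ U) (he : e ∈ E) (hve : v ∈ e)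
    (hadm : Admissible z E (insert v U)) :
    ‖coverSum (E.erase e) U z‖ ≤ ‖coverSum E U z‖ := by
  by_cases hcov : Covers E U
  · exact (norm_coverSum_erase_lt hind hv he hve hcov hadm).le
  · rw [coverSum_eq_zero_of_not_covers fun h => hcov (h.mono_left (erase_subset e E)), norm_zero]
    exact norm_nonneg _

lemma norm_coverSum_filter_notMem_le {v : V} (hv : v ∉ U) (hadm : Admissible z E (insert v U)) :
    ‖coverSum (E.filter (v ∉ ·)) U z‖ ≤ ‖coverSum E U z‖ := by
  induction E using Finset.strongInduction with
  | H E ih =>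
    by_cases hmeets : ∃ e ∈ E, v ∈ e
    · obtain ⟨e, he, hve⟩ := hmeets
      calc ‖coverSum (E.filter (v ∉ ·)) U z‖
          = ‖coverSum ((E.erase e).filter (v ∉ ·)) U z‖ := by rw [filter_notMem_eq_filter_erase hve]
        _ ≤ ‖coverSum (E.erase e) U z‖ :=
            ih _ (erase_ssubset he) (hadm.mono (erase_subset e E) subset_rfl)
        _ ≤ ‖coverSum E U z‖ := norm_coverSum_erase_le hind hv he hve hadm
    · push Not at hmeets
      rw [filter_true_of_mem hmeets]

lemma deletionBound_of_forall_ssubset : DeletionBound z U := by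
  intro E v hv hcov hadm
  obtain ⟨e, he, hve⟩ := hcov v (mem_insert_self v U)
  calc ‖coverSum (E.filter (v ∉ ·)) U z‖
      = ‖coverSum ((E.erase e).filter (v ∉ ·)) U z‖ := by rw [filter_notMem_eq_filter_erase hve]
    _ ≤ ‖coverSum (E.erase e) U z‖ :=
        norm_coverSum_filter_notMem_le hind hv (hadm.mono (erase_subset e E) subset_rfl)
    _ < ‖coverSum E U z‖ :=
        norm_coverSum_erase_lt hind hv he hve (hcov.mono_right (subset_insert v U)) hadm

end induction

lemma deletionBound (z : Finset V → ℂ) (U : Finset V) : DeletionBound z U :=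
  U.strongInduction fun _ hind => deletionBound_of_forall_ssubset hind

lemma coverSum_ne_zero {z : Finset V → ℂ} {E : Finset (Finset V)} {U : Finset V}
    (hcov : Covers E U) (hadm : Admissible z E U) : coverSum E U z ≠ 0 :=
  coverSum_ne_zero_of_deletionBound (fun U₀ _ => deletionBound z U₀) hcov hadm

theorem relaxed_edge_cover_nonvanishing_general
    {V : Type} [Fintype V] [DecidableEq V] (E : Finset (Finset V)) (S : Finset V)
    (hiso : ∀ v : V, (∀ e ∈ E, v ∉ e) → v ∈ S)
    (z : Finset V → ℂ) (hz : ∀ e ∈ E, z e ∈ Tset e.card) :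
    (∑ F ∈ E.powerset.filter (fun F => ∀ v : V, v ∉ S → ∃ e ∈ F, v ∈ e),
      ∏ e ∈ F, z e) ≠ 0 := by
  have hcov : Covers E (univ \ S) := fun v hv => by
    by_contra! h
    exact (mem_sdiff.mp hv).2 (hiso v h)
  have hadm : Admissible z E (univ \ S) := fun e he hmem =>
    mem_Tset_iff.mp (hz e he) <| Set.pow_subset_pow_right (mem_closedBall_self zero_le_one)
      (card_le_card inter_subset_left) hmem
  simpa [coverSum, Covers] using coverSum_ne_zero hcov hadm

/-- For a hypergraph with nonempty edges `E` and a set `S` containing all isolated vertices,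
the edge cover polynomial of `H` relaxed over `S`, with edge weights `z_e ∈ T_{|e|}`,
does not vanish. -/
theorem relaxed_edge_cover_nonvanishing
    {V : Type} [Fintype V] [DecidableEq V] (E : Finset (Finset V)) (S : Finset V)
    (hne : ∀ e ∈ E, e.Nonempty)
    (hiso : ∀ v : V, (∀ e ∈ E, v ∉ e) → v ∈ S)
    (z : Finset V → ℂ) (hz : ∀ e ∈ E, z e ∈ Tset e.card) :
    (∑ F ∈ E.powerset.filter (fun F => ∀ v : V, v ∉ S → ∃ e ∈ F, v ∈ e),
      ∏ e ∈ F, z e) ≠ 0 :=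
  relaxed_edge_cover_nonvanishing_general E S hiso z hz
end

section
/- The set of all products z_1 z_2 where z_1, z_2 ∈ ℂ satisfy |z_1 + 1| ≤ 1 and |z_2 + 1| ≤ 1 is equal to the set of all squares w² where w ∈ ℂ satisfies |w + 1| ≤ 1; equivalently, ℂ \ {−α_1 α_2 : |α_1 + 1| ≤ 1, |α_2 + 1| ≤ 1} = ℂ \ {−(1−α)² : |α| ≤ 1}. -/
/-!
Write `D` for the closed disk `‖z + 1‖ ≤ 1`, i.e. `‖z‖² ≤ -2 Re z`. Every `u` has a square
root `w` with `Re w ≤ 0`, and for such `w` the condition `w ∈ D` is equivalent, after squaring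
`‖w‖² ≤ -2 Re w`, to the cardioid inequality `‖u‖² ≤ 2 (‖u‖ + Re u)`. For `u = z₁ z₂` with
`z₁, z₂ ∈ D` it holds because
`‖z₁ z₂‖² ≤ 4 Re z₁ Re z₂ = 2 (Re (z₁ z₂) + Re (z₁ z̄₂)) ≤ 2 (Re (z₁ z₂) + ‖z₁ z₂‖)`.
-/

open Complex ComplexConjugate

lemma norm_add_one_le_one_iff (z : ℂ) : ‖z + 1‖ ≤ 1 ↔ ‖z‖ ^ 2 ≤ -2 * z.re := by
  rw [← sq_le_one_iff₀ (norm_nonneg _), Complex.sq_norm, Complex.sq_norm, normSq_add,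
    normSq_one]
  simp only [map_one, mul_one]
  constructor <;> intro <;> linarith

lemma two_mul_re_mul_re_le (z w : ℂ) : 2 * (z.re * w.re) ≤ ‖z * w‖ + (z * w).re := by
  have hconj : (z * conj w).re ≤ ‖z * w‖ := by
    simpa only [norm_mul, RCLike.norm_conj] using re_le_norm (z * conj w)
  have hsum : (z * w).re + (z * conj w).re = 2 * (z.re * w.re) := by
    simp only [mul_re, conj_re, conj_im]
    ring
  linarith

lemma norm_add_one_le_one_iff_of_re_nonpos {w : ℂ} (hw : w.re ≤ 0) :
    ‖w + 1‖ ≤ 1 ↔ ‖w ^ 2‖ ^ 2 ≤ 2 * (‖w ^ 2‖ + (w ^ 2).re) := by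
  have hsquare : (-2 * w.re) ^ 2 = 2 * (‖w‖ ^ 2 + (w ^ 2).re) := by
    rw [Complex.sq_norm, normSq_apply, sq w, mul_re]
    ring
  rw [norm_add_one_le_one_iff, norm_pow, ← sq_le_sq₀ (by positivity) (by linarith), hsquare]

lemma exists_sq_eq_of_re_nonpos (u : ℂ) : ∃ w : ℂ, w.re ≤ 0 ∧ w ^ 2 = u := by
  obtain ⟨s, hs⟩ := IsAlgClosed.exists_pow_nat_eq u two_pos
  rcases le_total s.re 0 with hneg | hpos
  · exact ⟨s, hneg, hs⟩
  · exact ⟨-s, by simpa using hpos, by rw [neg_sq, hs]⟩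

lemma exists_sq_eq_mul_of_norm_add_one_le_one {z₁ z₂ : ℂ} (h₁ : ‖z₁ + 1‖ ≤ 1)
    (h₂ : ‖z₂ + 1‖ ≤ 1) : ∃ w : ℂ, ‖w + 1‖ ≤ 1 ∧ w ^ 2 = z₁ * z₂ := by
  obtain ⟨w, hw, hsq⟩ := exists_sq_eq_of_re_nonpos (z₁ * z₂)
  refine ⟨w, ?_, hsq⟩
  rw [norm_add_one_le_one_iff_of_re_nonpos hw, hsq]
  rw [norm_add_one_le_one_iff] at h₁ h₂
  calc ‖z₁ * z₂‖ ^ 2 = ‖z₁‖ ^ 2 * ‖z₂‖ ^ 2 := by rw [norm_mul, mul_pow]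
    _ ≤ (-2 * z₁.re) * (-2 * z₂.re) :=
      mul_le_mul h₁ h₂ (by positivity) ((sq_nonneg _).trans h₁)
    _ = 2 * (2 * (z₁.re * z₂.re)) := by ring
    _ ≤ 2 * (‖z₁ * z₂‖ + (z₁ * z₂).re) := by linarith [two_mul_re_mul_re_le z₁ z₂]

/-- The set of products `z₁ z₂` with `|z₁ + 1| ≤ 1` and `|z₂ + 1| ≤ 1` equals the set of
squares `w²` with `|w + 1| ≤ 1`; equivalently,
`ℂ \ {-α₁α₂ : |α₁+1| ≤ 1, |α₂+1| ≤ 1} = ℂ \ {-(1-α)² : |α| ≤ 1}`. -/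
theorem products_eq_squares_cardioid :
    ({x : ℂ | ∃ z₁ z₂ : ℂ, ‖z₁ + 1‖ ≤ 1 ∧ ‖z₂ + 1‖ ≤ 1 ∧
        x = z₁ * z₂} =
      {x : ℂ | ∃ w : ℂ, ‖w + 1‖ ≤ 1 ∧ x = w ^ 2}) ∧
    ({x : ℂ | ∃ α₁ α₂ : ℂ, ‖α₁ + 1‖ ≤ 1 ∧ ‖α₂ + 1‖ ≤ 1 ∧
        x = -(α₁ * α₂)}ᶜ =
      {x : ℂ | ∃ α : ℂ, ‖α‖ ≤ 1 ∧ x = -(1 - α) ^ 2}ᶜ) := by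
  refine ⟨Set.ext fun x => ⟨?_, ?_⟩, congrArg compl (Set.ext fun x => ⟨?_, ?_⟩)⟩
  · rintro ⟨z₁, z₂, h₁, h₂, rfl⟩
    obtain ⟨w, hw, hsq⟩ := exists_sq_eq_mul_of_norm_add_one_le_one h₁ h₂
    exact ⟨w, hw, hsq.symm⟩
  · rintro ⟨w, hw, rfl⟩
    exact ⟨w, w, hw, hw, sq w⟩
  · rintro ⟨α₁, α₂, h₁, h₂, rfl⟩
    obtain ⟨w, hw, hsq⟩ := exists_sq_eq_mul_of_norm_add_one_le_one h₁ h₂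
    exact ⟨w + 1, hw, by rw [← hsq]; ring⟩
  · rintro ⟨α, hα, rfl⟩
    have hα' : ‖α - 1 + 1‖ ≤ 1 := by rwa [sub_add_cancel]
    exact ⟨α - 1, α - 1, hα', hα', by ring⟩
end

section
/- Let G = (V, E) be a finite simple graph, let b > 0 be real, and let z be a complex number. Then Z_{L(G)}(z², b) = b^{M} Σ_{F ⊆ E} Π_{v ∈ V} b^{−C(d_G(v) − d_F(v), 2) − C(d_F(v), 2)} z^{d_F(v)}, where M = |E(L(G))| = Σ_{v ∈ V} C(d_G(v), 2) is the number of edges of the line graph L(G). -/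
open Finset

/-- The number of edges of the simple graph `H` with exactly one endpoint in `U`. -/
noncomputable def cutCard {V : Type*} (H : SimpleGraph V) (U : Finset V) : ℕ :=
  Set.ncard {e : Sym2 V | e ∈ H.edgeSet ∧ ∃ u v : V, e = s(u, v) ∧ u ∈ U ∧ v ∉ U}

/-- The partition function of the Ising model of a finite simple graph `H`:
`Z_H(z, b) = Σ_{U ⊆ V} z^{|U|} b^{|δ(U)|}`. -/
noncomputable def isingZ {V : Type*} [Fintype V] (H : SimpleGraph V) (z b : ℂ) : ℂ :=
  ∑ U : Finset V, z ^ U.card * b ^ cutCard H U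

/-- The partition function of the Ising model of the line graph of `G`. -/
noncomputable def isingLineGraph {V : Type*} [Fintype V] (G : SimpleGraph V) (z b : ℂ) : ℂ :=
  letI : Fintype G.edgeSet := Fintype.ofFinite _
  isingZ G.lineGraph z b

/-- The number of edges in the edge subset `F` containing the vertex `v`. -/
def subDeg {V : Type*} [DecidableEq V] (F : Finset (Sym2 V)) (v : V) : ℕ :=
  (F.filter (fun e => v ∈ e)).card

private lemma choose_two_add (k m : ℕ) : (k + m).choose 2 = k.choose 2 + m.choose 2 + k * m := by
  induction m with
  | zero => simp
  | succ m ih =>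
    have h1 : k + (m + 1) = (k + m) + 1 := by ring
    rw [h1, Nat.choose_succ_succ, Nat.choose_one_right, ih, Nat.choose_succ_succ m 1,
      Nat.choose_one_right]
    ring

private lemma pow_aux {b : ℂ} (hb : b ≠ 0) {k d : ℕ} (hk : k ≤ d) :
    b ^ d.choose 2 * b ^ (-(((d - k).choose 2 + k.choose 2 : ℕ) : ℤ)) = b ^ (k * (d - k)) := by
  have h : d.choose 2 = k.choose 2 + (d - k).choose 2 + k * (d - k) := by
    conv_lhs => rw [← Nat.add_sub_cancel' hk]
    exact choose_two_add k (d - k)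
  rw [← zpow_natCast b (d.choose 2), ← zpow_natCast b (k * (d - k)), ← zpow_add₀ hb]
  congr 1
  push_cast [h]
  ring

section Aux

variable {V : Type} [Fintype V] [DecidableEq V] (G : SimpleGraph V) [DecidableRel G.Adj]
  [Fintype G.edgeSet]

private lemma card_filter_mem_sym2 {a b : V} (h : a ≠ b) :
    (univ.filter (fun v => v ∈ s(a, b))).card = 2 := by
  have he : (univ.filter (fun v => v ∈ s(a, b))) = {a, b} := by
    ext x; simp [Sym2.mem_iff]
  rw [he, card_pair h]

private lemma sum_subDeg {F : Finset (Sym2 V)} (hF : F ⊆ G.edgeFinset) :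
    ∑ v : V, subDeg F v = 2 * F.card := by
  unfold subDeg
  simp_rw [Finset.card_filter]
  rw [Finset.sum_comm]
  rw [Finset.sum_congr rfl (fun e he => ?_), Finset.sum_const, smul_eq_mul, mul_comm]
  rw [← Finset.card_filter]
  induction e using Sym2.ind with
  | _ a c =>
    have hd : a ≠ c := by
      have := G.not_isDiag_of_mem_edgeSet (SimpleGraph.mem_edgeFinset.mp (hF he))
      simpa using this
    exact card_filter_mem_sym2 hd

private lemma subDeg_le {F : Finset (Sym2 V)} (hF : F ⊆ G.edgeFinset) (v : V) :
    subDeg F v ≤ G.degree v := by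
  rw [← SimpleGraph.card_incidenceFinset_eq_degree, SimpleGraph.incidenceFinset_eq_filter]
  exact Finset.card_le_card (Finset.filter_subset_filter _ hF)

private lemma cut_eq (U : Finset G.edgeSet) :
    cutCard G.lineGraph U =
      ∑ v : V, subDeg (U.map (Function.Embedding.subtype _)) v *
        (G.degree v - subDeg (U.map (Function.Embedding.subtype _)) v) := by
  classical
  set F : Finset (Sym2 V) := U.map (Function.Embedding.subtype _) with hFdef
  have hmemF : ∀ (e : G.edgeSet), (e : Sym2 V) ∈ F ↔ e ∈ U := by
    intro e
    exact Finset.mem_map' _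
  have hFsub : F ⊆ G.edgeFinset := by
    intro e he
    rw [hFdef, Finset.mem_map] at he
    obtain ⟨a, -, rfl⟩ := he
    simpa using a.2
  set P : Finset (G.edgeSet × G.edgeSet) :=
    Finset.univ.filter (fun p => G.lineGraph.Adj p.1 p.2 ∧ p.1 ∈ U ∧ p.2 ∉ U) with hPdef
  have hmemP : ∀ p : G.edgeSet × G.edgeSet,
      p ∈ P ↔ G.lineGraph.Adj p.1 p.2 ∧ p.1 ∈ U ∧ p.2 ∉ U := by
    intro p; simp [hPdef]
  have hA : cutCard G.lineGraph U = P.card := by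
    rw [cutCard]
    have hinj : Set.InjOn (fun p : G.edgeSet × G.edgeSet => s(p.1, p.2)) ↑P := by
      intro p hp p' hp' hpq
      rw [Finset.mem_coe, hmemP] at hp hp'
      simp only [Sym2.eq_iff] at hpq
      rcases hpq with ⟨h1, h2⟩ | ⟨h1, h2⟩
      · exact Prod.ext h1 h2
      · exact absurd (h1 ▸ hp.2.1) hp'.2.2
    have himg : {e : Sym2 G.edgeSet | e ∈ G.lineGraph.edgeSet ∧
        ∃ u v, e = s(u, v) ∧ u ∈ U ∧ v ∉ U}
        = (fun p : G.edgeSet × G.edgeSet => s(p.1, p.2)) '' ↑P := by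
      ext q
      induction q using Sym2.ind with
      | _ e f =>
        simp only [Set.mem_setOf_eq, Set.mem_image, Finset.mem_coe]
        constructor
        · rintro ⟨hadj, u, v, hq, hu, hv⟩
          rw [SimpleGraph.mem_edgeSet] at hadj
          rw [Sym2.eq_iff] at hq
          rcases hq with ⟨h1, h2⟩ | ⟨h1, h2⟩
          · exact ⟨(e, f), (hmemP _).mpr ⟨hadj, h1 ▸ hu, h2 ▸ hv⟩, rfl⟩
          · exact ⟨(f, e), (hmemP _).mpr ⟨hadj.symm, h2 ▸ hu, h1 ▸ hv⟩, Sym2.eq_swap⟩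
        · rintro ⟨⟨a, c⟩, hp, heq⟩
          rw [hmemP] at hp
          exact ⟨heq ▸ (SimpleGraph.mem_edgeSet G.lineGraph).mpr hp.1, a, c, heq.symm, hp.2.1, hp.2.2⟩
    rw [himg, Set.ncard_image_of_injOn hinj, Set.ncard_coe_finset]
  have hB : P = Finset.univ.biUnion
      (fun v : V => P.filter fun p => v ∈ (p.1 : Sym2 V) ∧ v ∈ (p.2 : Sym2 V)) := by
    ext p
    simp only [Finset.mem_biUnion, Finset.mem_univ, true_and, Finset.mem_filter]
    constructor
    · intro hp
      have hadj := ((hmemP p).mp hp).1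
      obtain ⟨-, v, hv1, hv2⟩ := SimpleGraph.lineGraph_adj_iff_exists.mp hadj
      exact ⟨v, hp, hv1, hv2⟩
    · rintro ⟨v, hp, -⟩; exact hp
  have hdisj : ∀ v ∈ (Finset.univ : Finset V), ∀ w ∈ (Finset.univ : Finset V), v ≠ w →
      Disjoint (P.filter fun p => v ∈ (p.1 : Sym2 V) ∧ v ∈ (p.2 : Sym2 V))
        (P.filter fun p => w ∈ (p.1 : Sym2 V) ∧ w ∈ (p.2 : Sym2 V)) := by
    intro v _ w _ hvw
    rw [Finset.disjoint_left]
    rintro p hp hp'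
    rw [Finset.mem_filter] at hp hp'
    obtain ⟨hpP, hv1, hv2⟩ := hp
    obtain ⟨-, hw1, hw2⟩ := hp'
    have h1 : (p.1 : Sym2 V) = s(v, w) := (Sym2.mem_and_mem_iff hvw).mp ⟨hv1, hw1⟩
    have h2 : (p.2 : Sym2 V) = s(v, w) := (Sym2.mem_and_mem_iff hvw).mp ⟨hv2, hw2⟩
    have : p.1 = p.2 := Subtype.ext (h1.trans h2.symm)
    exact ((hmemP p).mp hpP).1.ne this
  have hC : ∀ v : V, (P.filter fun p => v ∈ (p.1 : Sym2 V) ∧ v ∈ (p.2 : Sym2 V)).card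
      = subDeg F v * (G.degree v - subDeg F v) := by
    intro v
    set A : Finset (Sym2 V) := F.filter (fun e => v ∈ e) with hAdef
    set B : Finset (Sym2 V) := (G.edgeFinset \ F).filter (fun e => v ∈ e) with hBdef
    have hBcard : B.card = G.degree v - subDeg F v := by
      have hBeq : B = G.edgeFinset.filter (fun e => v ∈ e) \ A := by
        ext e
        simp only [hBdef, hAdef, Finset.mem_sdiff, Finset.mem_filter]
        tauto
      rw [hBeq, Finset.card_sdiff_of_subset]
      · rw [← SimpleGraph.incidenceFinset_eq_filter, SimpleGraph.card_incidenceFinset_eq_degree]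
        rfl
      · exact Finset.filter_subset_filter _ hFsub
    have hcard : (P.filter fun p => v ∈ (p.1 : Sym2 V) ∧ v ∈ (p.2 : Sym2 V)).card
        = (A ×ˢ B).card := by
      apply Finset.card_bij (fun p _ => ((p.1 : Sym2 V), (p.2 : Sym2 V)))
      · rintro p hp
        rw [Finset.mem_filter] at hp
        obtain ⟨hpP, hv1, hv2⟩ := hp
        obtain ⟨hadj, hu, hnu⟩ := (hmemP p).mp hpP
        rw [Finset.mem_product]
        constructor
        · rw [hAdef, Finset.mem_filter]
          exact ⟨(hmemF p.1).mpr hu, hv1⟩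
        · rw [hBdef, Finset.mem_filter, Finset.mem_sdiff]
          refine ⟨⟨?_, fun hc => hnu ((hmemF p.2).mp hc)⟩, hv2⟩
          simpa using p.2.2
      · rintro p hp p' hp' heq
        have h1 : (p.1 : Sym2 V) = (p'.1 : Sym2 V) := congrArg Prod.fst heq
        have h2 : (p.2 : Sym2 V) = (p'.2 : Sym2 V) := congrArg Prod.snd heq
        exact Prod.ext (Subtype.ext h1) (Subtype.ext h2)
      · rintro ⟨e, f⟩ hq
        rw [Finset.mem_product] at hq
        obtain ⟨hqA, hqB⟩ := hq
        rw [hAdef, Finset.mem_filter] at hqA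
        rw [hBdef, Finset.mem_filter, Finset.mem_sdiff] at hqB
        obtain ⟨heF, hve⟩ := hqA
        obtain ⟨⟨hfE, hfF⟩, hvf⟩ := hqB
        have heE : e ∈ G.edgeSet := by
          have := hFsub heF
          simpa using this
        have hfE' : f ∈ G.edgeSet := by simpa using hfE
        refine ⟨(⟨e, heE⟩, ⟨f, hfE'⟩), ?_, rfl⟩
        rw [Finset.mem_filter]
        refine ⟨(hmemP _).mpr
          ⟨SimpleGraph.lineGraph_adj_iff_exists.mpr ⟨?_, v, hve, hvf⟩, ?_, ?_⟩, hve, hvf⟩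
        · intro hc
          have hef : e = f := congrArg Subtype.val hc
          exact hfF (hef ▸ heF)
        · exact (hmemF _).mp heF
        · exact fun hc => hfF ((hmemF _).mpr hc)
    rw [hcard, Finset.card_product, hBcard]
    rfl
  rw [hA, hB, Finset.card_biUnion hdisj]
  exact Finset.sum_congr rfl (fun v _ => hC v)

private lemma sum_map_powerset {M : Type*} [AddCommMonoid M] (g : Finset (Sym2 V) → M) :
    ∑ U : Finset G.edgeSet, g (U.map (Function.Embedding.subtype _)) =
      ∑ F ∈ G.edgeFinset.powerset, g F := by
  classical
  apply Finset.sum_bij' (fun (U : Finset G.edgeSet) (_ : U ∈ Finset.univ) =>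
      U.map (Function.Embedding.subtype _))
    (fun F _ => F.subtype (· ∈ G.edgeSet))
  · intro U _
    rw [Finset.mem_powerset]
    intro e he
    rw [Finset.mem_map] at he
    obtain ⟨a, -, rfl⟩ := he
    simpa using a.2
  · intro F _
    exact Finset.mem_univ _
  · intro U _
    ext a
    simp [Finset.mem_subtype]
  · intro F hF
    rw [Finset.mem_powerset] at hF
    rw [Finset.subtype_map, Finset.filter_true_of_mem]
    intro e he
    have := hF he
    simpa using this
  · intro U _
    rfl

end Aux

/-- Expression of the Ising partition function of the line graph in terms of the
underlying graph:
`Z_{L(G)}(z², b) = b^M Σ_{F ⊆ E} Π_v b^{-C(d_G(v)-d_F(v),2)-C(d_F(v),2)} z^{d_F(v)}`,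
where `M = |E(L(G))| = Σ_v C(d_G(v),2)`. -/
theorem isingLineGraph_eq_subgraph_expansion
    {V : Type} [Fintype V] [DecidableEq V] (G : SimpleGraph V) [DecidableRel G.Adj]
    (b : ℝ) (hb : 0 < b) (z : ℂ) :
    isingLineGraph G (z ^ 2) (b : ℂ) =
      (b : ℂ) ^ (∑ v : V, (G.degree v).choose 2) *
        ∑ F ∈ G.edgeFinset.powerset, ∏ v : V,
          (b : ℂ) ^ (-(((G.degree v - subDeg F v).choose 2 + (subDeg F v).choose 2 : ℕ) : ℤ)) *
            z ^ subDeg F v := by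
  classical
  have hb0 : (b : ℂ) ≠ 0 := by
    simp only [ne_eq, Complex.ofReal_eq_zero]
    exact ne_of_gt hb
  have step0 : isingLineGraph G (z ^ 2) (b : ℂ)
      = @isingZ _ (inferInstance) G.lineGraph (z ^ 2) (b : ℂ) := by
    show @isingZ _ (Fintype.ofFinite _) G.lineGraph (z ^ 2) (b : ℂ) = _
    exact congrArg (fun i => @isingZ _ i G.lineGraph (z ^ 2) (b : ℂ)) (Subsingleton.elim _ _)
  rw [step0, isingZ]
  have step1 : ∑ U : Finset G.edgeSet,
      (z ^ 2) ^ U.card * (b : ℂ) ^ cutCard G.lineGraph U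
      = ∑ U : Finset G.edgeSet,
        (z ^ 2) ^ (U.map (Function.Embedding.subtype _)).card *
          (b : ℂ) ^ (∑ v : V, subDeg (U.map (Function.Embedding.subtype _)) v *
            (G.degree v - subDeg (U.map (Function.Embedding.subtype _)) v)) := by
    refine Finset.sum_congr rfl (fun U _ => ?_)
    rw [cut_eq, Finset.card_map]
  rw [step1,
    sum_map_powerset G (fun F => (z ^ 2) ^ F.card *
      (b : ℂ) ^ (∑ v : V, subDeg F v * (G.degree v - subDeg F v))),
    Finset.mul_sum]
  refine Finset.sum_congr rfl (fun F hF => ?_)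
  rw [Finset.mem_powerset] at hF
  have hz : (z ^ 2) ^ F.card = ∏ v : V, z ^ subDeg F v := by
    rw [Finset.prod_pow_eq_pow_sum, sum_subDeg G hF, pow_mul]
  have hbb : (b : ℂ) ^ (∑ v : V, subDeg F v * (G.degree v - subDeg F v))
      = ∏ v : V, (b : ℂ) ^ (subDeg F v * (G.degree v - subDeg F v)) :=
    (Finset.prod_pow_eq_pow_sum _ _ _).symm
  have hM : (b : ℂ) ^ (∑ v : V, (G.degree v).choose 2)
      = ∏ v : V, (b : ℂ) ^ ((G.degree v).choose 2) :=
    (Finset.prod_pow_eq_pow_sum _ _ _).symm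
  rw [hz, hbb, hM, ← Finset.prod_mul_distrib, ← Finset.prod_mul_distrib]
  refine Finset.prod_congr rfl (fun v _ => ?_)
  rw [← pow_aux hb0 (subDeg_le G hF v)]
  ring
end
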